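/- arXiv:2209.04756 — 10 statements merged into one kernel-verified Lean document; each statement's English description precedes it below -/
import Mathlib

section
/- For all positive integers n, ℓ and every non-negative integer m, s*(n, ℓ, m) = s̃(n, ℓ, m). -/
/-- Families `𝓕 1, …, 𝓕 ℓ` of subsets of `[n]` satisfy the `m`-overlapping property:
for distinct `k₁ k₂` and sets `F₁ ∈ 𝓕 k₁`, `F₂ ∈ 𝓕 k₂` we have `|F₁ ∩ F₂| ≤ m k₁ k₂`.
The vector `m` indexed by unordered pairs is encoded as a symmetric function. -/
def MOverlap (n ℓ : ℕ) (m : Fin ℓ → Fin ℓ → ℕ) (𝓕 : Fin ℓ → Finset (Finset (Fin n))) : Prop :=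
  ∀ k₁ k₂ : Fin ℓ, k₁ ≠ k₂ → ∀ F₁ ∈ 𝓕 k₁, ∀ F₂ ∈ 𝓕 k₂, (F₁ ∩ F₂).card ≤ m k₁ k₂

/-- `s*(n, ℓ, m)`: the maximum of `|𝓕 1|⋯|𝓕 ℓ|` over collections of families of subsets
of `[n]` with the `m`-overlapping property. -/
noncomputable def sStar (n ℓ : ℕ) (m : Fin ℓ → Fin ℓ → ℕ) : ℕ :=
  open Classical in
  Finset.univ.sup (fun 𝓕 : Fin ℓ → Finset (Finset (Fin n)) =>
    if MOverlap n ℓ m 𝓕 then ∏ k, (𝓕 k).card else 0)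

/-- The unordered pairs of distinct elements of `K`, represented as ordered pairs `(i, j)`
with `i < j`. -/
def pairsOf {ℓ : ℕ} (K : Finset (Fin ℓ)) : Finset (Fin ℓ × Fin ℓ) :=
  K.offDiag.filter (fun p => p.1 < p.2)

/-- `s̃(n, ℓ, m)`: the maximum over colorings `χ` of the `(m+1)`-element subsets of `[n]`
into `ℓ` colors of the product `k_1 ⋯ k_ℓ`, where `k_i` is the number of monochromatic
cliques of color `i`, i.e. sets `K ⊆ [n]` all of whose `(m+1)`-element subsets have color `i`
(sets of size at most `m` are monochromatic cliques of every color). -/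
noncomputable def sTilde (n ℓ m : ℕ) : ℕ :=
  open Classical in
  Finset.univ.sup (fun χ : Finset (Fin n) → Fin ℓ =>
    ∏ i : Fin ℓ,
      (Finset.univ.filter (fun K : Finset (Fin n) =>
        ∀ e : Finset (Fin n), e ⊆ K → e.card = m + 1 → χ e = i)).card)

/-- Proposition: for all positive integers `n, ℓ` and every non-negative integer `m`,
`s*(n, ℓ, m) = s̃(n, ℓ, m)`. -/
theorem statement2 (n ℓ m : ℕ) (hn : 1 ≤ n) (hℓ : 1 ≤ ℓ) :
    sStar n ℓ (fun _ _ => m) = sTilde n ℓ m := by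
  classical
  have hne : Nonempty (Fin ℓ) := ⟨⟨0, hℓ⟩⟩
  apply le_antisymm
  · -- sStar ≤ sTilde
    apply Finset.sup_le
    intro 𝓕 _
    split_ifs with hov
    · -- define coloring
      set χ : Finset (Fin n) → Fin ℓ := fun e =>
        if h : ∃ i : Fin ℓ, ∃ F ∈ 𝓕 i, e ⊆ F then h.choose else Classical.arbitrary _
        with hχ
      have key : ∀ i : Fin ℓ, ∀ F ∈ 𝓕 i, ∀ e : Finset (Fin n), e ⊆ F → e.card = m + 1 →
          χ e = i := by
        intro i F hF e he hcard
        have h : ∃ j : Fin ℓ, ∃ F ∈ 𝓕 j, e ⊆ F := ⟨i, F, hF, he⟩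
        rw [hχ]
        simp only [dif_pos h]
        obtain ⟨F', hF', he'⟩ := h.choose_spec
        by_contra hij
        have hle : (F' ∩ F).card ≤ m := hov h.choose i hij F' hF' F hF
        have hsub : e ⊆ F' ∩ F := Finset.subset_inter he' he
        have hle2 := Finset.card_le_card hsub
        omega
      have hsub : ∀ i : Fin ℓ, 𝓕 i ⊆ Finset.univ.filter (fun K : Finset (Fin n) =>
          ∀ e : Finset (Fin n), e ⊆ K → e.card = m + 1 → χ e = i) := by
        intro i F hF
        simp only [Finset.mem_filter, Finset.mem_univ, true_and]
        exact fun e he hc => key i F hF e he hc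
      calc ∏ k, (𝓕 k).card
          ≤ ∏ i : Fin ℓ, (Finset.univ.filter (fun K : Finset (Fin n) =>
              ∀ e : Finset (Fin n), e ⊆ K → e.card = m + 1 → χ e = i)).card := by
            exact Finset.prod_le_prod (fun _ _ => Nat.zero_le _)
              (fun i _ => Finset.card_le_card (hsub i))
        _ ≤ sTilde n ℓ m := by
            rw [sTilde]
            exact Finset.le_sup (f := fun χ : Finset (Fin n) → Fin ℓ =>
              ∏ i : Fin ℓ, (Finset.univ.filter (fun K : Finset (Fin n) =>
                ∀ e : Finset (Fin n), e ⊆ K → e.card = m + 1 → χ e = i)).card)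
              (Finset.mem_univ χ)
    · exact Nat.zero_le _
  · -- sTilde ≤ sStar
    apply Finset.sup_le
    intro χ _
    set 𝓕 : Fin ℓ → Finset (Finset (Fin n)) := fun i =>
      Finset.univ.filter (fun K : Finset (Fin n) =>
        ∀ e : Finset (Fin n), e ⊆ K → e.card = m + 1 → χ e = i) with h𝓕
    have hov : MOverlap n ℓ (fun _ _ => m) 𝓕 := by
      intro k₁ k₂ hk F₁ hF₁ F₂ hF₂
      by_contra hc
      push_neg at hc
      obtain ⟨e, hesub, hecard⟩ := Finset.exists_subset_card_eq hc
      simp only [h𝓕, Finset.mem_filter, Finset.mem_univ, true_and] at hF₁ hF₂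
      have h1 := hF₁ e (hesub.trans Finset.inter_subset_left) hecard
      have h2 := hF₂ e (hesub.trans Finset.inter_subset_right) hecard
      exact hk (h1 ▸ h2 ▸ rfl)
    calc ∏ i : Fin ℓ, (Finset.univ.filter (fun K : Finset (Fin n) =>
            ∀ e : Finset (Fin n), e ⊆ K → e.card = m + 1 → χ e = i)).card
        = (if MOverlap n ℓ (fun _ _ => m) 𝓕 then ∏ k, (𝓕 k).card else 0) := by
          rw [if_pos hov]
      _ ≤ sStar n ℓ (fun _ _ => m) := by
          rw [sStar]
          exact Finset.le_sup (f := fun 𝓕 : Fin ℓ → Finset (Finset (Fin n)) =>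
            if MOverlap n ℓ (fun _ _ => m) 𝓕 then ∏ k, (𝓕 k).card else 0)
            (Finset.mem_univ 𝓕)
end

section
/- Let n be a positive integer, m a non-negative integer, and let 𝓐, 𝓑 ⊆ 2^{[n]} be families of subsets of [n] such that |A ∩ B| ≤ m for every A ∈ 𝓐 and every B ∈ 𝓑. Then |𝓐| · |𝓑| ≤ 2^n · ∑_{t=0}^{m} binom(n, t). Moreover, this bound is attained: the maximum of |𝓐| · |𝓑| over all such pairs of families equals 2^n · ∑_{t=0}^{m} binom(n, t). -/
/-!
Induction on the ground set. Fix an element `a` and split each family into the sets avoiding `a`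
and the sets containing `a` (with `a` removed). Three of the four cross pairs still satisfy the
hypothesis on the smaller ground set, and the pair of `a`-containing halves satisfies it with the
threshold lowered by one, giving bounds `a₀b₀, a₀b₁, a₁b₀ ≤ F` and `a₁b₁ ≤ G`. Since
`(a₀b₁)(a₁b₀) = (a₀b₀)(a₁b₁) ≤ FG`, the cross terms add up to at most `F + G`, so
`(a₀ + a₁)(b₀ + b₁) ≤ 2F + 2G`, which is the bound on the larger ground set by Pascal's rule.
The bound is attained by all sets against all sets of size at most `m`.
-/

open Finset

theorem Nat.sum_range_choose_succ (n k : ℕ) :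
    ∑ t ∈ range k, (n + 1).choose t =
      ∑ t ∈ range k, n.choose t + ∑ t ∈ range (k - 1), n.choose t := by
  cases k with
  | zero => simp
  | succ k =>
    simp only [sum_range_succ' _ k, Nat.choose_succ_succ', sum_add_distrib, Nat.choose_zero_right,
      Nat.add_sub_cancel]
    ring

theorem Nat.add_le_add_of_mul_le_mul {x y F G : ℕ} (hx : x ≤ F) (hy : y ≤ F)
    (hxy : x * y ≤ F * G) : x + y ≤ F + G := by
  rcases F.eq_zero_or_pos with rfl | hF
  · omega
  · refine Nat.le_of_mul_le_mul_left ?_ hF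
    nlinarith [Nat.mul_le_mul (Nat.sub_le_sub_left hx F) (Nat.sub_le_sub_left hy F)]

theorem Nat.add_mul_add_le {a₀ a₁ b₀ b₁ F G : ℕ} (h₀₀ : a₀ * b₀ ≤ F) (h₀₁ : a₀ * b₁ ≤ F)
    (h₁₀ : a₁ * b₀ ≤ F) (h₁₁ : a₁ * b₁ ≤ G) : (a₁ + a₀) * (b₁ + b₀) ≤ 2 * F + 2 * G := by
  have hcross : a₀ * b₁ + a₁ * b₀ ≤ F + G :=
    Nat.add_le_add_of_mul_le_mul h₀₁ h₁₀ <|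
      calc a₀ * b₁ * (a₁ * b₀) = a₀ * b₀ * (a₁ * b₁) := by ring
        _ ≤ F * G := Nat.mul_le_mul h₀₀ h₁₁
  nlinarith

namespace Finset

theorem card_powerset_filter_card_le {α : Type*} (s : Finset α) (m : ℕ) :
    #{B ∈ s.powerset | #B ≤ m} = ∑ t ∈ range (m + 1), (#s).choose t := by
  rw [card_eq_sum_card_fiberwise (f := card) (t := range (m + 1))
    fun B hB => mem_range.2 (Nat.lt_succ_of_le (mem_filter.1 hB).2)]
  refine sum_congr rfl fun t ht => ?_
  rw [filter_filter, ← card_powersetCard, powersetCard_eq_filter]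
  congr 1
  ext B
  simp only [mem_filter]
  constructor
  · rintro ⟨hB, -, rfl⟩; exact ⟨hB, rfl⟩
  · rintro ⟨hB, rfl⟩; exact ⟨hB, Nat.lt_succ_iff.1 (mem_range.1 ht), rfl⟩

variable {α : Type*} [DecidableEq α] {𝒜 ℬ 𝒜' ℬ' : Finset (Finset α)} {s : Finset α} {a : α}
  {k : ℕ}

theorem exists_superset_of_mem_nonMemberSubfamily (hs : s ∈ 𝒜.nonMemberSubfamily a) :
    ∃ t ∈ 𝒜, s ⊆ t :=
  ⟨s, (mem_nonMemberSubfamily.1 hs).1, subset_rfl⟩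

theorem exists_superset_of_mem_memberSubfamily (hs : s ∈ 𝒜.memberSubfamily a) :
    ∃ t ∈ 𝒜, s ⊆ t :=
  ⟨insert a s, (mem_memberSubfamily.1 hs).1, subset_insert a s⟩

theorem forall_card_inter_lt_of_exists_superset (h𝒜 : ∀ A' ∈ 𝒜', ∃ A ∈ 𝒜, A' ⊆ A)
    (hℬ : ∀ B' ∈ ℬ', ∃ B ∈ ℬ, B' ⊆ B) (h : ∀ A ∈ 𝒜, ∀ B ∈ ℬ, #(A ∩ B) < k) :
    ∀ A' ∈ 𝒜', ∀ B' ∈ ℬ', #(A' ∩ B') < k := by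
  intro A' hA' B' hB'
  obtain ⟨A, hA, hAA'⟩ := h𝒜 A' hA'
  obtain ⟨B, hB, hBB'⟩ := hℬ B' hB'
  exact (card_le_card (inter_subset_inter hAA' hBB')).trans_lt (h A hA B hB)

theorem forall_card_inter_memberSubfamily_lt (h : ∀ A ∈ 𝒜, ∀ B ∈ ℬ, #(A ∩ B) < k) :
    ∀ A ∈ 𝒜.memberSubfamily a, ∀ B ∈ ℬ.memberSubfamily a, #(A ∩ B) < k - 1 := by
  intro A hA B hB
  rw [mem_memberSubfamily] at hA hB
  have := h _ hA.1 _ hB.1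
  rw [← insert_inter_distrib, card_insert_of_notMem (by simp [hA.2])] at this
  omega

theorem subset_of_mem_nonMemberSubfamily (h𝒜 : ∀ A ∈ 𝒜, A ⊆ insert a s) :
    ∀ A ∈ 𝒜.nonMemberSubfamily a, A ⊆ s := fun _ hA =>
  (subset_insert_iff_of_notMem (mem_nonMemberSubfamily.1 hA).2).1
    (h𝒜 _ (mem_nonMemberSubfamily.1 hA).1)

theorem subset_of_mem_memberSubfamily (h𝒜 : ∀ A ∈ 𝒜, A ⊆ insert a s) :
    ∀ A ∈ 𝒜.memberSubfamily a, A ⊆ s := fun _ hA =>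
  (insert_subset_insert_iff (mem_memberSubfamily.1 hA).2).1 (h𝒜 _ (mem_memberSubfamily.1 hA).1)

/-- Stated with a strict threshold `k` so that lowering it to `k - 1` is harmless at `k = 0`. -/
theorem card_mul_card_le_of_forall_card_inter_lt (h𝒜 : ∀ A ∈ 𝒜, A ⊆ s) (hℬ : ∀ B ∈ ℬ, B ⊆ s)
    (h : ∀ A ∈ 𝒜, ∀ B ∈ ℬ, #(A ∩ B) < k) :
    #𝒜 * #ℬ ≤ 2 ^ #s * ∑ t ∈ range k, (#s).choose t := by
  induction s using Finset.induction_on generalizing 𝒜 ℬ k with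
  | empty =>
    rcases 𝒜.eq_empty_or_nonempty with rfl | ⟨A, hA⟩
    · simp
    rcases ℬ.eq_empty_or_nonempty with rfl | ⟨B, hB⟩
    · simp
    have h𝒜_le : #𝒜 ≤ 1 := card_le_one.2 fun A hA A' hA' =>
      (subset_empty.1 (h𝒜 A hA)).trans (subset_empty.1 (h𝒜 A' hA')).symm
    have hℬ_le : #ℬ ≤ 1 := card_le_one.2 fun B hB B' hB' =>
      (subset_empty.1 (hℬ B hB)).trans (subset_empty.1 (hℬ B' hB')).symm
    have hk : 0 ∈ range k := mem_range.2 ((Nat.zero_le _).trans_lt (h A hA B hB))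
    calc #𝒜 * #ℬ ≤ 1 := Nat.mul_le_mul h𝒜_le hℬ_le
      _ = (0 : ℕ).choose 0 := rfl
      _ ≤ ∑ t ∈ range k, (0 : ℕ).choose t := single_le_sum (fun _ _ => Nat.zero_le _) hk
      _ = _ := by simp
  | @insert a s ha ih =>
    have h𝒜₀ := subset_of_mem_nonMemberSubfamily h𝒜
    have h𝒜₁ := subset_of_mem_memberSubfamily h𝒜
    have hℬ₀ := subset_of_mem_nonMemberSubfamily hℬ
    have hℬ₁ := subset_of_mem_memberSubfamily hℬ
    have h₀₀ := ih h𝒜₀ hℬ₀ <| forall_card_inter_lt_of_exists_superset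
      (fun _ => exists_superset_of_mem_nonMemberSubfamily)
      (fun _ => exists_superset_of_mem_nonMemberSubfamily) h
    have h₀₁ := ih h𝒜₀ hℬ₁ <| forall_card_inter_lt_of_exists_superset
      (fun _ => exists_superset_of_mem_nonMemberSubfamily)
      (fun _ => exists_superset_of_mem_memberSubfamily) h
    have h₁₀ := ih h𝒜₁ hℬ₀ <| forall_card_inter_lt_of_exists_superset
      (fun _ => exists_superset_of_mem_memberSubfamily)
      (fun _ => exists_superset_of_mem_nonMemberSubfamily) h
    have h₁₁ := ih h𝒜₁ hℬ₁ <| forall_card_inter_memberSubfamily_lt h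
    rw [← card_memberSubfamily_add_card_nonMemberSubfamily a 𝒜,
      ← card_memberSubfamily_add_card_nonMemberSubfamily a ℬ, card_insert_of_notMem ha,
      Nat.sum_range_choose_succ, pow_succ]
    calc _ ≤ 2 * (2 ^ #s * ∑ t ∈ range k, (#s).choose t) +
          2 * (2 ^ #s * ∑ t ∈ range (k - 1), (#s).choose t) := Nat.add_mul_add_le h₀₀ h₀₁ h₁₀ h₁₁
      _ = _ := by ring

end Finset

theorem statement3_general (n : ℕ) (m : ℕ) :
    (∀ 𝓐 𝓑 : Finset (Finset (Fin n)),
      (∀ A ∈ 𝓐, ∀ B ∈ 𝓑, (A ∩ B).card ≤ m) →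
      𝓐.card * 𝓑.card ≤ 2 ^ n * ∑ t ∈ Finset.range (m + 1), n.choose t) ∧
    (∃ 𝓐 𝓑 : Finset (Finset (Fin n)),
      (∀ A ∈ 𝓐, ∀ B ∈ 𝓑, (A ∩ B).card ≤ m) ∧
      𝓐.card * 𝓑.card = 2 ^ n * ∑ t ∈ Finset.range (m + 1), n.choose t) := by
  refine ⟨fun 𝓐 𝓑 h => ?_, univ, {B ∈ (univ : Finset (Fin n)).powerset | #B ≤ m},
    fun A _ B hB => ?_, ?_⟩
  · simpa using card_mul_card_le_of_forall_card_inter_lt (s := univ) (k := m + 1)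
      (fun A _ => subset_univ A) (fun B _ => subset_univ B)
      fun A hA B hB => Nat.lt_succ_of_le (h A hA B hB)
  · exact (card_le_card inter_subset_right).trans (mem_filter.1 hB).2
  · rw [card_powerset_filter_card_le, card_univ, Fintype.card_finset, card_univ, Fintype.card_fin]

/-- Theorem (Frankl): if `𝓐, 𝓑` are families of subsets of `[n]` such that `|A ∩ B| ≤ m` for
all `A ∈ 𝓐`, `B ∈ 𝓑`, then `|𝓐|·|𝓑| ≤ 2^n · ∑_{t=0}^m C(n,t)`; moreover this bound is
attained by some such pair of families. -/
theorem statement3 (n : ℕ) (hn : 1 ≤ n) (m : ℕ) :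
    (∀ 𝓐 𝓑 : Finset (Finset (Fin n)),
      (∀ A ∈ 𝓐, ∀ B ∈ 𝓑, (A ∩ B).card ≤ m) →
      𝓐.card * 𝓑.card ≤ 2 ^ n * ∑ t ∈ Finset.range (m + 1), n.choose t) ∧
    (∃ 𝓐 𝓑 : Finset (Finset (Fin n)),
      (∀ A ∈ 𝓐, ∀ B ∈ 𝓑, (A ∩ B).card ≤ m) ∧
      𝓐.card * 𝓑.card = 2 ^ n * ∑ t ∈ Finset.range (m + 1), n.choose t) :=
  statement3_general n m
end

section
/- Let n, ℓ be positive integers and let 𝓐_1, …, 𝓐_ℓ ⊆ 2^{[n]} be arbitrary families of subsets of [n]. Then ∏_{k=1}^{ℓ} |𝓐_k| ≤ ∏_{k=1}^{ℓ} | ⋁_{S ∈ binom([ℓ], k)} ( ⋀_{s ∈ S} 𝓐_s ) |, where for each k the inner family is the join, over all k-element subsets S of [ℓ], of the meets ⋀_{s ∈ S} 𝓐_s. -/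
open Finset

namespace RS

noncomputable def pfun (z : ℝ) : ℝ := Real.exp z / (1 + Real.exp z)

noncomputable def gfun (z : ℝ) : ℝ := Real.log (1 + Real.exp z)

lemma one_add_exp_pos (z : ℝ) : 0 < 1 + Real.exp z := by positivity

lemma pfun_nonneg (z : ℝ) : 0 ≤ pfun z := by unfold pfun; positivity

lemma pfun_mono : Monotone pfun := by
  intro z w h
  unfold pfun
  rw [div_le_div_iff₀ (one_add_exp_pos z) (one_add_exp_pos w)]
  have h2 := Real.exp_le_exp.2 h
  nlinarith [Real.exp_pos z, Real.exp_pos w]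

/-- Tangent line inequality: `gfun` is convex with derivative `pfun`. -/
lemma tangent (x y : ℝ) : gfun x + pfun x * (y - x) ≤ gfun y := by
  have hx := one_add_exp_pos x
  have hy := one_add_exp_pos y
  set w := pfun x with hw
  have hw0 : 0 ≤ w := pfun_nonneg x
  have hw1 : (1 - w) + w = 1 := by ring
  have h1w : 0 ≤ 1 - w := by
    have : w < 1 := by
      rw [hw]; unfold pfun
      rw [div_lt_one hx]; linarith
    linarith
  have key : (1:ℝ) ^ (1 - w) * (Real.exp (y - x)) ^ w
      ≤ (1 - w) * 1 + w * Real.exp (y - x) :=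
    Real.geom_mean_le_arith_mean2_weighted h1w hw0 zero_le_one (Real.exp_pos _).le hw1
  have hleft : (1:ℝ) ^ (1 - w) * (Real.exp (y - x)) ^ w = Real.exp (w * (y - x)) := by
    rw [Real.one_rpow, one_mul, Real.rpow_def_of_pos (Real.exp_pos _), Real.log_exp, mul_comm]
  have hright : (1 - w) * 1 + w * Real.exp (y - x) = (1 + Real.exp y) / (1 + Real.exp x) := by
    rw [hw]; unfold pfun
    field_simp
    rw [← Real.exp_add]
    ring_nf
  rw [hleft, hright] at key
  have := Real.log_le_log (Real.exp_pos _) key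
  rw [Real.log_exp, Real.log_div (by positivity) (by positivity)] at this
  unfold gfun
  nlinarith [this]

lemma abel_aux (s d : ℕ → ℝ) (L : ℕ) (hs : ∀ j, j < L → s (j + 1) ≤ s j)
    (hs0 : ∀ j, j ≤ L → 0 ≤ s j)
    (hD : ∀ m, m ≤ L → (∑ i ∈ range m, d i) ≤ 0) :
    (∑ i ∈ range L, s i * d i) ≤ s L * (∑ i ∈ range L, d i) := by
  induction L with
  | zero => simp
  | succ n ih =>
    have h1 : (∑ i ∈ range n, s i * d i) ≤ s n * (∑ i ∈ range n, d i) :=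
      ih (fun j hj => hs j (by omega)) (fun j hj => hs0 j (by omega))
        (fun m hm => hD m (by omega))
    rw [sum_range_succ, sum_range_succ]
    have h2 : s n * (∑ i ∈ range n, d i) + s n * d n = s n * ((∑ i ∈ range n, d i) + d n) := by ring
    have h3 : s n * ((∑ i ∈ range n, d i) + d n) ≤ s (n + 1) * ((∑ i ∈ range n, d i) + d n) := by
      apply mul_le_mul_of_nonpos_right (hs n (by omega))
      have := hD (n + 1) le_rfl
      rw [sum_range_succ] at this
      exact this
    nlinarith [h1, h2, h3]

lemma maj (x y : ℕ → ℝ) (L : ℕ) (hx : ∀ j, j < L → x (j + 1) ≤ x j)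
    (hpre : ∀ m, m ≤ L → (∑ j ∈ range m, x j) ≤ ∑ j ∈ range m, y j) :
    (∑ j ∈ range L, gfun (x j)) ≤ ∑ j ∈ range L, gfun (y j) := by
  have key : ∀ j, gfun (x j) - gfun (y j) ≤ pfun (x j) * (x j - y j) := by
    intro j
    have := tangent (x j) (y j)
    nlinarith [this]
  have h1 : (∑ j ∈ range L, (gfun (x j) - gfun (y j)))
      ≤ ∑ j ∈ range L, pfun (x j) * (x j - y j) :=
    Finset.sum_le_sum (fun j _ => key j)
  have h2 : (∑ j ∈ range L, pfun (x j) * (x j - y j)) ≤ 0 := by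
    have habel := abel_aux (fun j => pfun (x j)) (fun j => x j - y j) L
      (fun j hj => pfun_mono (hx j hj)) (fun j _ => pfun_nonneg _)
      (fun m hm => by
        rw [Finset.sum_sub_distrib]
        linarith [hpre m hm])
    have hend : (fun j => pfun (x j)) L * (∑ i ∈ range L, (x i - y i)) ≤ 0 := by
      apply mul_nonpos_of_nonneg_of_nonpos (pfun_nonneg _)
      rw [Finset.sum_sub_distrib]
      linarith [hpre L le_rfl]
    exact le_trans habel hend
  have h3 := le_trans h1 h2
  rw [Finset.sum_sub_distrib] at h3
  linarith


lemma posCaseSucc (L' : ℕ) (u v a b : Fin (L' + 1) → ℝ)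
    (hu : ∀ i, 0 < u i) (hv : ∀ i, 0 < v i) (ha : ∀ k, 0 < a k) (hb : ∀ k, 0 < b k)
    (hyp : ∀ S : Finset (Fin (L' + 1)),
      (∏ i ∈ S, u i) * (∏ i ∈ Sᶜ, v i) ≤
        ∏ k : Fin (L' + 1), (if (k : ℕ) < S.card then a k else b k)) :
    (∏ i, (u i + v i)) ≤ ∏ k, (a k + b k) := by
  set V := ∏ i, v i with hVdef
  set B := ∏ k, b k with hBdef
  have hV : 0 < V := Finset.prod_pos (fun i _ => hv i)
  have hB : 0 < B := Finset.prod_pos (fun k _ => hb k)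
  set r : Fin (L' + 1) → ℝ := fun i => u i / v i with hrdef
  set c : Fin (L' + 1) → ℝ := fun k => a k / b k with hcdef
  have hr : ∀ i, 0 < r i := fun i => div_pos (hu i) (hv i)
  have hc : ∀ k, 0 < c k := fun k => div_pos (ha k) (hb k)
  have h1r : ∀ i, (0:ℝ) < 1 + r i := fun i => by linarith [hr i]
  have h1c : ∀ k, (0:ℝ) < 1 + c k := fun k => by linarith [hc k]
  have hVB : V ≤ B := by simpa using hyp ∅
  set t := B / V with htdef
  have ht0 : 0 < t := div_pos hB hV
  have ht1 : 1 ≤ t := (one_le_div hV).2 hVB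
  set σ := Tuple.sort (fun i => -(r i)) with hσdef
  have hσ : ∀ j j' : Fin (L' + 1), j ≤ j' → r (σ j') ≤ r (σ j) := by
    intro j j' h
    have := Tuple.monotone_sort (fun i => -(r i)) h
    simpa using this
  set idx : ℕ → Fin (L' + 1) := fun j => ⟨min j L', by omega⟩ with hidxdef
  have hidxval : ∀ j : ℕ, ∀ hj : j < L' + 1, idx j = ⟨j, hj⟩ := by
    intro j hj; apply Fin.ext; show min j L' = j; exact Nat.min_eq_left (by omega)
  set x : ℕ → ℝ := fun j => Real.log (r (σ (idx j))) with hxdef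
  set y : ℕ → ℝ := fun j => (if j = 0 then Real.log t else 0) + Real.log (c (idx j)) with hydef
  -- key product inequality
  have PI : ∀ m, m ≤ L' + 1 →
      (∏ j ∈ range m, r (σ (idx j))) ≤ t * ∏ j ∈ range m, c (idx j) := by
    intro m hm
    set e : Fin m → Fin (L' + 1) := fun j => σ (Fin.castLE hm j) with hedef
    have he_inj : Function.Injective e :=
      σ.injective.comp (Fin.castLE_injective hm)
    have hecast : ∀ j : Fin m, Fin.castLE hm j = idx (j : ℕ) := by
      intro j
      rw [hidxval _ (lt_of_lt_of_le j.isLt hm)]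
      exact Fin.ext rfl
    set S : Finset (Fin (L' + 1)) := Finset.image e univ with hSdef
    have hScard : S.card = m := by
      rw [hSdef, Finset.card_image_of_injective _ he_inj, card_univ, Fintype.card_fin]
    have h1 := hyp S
    rw [hScard] at h1
    have huvfac : ∀ i, u i = r i * v i :=
      fun i => (div_mul_cancel₀ (u i) (hv i).ne').symm
    have habfac : ∀ k, a k = c k * b k :=
      fun k => (div_mul_cancel₀ (a k) (hb k).ne').symm
    have hLHS : (∏ i ∈ S, u i) * (∏ i ∈ Sᶜ, v i)
        = (∏ j ∈ range m, r (σ (idx j))) * V := by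
      calc (∏ i ∈ S, u i) * (∏ i ∈ Sᶜ, v i)
          = (∏ i ∈ S, r i * v i) * (∏ i ∈ Sᶜ, v i) := by
            congr 1; exact Finset.prod_congr rfl (fun i _ => huvfac i)
        _ = (∏ i ∈ S, r i) * ((∏ i ∈ S, v i) * (∏ i ∈ Sᶜ, v i)) := by
            rw [Finset.prod_mul_distrib]; ring
        _ = (∏ i ∈ S, r i) * V := by rw [Finset.prod_mul_prod_compl]
        _ = (∏ j ∈ range m, r (σ (idx j))) * V := by
            congr 1
            rw [hSdef, Finset.prod_image (fun x _ y _ h => he_inj h)]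
            rw [← Fin.prod_univ_eq_prod_range (fun j => r (σ (idx j))) m]
            refine Finset.prod_congr rfl (fun j _ => ?_)
            rw [hedef]; simp only []; rw [hecast j]
    have hfilter : Finset.univ.filter (fun k : Fin (L' + 1) => (k : ℕ) < m)
        = Finset.image (fun j : Fin m => Fin.castLE hm j) univ := by
      ext k
      constructor
      · intro hk
        have hk2 : (k : ℕ) < m := (mem_filter.1 hk).2
        exact Finset.mem_image.2 ⟨⟨(k : ℕ), hk2⟩, mem_univ _, Fin.ext rfl⟩
      · intro hk
        obtain ⟨j, -, rfl⟩ := Finset.mem_image.1 hk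
        exact mem_filter.2 ⟨mem_univ _, j.isLt⟩
    have hRHS : (∏ k : Fin (L' + 1), (if (k : ℕ) < m then a k else b k))
        = (∏ j ∈ range m, c (idx j)) * B := by
      rw [Finset.prod_ite]
      calc (∏ k ∈ univ.filter (fun k : Fin (L' + 1) => (k : ℕ) < m), a k) *
            ∏ k ∈ univ.filter (fun k : Fin (L' + 1) => ¬((k : ℕ) < m)), b k
          = ((∏ k ∈ univ.filter (fun k : Fin (L' + 1) => (k : ℕ) < m), c k) *
              (∏ k ∈ univ.filter (fun k : Fin (L' + 1) => (k : ℕ) < m), b k)) *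
            ∏ k ∈ univ.filter (fun k : Fin (L' + 1) => ¬((k : ℕ) < m)), b k := by
            rw [← Finset.prod_mul_distrib]
            congr 1; exact Finset.prod_congr rfl (fun k _ => habfac k)
        _ = (∏ k ∈ univ.filter (fun k : Fin (L' + 1) => (k : ℕ) < m), c k) * B := by
            rw [mul_assoc, Finset.prod_filter_mul_prod_filter_not]
        _ = (∏ j ∈ range m, c (idx j)) * B := by
            congr 1
            rw [hfilter, Finset.prod_image (fun x _ y _ h => Fin.castLE_injective hm h)]
            rw [← Fin.prod_univ_eq_prod_range (fun j => c (idx j)) m]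
            exact Finset.prod_congr rfl (fun j _ => by rw [hecast j])
    rw [hLHS, hRHS] at h1
    rw [htdef, div_mul_eq_mul_div, le_div_iff₀ hV]
    linarith
  have hx : ∀ j, j < L' + 1 → x (j + 1) ≤ x j := by
    intro j hj
    apply Real.log_le_log (hr _)
    apply hσ
    show (⟨min j L', _⟩ : Fin (L' + 1)) ≤ ⟨min (j + 1) L', _⟩
    simp only [Fin.mk_le_mk]
    omega
  have hpre : ∀ m, m ≤ L' + 1 → (∑ j ∈ range m, x j) ≤ ∑ j ∈ range m, y j := by
    intro m hm
    cases m with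
    | zero => simp
    | succ m'' =>
      have hxsum : (∑ j ∈ range (m''+1), x j)
          = Real.log (∏ j ∈ range (m''+1), r (σ (idx j))) := by
        rw [Real.log_prod (fun j _ => (hr _).ne')]
      have hysum : (∑ j ∈ range (m''+1), y j)
          = Real.log t + Real.log (∏ j ∈ range (m''+1), c (idx j)) := by
        rw [hydef]
        simp only []
        rw [Finset.sum_add_distrib]
        congr 1
        · rw [Finset.sum_ite_eq' (range (m''+1)) 0 (fun _ => Real.log t)]
          simp
        · rw [Real.log_prod (fun j _ => (hc _).ne')]
      rw [hxsum, hysum, ← Real.log_mul ht0.ne' (Finset.prod_pos (fun j _ => hc _)).ne']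
      apply Real.log_le_log (Finset.prod_pos (fun j _ => hr _))
      exact PI _ hm
  have hsum := maj x y (L' + 1) hx hpre
  have hgx : ∀ j, gfun (x j) = Real.log (1 + r (σ (idx j))) := by
    intro j; rw [hxdef]; unfold gfun; rw [Real.exp_log (hr _)]
  have hLHS2 : (∑ j ∈ range (L' + 1), gfun (x j)) = Real.log (∏ i, (1 + r i)) := by
    calc (∑ j ∈ range (L' + 1), gfun (x j))
        = ∑ j ∈ range (L' + 1), Real.log (1 + r (σ (idx j))) :=
          Finset.sum_congr rfl (fun j _ => hgx j)
      _ = Real.log (∏ j ∈ range (L' + 1), (1 + r (σ (idx j)))) := by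
          rw [Real.log_prod (fun j _ => (h1r _).ne')]
      _ = Real.log (∏ j : Fin (L' + 1), (1 + r (σ j))) := by
          rw [← Fin.prod_univ_eq_prod_range (fun j => 1 + r (σ (idx j))) (L' + 1)]
          congr 1
          exact Finset.prod_congr rfl (fun j _ => by rw [hidxval _ j.isLt])
      _ = Real.log (∏ i, (1 + r i)) := by
          congr 1
          exact Equiv.prod_comp σ (fun i => 1 + r i)
  have hgy : ∀ j, gfun (y j) ≤ (if j = 0 then Real.log t else 0) + Real.log (1 + c (idx j)) := by
    intro j
    show gfun ((if j = 0 then Real.log t else 0) + Real.log (c (idx j))) ≤ _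
    by_cases hj : j = 0
    · subst hj
      rw [show (if (0:ℕ) = 0 then Real.log t else 0) = Real.log t by simp]
      unfold gfun
      rw [Real.exp_add, Real.exp_log ht0, Real.exp_log (hc _)]
      rw [← Real.log_mul ht0.ne' (h1c _).ne']
      apply Real.log_le_log (by nlinarith [hc (idx 0)])
      nlinarith [hc (idx 0)]
    · simp only [if_neg hj, zero_add]
      unfold gfun
      rw [Real.exp_log (hc _)]
  have hRHS2 : (∑ j ∈ range (L' + 1), gfun (y j))
      ≤ Real.log t + Real.log (∏ k, (1 + c k)) := by
    calc (∑ j ∈ range (L' + 1), gfun (y j))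
        ≤ ∑ j ∈ range (L' + 1), ((if j = 0 then Real.log t else 0) + Real.log (1 + c (idx j))) :=
          Finset.sum_le_sum (fun j _ => hgy j)
      _ = Real.log t + ∑ j ∈ range (L' + 1), Real.log (1 + c (idx j)) := by
          rw [Finset.sum_add_distrib]
          congr 1
          rw [Finset.sum_ite_eq' (range (L' + 1)) 0 (fun _ => Real.log t)]
          simp
      _ = Real.log t + Real.log (∏ j ∈ range (L' + 1), (1 + c (idx j))) := by
          rw [Real.log_prod (fun j _ => (h1c _).ne')]
      _ = Real.log t + Real.log (∏ k, (1 + c k)) := by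
          congr 1
          rw [← Fin.prod_univ_eq_prod_range (fun j => 1 + c (idx j)) (L' + 1)]
          congr 1
          exact Finset.prod_congr rfl (fun j _ => by rw [hidxval _ j.isLt])
  have hfinal : (∏ i, (1 + r i)) ≤ t * ∏ k, (1 + c k) := by
    have hp1 : (0:ℝ) < ∏ i, (1 + r i) := Finset.prod_pos (fun i _ => h1r i)
    have hp2' : (0:ℝ) < ∏ k, (1 + c k) := Finset.prod_pos (fun k _ => h1c k)
    have h5 : Real.log (∏ i, (1 + r i)) ≤ Real.log (t * ∏ k, (1 + c k)) := by
      rw [Real.log_mul ht0.ne' hp2'.ne']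
      calc Real.log (∏ i, (1 + r i)) = ∑ j ∈ range (L' + 1), gfun (x j) := hLHS2.symm
        _ ≤ ∑ j ∈ range (L' + 1), gfun (y j) := hsum
        _ ≤ _ := hRHS2
    exact (Real.log_le_log_iff hp1 (mul_pos ht0 hp2')).1 h5
  have huv2 : (∏ i, (u i + v i)) = V * ∏ i, (1 + r i) := by
    rw [hVdef, ← Finset.prod_mul_distrib]
    refine Finset.prod_congr rfl (fun i _ => ?_)
    rw [hrdef]
    have := (hv i).ne'
    field_simp
    ring
  have hab2 : (∏ k, (a k + b k)) = B * ∏ k, (1 + c k) := by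
    rw [hBdef, ← Finset.prod_mul_distrib]
    refine Finset.prod_congr rfl (fun k _ => ?_)
    rw [hcdef]
    have := (hb k).ne'
    field_simp
    ring
  rw [huv2, hab2]
  calc V * ∏ i, (1 + r i) ≤ V * (t * ∏ k, (1 + c k)) :=
        mul_le_mul_of_nonneg_left hfinal hV.le
    _ = B * ∏ k, (1 + c k) := by rw [htdef]; field_simp

lemma posCase (L : ℕ) (u v a b : Fin L → ℝ)
    (hu : ∀ i, 0 < u i) (hv : ∀ i, 0 < v i) (ha : ∀ k, 0 < a k) (hb : ∀ k, 0 < b k)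
    (hyp : ∀ S : Finset (Fin L),
      (∏ i ∈ S, u i) * (∏ i ∈ Sᶜ, v i) ≤
        ∏ k : Fin L, (if (k : ℕ) < S.card then a k else b k)) :
    (∏ i, (u i + v i)) ≤ ∏ k, (a k + b k) := by
  cases L with
  | zero => simp
  | succ L' => exact posCaseSucc L' u v a b hu hv ha hb hyp


lemma prodSplit {L : ℕ} (S : Finset (Fin L)) (f g : Fin L → ℝ) :
    (∏ i ∈ S, f i) * (∏ i ∈ Sᶜ, g i) = ∏ i : Fin L, (if i ∈ S then f i else g i) := by
  rw [Finset.prod_ite]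
  congr 2
  · ext i; simp
  · ext i; simp

lemma prod_add_le {ι : Type*} [DecidableEq ι] (s : Finset ι) (w : ι → ℝ) (M e : ℝ)
    (hw : ∀ i, 0 ≤ w i) (hwM : ∀ i, w i ≤ M) (hM : 0 ≤ M) (he0 : 0 ≤ e) (he1 : e ≤ 1) :
    (∏ i ∈ s, (w i + e)) ≤ (∏ i ∈ s, w i) + e * (s.card : ℝ) * (M + 1) ^ s.card := by
  induction s using Finset.induction_on with
  | empty => simp
  | @insert i s hi ih =>
    rw [Finset.prod_insert hi, Finset.prod_insert hi, Finset.card_insert_of_notMem hi]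
    have hP0 : (0:ℝ) ≤ ∏ j ∈ s, w j := Finset.prod_nonneg (fun j _ => hw j)
    have hPX : (∏ j ∈ s, w j) ≤ (M + 1) ^ s.card := by
      calc (∏ j ∈ s, w j) ≤ ∏ j ∈ s, (M + 1) :=
            Finset.prod_le_prod (fun j _ => hw j) (fun j _ => by linarith [hwM j])
        _ = (M + 1) ^ s.card := by rw [Finset.prod_const]
    have hprod0 : (0:ℝ) ≤ ∏ j ∈ s, (w j + e) :=
      Finset.prod_nonneg (fun j _ => by linarith [hw j])
    have hX0 : (0:ℝ) ≤ (M + 1) ^ s.card := by positivity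
    have hC0 : (0:ℝ) ≤ (s.card : ℝ) := Nat.cast_nonneg _
    have step1 : (w i + e) * (∏ j ∈ s, (w j + e))
        ≤ (w i + e) * ((∏ j ∈ s, w j) + e * (s.card : ℝ) * (M + 1) ^ s.card) :=
      mul_le_mul_of_nonneg_left ih (by linarith [hw i])
    have hcast : ((s.card + 1 : ℕ) : ℝ) = (s.card : ℝ) + 1 := by push_cast; ring
    rw [hcast, pow_succ]
    nlinarith [hw i, hwM i, mul_nonneg he0 hX0, mul_nonneg (mul_nonneg he0 hX0) hC0,
      mul_nonneg (mul_nonneg he0 he0) (mul_nonneg hC0 hX0), mul_nonneg he0 hM,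
      mul_nonneg (mul_nonneg he0 hM) (mul_nonneg hC0 hX0)]

lemma prod_add_ge {ι : Type*} [DecidableEq ι] (s : Finset ι) (hs : s.Nonempty) (w : ι → ℝ)
    (η : ℝ) (hw : ∀ i, 0 ≤ w i) (hη : 0 ≤ η) :
    (∏ i ∈ s, w i) + η ^ s.card ≤ ∏ i ∈ s, (w i + η) := by
  induction hs using Finset.Nonempty.cons_induction with
  | singleton a => simp
  | cons a s ha hs ih =>
    rw [Finset.prod_cons, Finset.prod_cons, Finset.card_cons, pow_succ]
    have hP0 : (0:ℝ) ≤ ∏ j ∈ s, w j := Finset.prod_nonneg (fun j _ => hw j)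
    have hη0 : (0:ℝ) ≤ η ^ s.card := by positivity
    nlinarith [hw a, ih, mul_nonneg hη hP0, mul_nonneg (hw a) hη0, mul_nonneg hη hη0]

lemma onebit (L : ℕ) (u v a b : Fin L → ℝ)
    (hu : ∀ i, 0 ≤ u i) (hv : ∀ i, 0 ≤ v i) (ha : ∀ k, 0 ≤ a k) (hb : ∀ k, 0 ≤ b k)
    (hyp : ∀ S : Finset (Fin L),
      (∏ i ∈ S, u i) * (∏ i ∈ Sᶜ, v i) ≤
        ∏ k : Fin L, (if (k : ℕ) < S.card then a k else b k)) :
    (∏ i, (u i + v i)) ≤ ∏ k, (a k + b k) := by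
  cases L with
  | zero => simp
  | succ L0 =>
  apply le_of_forall_pos_le_add
  intro δ hδ
  have hsumuv : (0:ℝ) ≤ ∑ i, (u i + v i) :=
    Finset.sum_nonneg (fun i _ => by linarith [hu i, hv i])
  have hsumab : (0:ℝ) ≤ ∑ k, (a k + b k) :=
    Finset.sum_nonneg (fun k _ => by linarith [ha k, hb k])
  set M := 1 + (∑ i, (u i + v i)) + (∑ k, (a k + b k)) with hMdef
  have hM1 : (1:ℝ) ≤ M := by simp only [hMdef]; linarith
  have hM0 : (0:ℝ) ≤ M := by linarith
  have hMu : ∀ i, u i ≤ M := by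
    intro i
    have h := Finset.single_le_sum (f := fun i => u i + v i)
      (fun j _ => by simpa using add_nonneg (hu j) (hv j)) (mem_univ i)
    simp only [hMdef]; linarith [hv i]
  have hMv : ∀ i, v i ≤ M := by
    intro i
    have h := Finset.single_le_sum (f := fun i => u i + v i)
      (fun j _ => by simpa using add_nonneg (hu j) (hv j)) (mem_univ i)
    simp only [hMdef]; linarith [hu i]
  have hMab : ∀ k, a k + b k ≤ 2 * M := by
    intro k
    have h := Finset.single_le_sum (f := fun k => a k + b k)
      (fun j _ => by simpa using add_nonneg (ha j) (hb j)) (mem_univ k)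
    simp only [hMdef]; linarith
  set K : ℝ := ((L0 + 1 : ℕ) : ℝ) * (M + 1) ^ (L0 + 1) + 1 with hKdef
  have hK1 : (1:ℝ) ≤ K := by
    have : (0:ℝ) ≤ ((L0 + 1 : ℕ) : ℝ) * (M + 1) ^ (L0 + 1) := by positivity
    simp only [hKdef]; linarith
  have hK0 : (0:ℝ) < K := by linarith
  set K' : ℝ := ((L0 + 1 : ℕ) : ℝ) * (2 * M + 1) ^ (L0 + 1) + 1 with hK'def
  have hK'0 : (0:ℝ) < K' := by
    have : (0:ℝ) ≤ ((L0 + 1 : ℕ) : ℝ) * (2 * M + 1) ^ (L0 + 1) := by positivity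
    simp only [hK'def]; linarith
  set η : ℝ := min (1/2) (δ / (2 * K')) with hηdef
  have hη0 : 0 < η := lt_min (by norm_num) (div_pos hδ (by linarith))
  have hη1 : η ≤ 1/2 := min_le_left _ _
  have hη2 : η ≤ δ / (2 * K') := min_le_right _ _
  set ε : ℝ := η ^ (L0 + 1) / K with hεdef
  have hε0 : 0 < ε := div_pos (by positivity) hK0
  have hε1 : ε ≤ 1 := by
    rw [hεdef, div_le_one hK0]
    calc η ^ (L0 + 1) ≤ 1 ^ (L0 + 1) :=
          pow_le_pow_left₀ hη0.le (by linarith) _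
      _ = 1 := one_pow _
      _ ≤ K := hK1
  have hεK : ε * K = η ^ (L0 + 1) := div_mul_cancel₀ _ hK0.ne'
  -- perturbed hypothesis
  have hyp' : ∀ S : Finset (Fin (L0 + 1)),
      (∏ i ∈ S, (u i + ε)) * (∏ i ∈ Sᶜ, (v i + ε)) ≤
        ∏ k : Fin (L0 + 1), (if (k : ℕ) < S.card then a k + η else b k + η) := by
    intro S
    have e1 : (∏ i ∈ S, (u i + ε)) * (∏ i ∈ Sᶜ, (v i + ε))
        = ∏ i : Fin (L0 + 1), ((if i ∈ S then u i else v i) + ε) := by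
      rw [prodSplit S (fun i => u i + ε) (fun i => v i + ε)]
      exact Finset.prod_congr rfl (fun i _ => by by_cases h : i ∈ S <;> simp [h])
    have e2 : (∏ i : Fin (L0 + 1), ((if i ∈ S then u i else v i) + ε))
        ≤ (∏ i : Fin (L0 + 1), (if i ∈ S then u i else v i))
          + ε * ((L0 + 1 : ℕ) : ℝ) * (M + 1) ^ (L0 + 1) := by
      have := prod_add_le (univ : Finset (Fin (L0 + 1)))
        (fun i => if i ∈ S then u i else v i) M ε
        (fun i => by by_cases h : i ∈ S <;> simp [h, hu i, hv i])
        (fun i => by by_cases h : i ∈ S <;> simp [h, hMu i, hMv i])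
        hM0 hε0.le hε1
      simpa [Finset.card_univ] using this
    have e3 : (∏ i : Fin (L0 + 1), (if i ∈ S then u i else v i))
        ≤ ∏ k : Fin (L0 + 1), (if (k : ℕ) < S.card then a k else b k) := by
      rw [← prodSplit]; exact hyp S
    have e4 : ε * ((L0 + 1 : ℕ) : ℝ) * (M + 1) ^ (L0 + 1) ≤ η ^ (L0 + 1) := by
      rw [← hεK]
      have h1 : ((L0 + 1 : ℕ) : ℝ) * (M + 1) ^ (L0 + 1) ≤ K := by
        simp only [hKdef]; linarith
      calc ε * ((L0 + 1 : ℕ) : ℝ) * (M + 1) ^ (L0 + 1)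
          = ε * (((L0 + 1 : ℕ) : ℝ) * (M + 1) ^ (L0 + 1)) := by ring
        _ ≤ ε * K := mul_le_mul_of_nonneg_left h1 hε0.le
    have e5 : (∏ k : Fin (L0 + 1), (if (k : ℕ) < S.card then a k else b k)) + η ^ (L0 + 1)
        ≤ ∏ k : Fin (L0 + 1), ((if (k : ℕ) < S.card then a k else b k) + η) := by
      have := prod_add_ge (univ : Finset (Fin (L0 + 1))) univ_nonempty
        (fun k => if (k : ℕ) < S.card then a k else b k) η
        (fun k => by by_cases h : (k : ℕ) < S.card <;> simp [h, ha k, hb k]) hη0.le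
      simpa [Finset.card_univ] using this
    have e6 : (∏ k : Fin (L0 + 1), ((if (k : ℕ) < S.card then a k else b k) + η))
        = ∏ k : Fin (L0 + 1), (if (k : ℕ) < S.card then a k + η else b k + η) :=
      Finset.prod_congr rfl (fun k _ => by by_cases h : (k : ℕ) < S.card <;> simp [h])
    rw [e1, ← e6]
    linarith [e2, e3, e4, e5]
  have main := posCase (L0 + 1) (fun i => u i + ε) (fun i => v i + ε)
    (fun k => a k + η) (fun k => b k + η)
    (fun i => by linarith [hu i]) (fun i => by linarith [hv i])
    (fun k => by linarith [ha k]) (fun k => by linarith [hb k]) hyp'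
  have h4 : (∏ i, (u i + v i)) ≤ ∏ i : Fin (L0 + 1), ((u i + ε) + (v i + ε)) :=
    Finset.prod_le_prod (fun i _ => by linarith [hu i, hv i])
      (fun i _ => by linarith [hε0])
  have h5 : (∏ k : Fin (L0 + 1), ((a k + η) + (b k + η)))
      = ∏ k : Fin (L0 + 1), ((a k + b k) + 2 * η) :=
    Finset.prod_congr rfl (fun k _ => by ring)
  have h6 : (∏ k : Fin (L0 + 1), ((a k + b k) + 2 * η))
      ≤ (∏ k : Fin (L0 + 1), (a k + b k))
        + (2 * η) * ((L0 + 1 : ℕ) : ℝ) * (2 * M + 1) ^ (L0 + 1) := by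
    have := prod_add_le (univ : Finset (Fin (L0 + 1))) (fun k => a k + b k) (2 * M) (2 * η)
      (fun k => add_nonneg (ha k) (hb k)) (fun k => hMab k) (by linarith)
      (by linarith) (by linarith)
    simpa [Finset.card_univ] using this
  have h7 : (2 * η) * ((L0 + 1 : ℕ) : ℝ) * (2 * M + 1) ^ (L0 + 1) ≤ δ := by
    have h1 : ((L0 + 1 : ℕ) : ℝ) * (2 * M + 1) ^ (L0 + 1) ≤ K' := by
      simp only [hK'def]; linarith
    have h2 : (2 * η) * ((L0 + 1 : ℕ) : ℝ) * (2 * M + 1) ^ (L0 + 1)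
        ≤ (2 * η) * K' := by
      calc (2 * η) * ((L0 + 1 : ℕ) : ℝ) * (2 * M + 1) ^ (L0 + 1)
          = (2 * η) * (((L0 + 1 : ℕ) : ℝ) * (2 * M + 1) ^ (L0 + 1)) := by ring
        _ ≤ (2 * η) * K' := mul_le_mul_of_nonneg_left h1 (by linarith)
    have h3 : (2 * η) * K' ≤ δ := by
      rw [le_div_iff₀ (by linarith : (0:ℝ) < 2 * K')] at hη2
      nlinarith [hη2]
    linarith
  have main' : (∏ i : Fin (L0 + 1), (u i + ε + (v i + ε)))
      ≤ ∏ k : Fin (L0 + 1), (a k + η + (b k + η)) := main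
  linarith [main', h4, h5.le, h5.ge, h6, h7]


/-- `symmAbove A k` = the set of points lying in more than `k` of the sets `A i`. -/
def symmAbove {n L : ℕ} (A : Fin L → Finset (Fin n)) (k : ℕ) : Finset (Fin n) :=
  Finset.univ.filter (fun x => k < (Finset.univ.filter (fun i => x ∈ A i)).card)

lemma symm_insert {n L : ℕ} (s : Finset (Fin n)) (p : Fin n) (hp : p ∉ s)
    (A : Fin L → Finset (Fin n)) (hA : ∀ i, A i ⊆ s) (S : Finset (Fin L)) (k : ℕ) :
    symmAbove (fun i => if i ∈ S then insert p (A i) else A i) k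
      = if k < S.card then insert p (symmAbove A k) else symmAbove A k := by
  have hpA : ∀ i, p ∉ A i := fun i h => hp (hA i h)
  have hmem : ∀ i, (p ∈ (if i ∈ S then insert p (A i) else A i)) ↔ i ∈ S := by
    intro i
    by_cases h : i ∈ S
    · simp [h]
    · simp [h, hpA i]
  ext x
  by_cases hx : x = p
  · subst hx
    have hcount : (Finset.univ.filter
        (fun i => x ∈ (if i ∈ S then insert x (A i) else A i))) = S := by
      ext i; simp only [mem_filter, mem_univ, true_and]; exact hmem i
    have hcount0 : (Finset.univ.filter (fun i => x ∈ A i)) = ∅ := by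
      ext i; simp [hpA i]
    by_cases hk : k < S.card
    · simp [symmAbove, hcount, hk]
    · simp [symmAbove, hcount, hcount0, hk, Nat.not_lt_zero]
  · have hmem2 : ∀ i, (x ∈ (if i ∈ S then insert p (A i) else A i)) ↔ x ∈ A i := by
      intro i
      by_cases h : i ∈ S
      · simp [h, Finset.mem_insert, hx]
      · simp [h]
    have hcount : (Finset.univ.filter
        (fun i => x ∈ (if i ∈ S then insert p (A i) else A i)))
        = Finset.univ.filter (fun i => x ∈ A i) := by
      ext i; simp only [mem_filter, mem_univ, true_and]; exact hmem2 i
    by_cases hk : k < S.card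
    · simp [symmAbove, hcount, hk, Finset.mem_insert, hx]
    · simp [symmAbove, hcount, hk]
  
lemma AK {n L : ℕ} (s : Finset (Fin n)) (f g : Fin L → Finset (Fin n) → ℝ)
    (hf : ∀ i A, 0 ≤ f i A) (hg : ∀ k B, 0 ≤ g k B)
    (hyp : ∀ A : Fin L → Finset (Fin n), (∀ i, A i ⊆ s) →
      (∏ i, f i (A i)) ≤ ∏ k : Fin L, g k (symmAbove A (k : ℕ))) :
    (∏ i, ∑ A ∈ s.powerset, f i A) ≤ ∏ k : Fin L, ∑ B ∈ s.powerset, g k B := by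
  induction s using Finset.induction_on generalizing f g with
  | empty =>
    simp only [Finset.powerset_empty, Finset.sum_singleton]
    have h := hyp (fun _ => ∅) (fun i => subset_rfl)
    have hsymm : ∀ k : Fin L, symmAbove (fun _ : Fin L => (∅ : Finset (Fin n))) (k : ℕ) = ∅ := by
      intro k
      ext x
      simp [symmAbove]
    calc (∏ i, f i ∅) ≤ ∏ k : Fin L, g k (symmAbove (fun _ => ∅) (k : ℕ)) := h
      _ = ∏ k : Fin L, g k ∅ := Finset.prod_congr rfl (fun k _ => by rw [hsymm k])
  | @insert p s hp ih =>
    have hsumf : ∀ (h : Finset (Fin n) → ℝ),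
        (∑ A ∈ (insert p s).powerset, h A) = ∑ A ∈ s.powerset, (h A + h (insert p A)) := by
      intro h
      rw [Finset.sum_powerset_insert hp, Finset.sum_add_distrib]
    calc (∏ i, ∑ A ∈ (insert p s).powerset, f i A)
        = ∏ i, ∑ A ∈ s.powerset, (f i A + f i (insert p A)) :=
          Finset.prod_congr rfl (fun i _ => hsumf (f i))
      _ ≤ ∏ k : Fin L, ∑ B ∈ s.powerset, (g k B + g k (insert p B)) := by
          apply ih (fun i A => f i A + f i (insert p A)) (fun k B => g k B + g k (insert p B))
            (fun i A => add_nonneg (hf i A) (hf i _)) (fun k B => add_nonneg (hg k B) (hg k _))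
          intro A hA
          have key := onebit L (fun i => f i (insert p (A i))) (fun i => f i (A i))
            (fun k => g k (insert p (symmAbove A (k : ℕ)))) (fun k => g k (symmAbove A (k : ℕ)))
            (fun i => hf _ _) (fun i => hf _ _) (fun k => hg _ _) (fun k => hg _ _) ?_
          · calc (∏ i, (f i (A i) + f i (insert p (A i))))
                = ∏ i, ((fun i => f i (insert p (A i))) i + (fun i => f i (A i)) i) :=
                  Finset.prod_congr rfl (fun i _ => by simp only []; ring)
              _ ≤ ∏ k : Fin L, ((fun k => g k (insert p (symmAbove A (k : ℕ)))) k
                    + (fun k => g k (symmAbove A (k : ℕ))) k) := key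
              _ = ∏ k : Fin L, (g k (symmAbove A (k : ℕ)) + g k (insert p (symmAbove A (k : ℕ)))) :=
                  Finset.prod_congr rfl (fun k _ => by simp only []; ring)
          · intro S
            set AS : Fin L → Finset (Fin n) :=
              fun i => if i ∈ S then insert p (A i) else A i with hASdef
            have hAS2 : ∀ i, AS i ⊆ insert p s := by
              intro i
              by_cases h : i ∈ S
              · simp only [hASdef, if_pos h]
                exact Finset.insert_subset_insert _ (hA i)
              · simp only [hASdef, if_neg h]
                exact (hA i).trans (Finset.subset_insert _ _)
            have h1 := hyp AS hAS2
            have hL : (∏ i, f i (AS i))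
                = (∏ i ∈ S, (fun i => f i (insert p (A i))) i)
                  * ∏ i ∈ Sᶜ, (fun i => f i (A i)) i := by
              rw [prodSplit S (fun i => f i (insert p (A i))) (fun i => f i (A i))]
              refine Finset.prod_congr rfl (fun i _ => ?_)
              simp only [hASdef]
              by_cases h : i ∈ S <;> simp [h]
            have hR : (∏ k : Fin L, g k (symmAbove AS (k : ℕ)))
                = ∏ k : Fin L, (if (k : ℕ) < S.card
                    then (fun k => g k (insert p (symmAbove A (k : ℕ)))) k
                    else (fun k => g k (symmAbove A (k : ℕ))) k) := by
              refine Finset.prod_congr rfl (fun k _ => ?_)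
              rw [hASdef, symm_insert s p hp A hA S (k : ℕ)]
              by_cases h : (k : ℕ) < S.card <;> simp [h]
            rw [hL, hR] at h1
            exact h1
      _ = ∏ k : Fin L, ∑ B ∈ (insert p s).powerset, g k B :=
          (Finset.prod_congr rfl (fun k _ => (hsumf (g k)).symm))


end RS

/-- The join `⋁_{t ∈ T} 𝓐 t = { ⋃_{t ∈ T} A t : A t ∈ 𝓐 t }` of a finite collection of
families of subsets of `[n]`. -/
noncomputable def famJoin {n : ℕ} {ι : Type*} [DecidableEq ι] (T : Finset ι)
    (𝓐 : ι → Finset (Finset (Fin n))) : Finset (Finset (Fin n)) :=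
  open Classical in
  Finset.univ.filter (fun X : Finset (Fin n) =>
    ∃ f : ι → Finset (Fin n), (∀ t ∈ T, f t ∈ 𝓐 t) ∧ X = T.sup f)

/-- The meet `⋀_{t ∈ T} 𝓐 t = { ⋂_{t ∈ T} A t : A t ∈ 𝓐 t }` of a finite collection of
families of subsets of `[n]`. -/
noncomputable def famMeet {n : ℕ} {ι : Type*} [DecidableEq ι] (T : Finset ι)
    (𝓐 : ι → Finset (Finset (Fin n))) : Finset (Finset (Fin n)) :=
  open Classical in
  Finset.univ.filter (fun X : Finset (Fin n) =>
    ∃ f : ι → Finset (Fin n), (∀ t ∈ T, f t ∈ 𝓐 t) ∧ X = T.inf f)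

/-- Rinott–Saks correlation inequality for families of sets: for arbitrary families
`𝓐 1, …, 𝓐 ℓ` of subsets of `[n]`,
`∏_{k=1}^ℓ |𝓐 k| ≤ ∏_{k=1}^ℓ | ⋁_{S ∈ C([ℓ],k)} ( ⋀_{s ∈ S} 𝓐 s ) |`. -/
theorem statement4 (n ℓ : ℕ) (hn : 1 ≤ n) (hℓ : 1 ≤ ℓ)
    (𝓐 : Fin ℓ → Finset (Finset (Fin n))) :
    ∏ k : Fin ℓ, (𝓐 k).card ≤
      ∏ k : Fin ℓ,
        (famJoin ((Finset.univ : Finset (Fin ℓ)).powersetCard (k.val + 1))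
          (fun S => famMeet S 𝓐)).card := by
  classical
  set 𝓑 : Fin ℓ → Finset (Finset (Fin n)) := fun k =>
    famJoin ((Finset.univ : Finset (Fin ℓ)).powersetCard (k.val + 1))
      (fun S => famMeet S 𝓐) with h𝓑
  have mem𝓑 : ∀ (A : Fin ℓ → Finset (Fin n)), (∀ i, A i ∈ 𝓐 i) → ∀ k : Fin ℓ,
      RS.symmAbove A (k : ℕ) ∈ 𝓑 k := by
    intro A hall k
    simp only [h𝓑, famJoin, Finset.mem_filter, Finset.mem_univ, true_and]
    refine ⟨fun S => S.inf A, ?_, ?_⟩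
    · intro S hS
      simp only [famMeet, Finset.mem_filter, Finset.mem_univ, true_and]
      exact ⟨A, fun t ht => hall t, rfl⟩
    · ext x
      simp only [Finset.mem_sup]
      constructor
      · intro hx
        have hx2 : (k : ℕ) < (univ.filter (fun i => x ∈ A i)).card := by
          simpa [RS.symmAbove] using hx
        obtain ⟨T, hTsub, hTcard⟩ :=
          Finset.exists_subset_card_eq (show (k : ℕ) + 1 ≤ _ from hx2)
        refine ⟨T, Finset.mem_powersetCard_univ.2 hTcard, ?_⟩
        rw [Finset.mem_inf]
        intro i hi
        exact (Finset.mem_filter.1 (hTsub hi)).2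
      · rintro ⟨T, hT, hxT⟩
        have hTcard := Finset.mem_powersetCard_univ.1 hT
        have hsub : T ⊆ univ.filter (fun i => x ∈ A i) := by
          intro i hi
          exact Finset.mem_filter.2 ⟨Finset.mem_univ _, (Finset.mem_inf.1 hxT) i hi⟩
        have hcard := Finset.card_le_card hsub
        simp only [RS.symmAbove, Finset.mem_filter, Finset.mem_univ, true_and]
        omega
  set f : Fin ℓ → Finset (Fin n) → ℝ := fun i A => if A ∈ 𝓐 i then 1 else 0 with hf
  set g : Fin ℓ → Finset (Fin n) → ℝ := fun k B => if B ∈ 𝓑 k then 1 else 0 with hg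
  have hf0 : ∀ i A, 0 ≤ f i A := fun i A => by simp only [hf]; split <;> norm_num
  have hg0 : ∀ k B, 0 ≤ g k B := fun k B => by simp only [hg]; split <;> norm_num
  have hyp : ∀ A : Fin ℓ → Finset (Fin n), (∀ i, A i ⊆ (univ : Finset (Fin n))) →
      (∏ i, f i (A i)) ≤ ∏ k : Fin ℓ, g k (RS.symmAbove A (k : ℕ)) := by
    intro A _
    by_cases hall : ∀ i, A i ∈ 𝓐 i
    · have hL : (∏ i, f i (A i)) = 1 :=
        Finset.prod_eq_one (fun i _ => by simp [hf, hall i])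
      have hR : (∏ k : Fin ℓ, g k (RS.symmAbove A (k : ℕ))) = 1 :=
        Finset.prod_eq_one (fun k _ => by simp [hg, mem𝓑 A hall k])
      rw [hL, hR]
    · push_neg at hall
      obtain ⟨i0, hi0⟩ := hall
      have hL : (∏ i, f i (A i)) = 0 :=
        Finset.prod_eq_zero (Finset.mem_univ i0) (by simp [hf, hi0])
      rw [hL]
      exact Finset.prod_nonneg (fun k _ => hg0 _ _)
  have main := RS.AK (univ : Finset (Fin n)) f g hf0 hg0 hyp
  have hsf : ∀ i, (∑ A ∈ (univ : Finset (Fin n)).powerset, f i A) = ((𝓐 i).card : ℝ) := by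
    intro i
    rw [Finset.powerset_univ]
    simp only [hf]
    rw [Finset.sum_boole]
    congr 1
    congr 1
    ext A; simp
  have hsg : ∀ k, (∑ B ∈ (univ : Finset (Fin n)).powerset, g k B) = ((𝓑 k).card : ℝ) := by
    intro k
    rw [Finset.powerset_univ]
    simp only [hg]
    rw [Finset.sum_boole]
    congr 1
    congr 1
    ext B; simp
  have main2 : (∏ i : Fin ℓ, ((𝓐 i).card : ℝ)) ≤ ∏ k : Fin ℓ, ((𝓑 k).card : ℝ) := by
    calc (∏ i : Fin ℓ, ((𝓐 i).card : ℝ))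
        = ∏ i : Fin ℓ, ∑ A ∈ (univ : Finset (Fin n)).powerset, f i A :=
          Finset.prod_congr rfl (fun i _ => (hsf i).symm)
      _ ≤ ∏ k : Fin ℓ, ∑ B ∈ (univ : Finset (Fin n)).powerset, g k B := main
      _ = ∏ k : Fin ℓ, ((𝓑 k).card : ℝ) := Finset.prod_congr rfl (fun k _ => hsg k)
  exact_mod_cast main2
end

section
/- Let n, ℓ be positive integers, let 0 ≤ p ≤ 1, and let 𝓐_1, …, 𝓐_ℓ ⊆ 2^{[n]} be arbitrary families of subsets of [n]. Then ∏_{k=1}^{ℓ} μ_p(𝓐_k) ≤ ∏_{k=1}^{ℓ} μ_p( ⋁_{S ∈ binom([ℓ], k)} ( ⋀_{s ∈ S} 𝓐_s ) ). -/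
/-- The `p`-biased measure of a family `𝓕` of subsets of `[n]`:
`μ_p(𝓕) = ∑_{X ∈ 𝓕} p^{|X|} (1−p)^{n−|X|}`. -/
noncomputable def biasedMeasure (n : ℕ) (p : ℝ) (𝓕 : Finset (Finset (Fin n))) : ℝ :=
  ∑ X ∈ 𝓕, p ^ X.card * (1 - p) ^ (n - X.card)

open Finset

lemma amgm_aux {u v : ℝ} (hu : 0 < u) (hv : 0 < v) :
    1 + u ≤ (1 + v) * (u / v) ^ (u / (1 + u)) := by
  have h1u : (0:ℝ) < 1 + u := by linarith
  have h1v : (0:ℝ) < 1 + v := by linarith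
  set s : ℝ := u / (1 + u) with hs
  have hs0 : 0 ≤ s := by positivity
  have hs1 : s + 1/(1+u) = 1 := by rw [hs]; field_simp; ring
  have key : (v/u) ^ s * (1:ℝ) ^ (1/(1+u)) ≤ s * (v/u) + (1/(1+u)) * 1 :=
    Real.geom_mean_le_arith_mean2_weighted hs0 (by positivity) (by positivity) zero_le_one hs1
  rw [Real.one_rpow, mul_one, mul_one] at key
  have hcalc : s * (v/u) + (1/(1+u)) = (1+v)/(1+u) := by
    rw [hs]; field_simp; ring
  rw [hcalc] at key
  have hpos : (0:ℝ) < (v/u) ^ s := Real.rpow_pos_of_pos (by positivity) _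
  have hinv : (u / v) ^ s = ((v/u) ^ s)⁻¹ := by
    rw [← Real.inv_rpow (by positivity), inv_div]
  rw [hinv]
  rw [← div_eq_mul_inv, le_div_iff₀ hpos]
  calc (1 + u) * (v/u) ^ s ≤ (1 + u) * ((1+v)/(1+u)) := by
        exact mul_le_mul_of_nonneg_left key (le_of_lt h1u)
    _ = 1 + v := by field_simp

lemma lemK {ℓ : ℕ} (ρ : Fin ℓ → ℝ) (hρ : ∀ i, 0 < ρ i) (A B : ℝ) (hA : 0 < A)
    (hyp : ∀ t, t ≤ ℓ → A * ∏ i : Fin ℓ, (if i.val < t then ρ i else 1) ≤ B) :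
    ∀ (m : ℕ), m ≤ ℓ → ∀ (s : Fin ℓ → ℝ), (∀ i : Fin ℓ, i.val < m → 0 ≤ s i) →
      (∀ i j : Fin ℓ, i ≤ j → j.val < m → s j ≤ s i) →
      ∀ w, 0 ≤ w → w ≤ 1 → (∀ i : Fin ℓ, i.val < m → s i ≤ w) →
      A * ∏ i : Fin ℓ, (if i.val < m then ρ i ^ (s i) else 1) ≤ A ^ (1 - w) * B ^ w := by
  have hB : 0 < B := lt_of_lt_of_le hA (by simpa using hyp 0 (Nat.zero_le _))
  have hAB : A ≤ B := by simpa using hyp 0 (Nat.zero_le _)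
  intro m
  induction m with
  | zero =>
    intro _ s _ _ w hw0 hw1 _
    simp only [Nat.not_lt_zero, if_false, prod_const_one, mul_one]
    calc A = A ^ (1 - w) * A ^ w := by
            rw [← Real.rpow_add hA]; norm_num
      _ ≤ A ^ (1 - w) * B ^ w := by
            apply mul_le_mul_of_nonneg_left (Real.rpow_le_rpow hA.le hAB hw0)
            positivity
  | succ m ih =>
    intro hm s hs0 hsa w hw0 hw1 hsw
    have hmℓ : m < ℓ := hm
    set j : Fin ℓ := ⟨m, hmℓ⟩ with hj
    have hsj0 : 0 ≤ s j := hs0 j (by simp [hj])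
    have hsjw : s j ≤ w := hsw j (by simp [hj])
    have decomp : ∏ i : Fin ℓ, (if i.val < m + 1 then ρ i ^ (s i) else 1)
        = (∏ i : Fin ℓ, (if i.val < m then ρ i ^ (s i - s j) else 1))
          * ∏ i : Fin ℓ, (if i.val < m + 1 then ρ i else 1) ^ (s j) := by
      rw [← prod_mul_distrib]
      apply Finset.prod_congr rfl
      intro i _
      by_cases h1 : i.val < m
      · rw [if_pos h1, if_pos (Nat.lt_succ_of_lt h1), if_pos (Nat.lt_succ_of_lt h1),
          ← Real.rpow_add (hρ i)]
        congr 1; ring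
      · by_cases h2 : i.val < m + 1
        · have hij : i = j := Fin.ext (by simp [hj]; omega)
          rw [if_pos h2, if_neg h1, if_pos h2, one_mul, hij]
        · rw [if_neg h2, if_neg h1, if_neg h2, one_mul, Real.one_rpow]
    have hYpos : 0 < ∏ i : Fin ℓ, (if i.val < m + 1 then ρ i else 1) := by
      apply Finset.prod_pos; intro i _; split <;> [exact hρ i; exact one_pos]
    have hY : ∏ i : Fin ℓ, (if i.val < m + 1 then ρ i else 1) ≤ B / A := by
      rw [le_div_iff₀' hA]; exact hyp (m+1) hm
    have hYs : (∏ i : Fin ℓ, (if i.val < m + 1 then ρ i else 1)) ^ (s j) ≤ (B / A) ^ (s j) :=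
      Real.rpow_le_rpow hYpos.le hY hsj0
    have hX : A * ∏ i : Fin ℓ, (if i.val < m then ρ i ^ (s i - s j) else 1)
        ≤ A ^ (1 - (w - s j)) * B ^ (w - s j) := by
      apply ih (le_of_lt hmℓ) (fun i => s i - s j)
      · intro i hi
        have : s j ≤ s i := hsa i j (by simp [hj, Fin.le_def]; omega) (by simp [hj])
        simp only [sub_nonneg]; exact this
      · intro i i' hii' hi'
        have := hsa i i' hii' (by omega)
        linarith
      · linarith
      · linarith
      · intro i hi
        have := hsw i (by omega)
        linarith
    have hXpos : 0 ≤ ∏ i : Fin ℓ, (if i.val < m then ρ i ^ (s i - s j) else 1) := by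
      apply Finset.prod_nonneg; intro i _; split
      · exact (Real.rpow_pos_of_pos (hρ i) _).le
      · exact zero_le_one
    have e1 : A ^ (1 - (w - s j)) * A ^ (-(s j)) = A ^ (1 - w) := by
      rw [← Real.rpow_add hA]; congr 1; ring
    have e2 : B ^ (w - s j) * B ^ (s j) = B ^ w := by
      rw [← Real.rpow_add hB]; congr 1; ring
    calc A * ∏ i : Fin ℓ, (if i.val < m + 1 then ρ i ^ (s i) else 1)
        = (A * ∏ i : Fin ℓ, (if i.val < m then ρ i ^ (s i - s j) else 1))
          * (∏ i : Fin ℓ, (if i.val < m + 1 then ρ i else 1)) ^ (s j) := by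
          rw [decomp, Real.finset_prod_rpow _ _
            (fun i _ => by split <;> [exact (hρ i).le; exact zero_le_one]) _]
          ring
      _ ≤ (A ^ (1 - (w - s j)) * B ^ (w - s j)) * (B / A) ^ (s j) := by
          apply mul_le_mul hX hYs (Real.rpow_nonneg hYpos.le _)
          positivity
      _ = A ^ (1 - w) * B ^ w := by
          rw [Real.div_rpow hB.le hA.le, div_eq_mul_inv, ← Real.rpow_neg hA.le]
          rw [← e1, ← e2]; ring

lemma hlp_core {ℓ : ℕ} (u v : Fin ℓ → ℝ) (hu : ∀ i, 0 < u i) (hv : ∀ i, 0 < v i)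
    (hmono : ∀ i j : Fin ℓ, i ≤ j → u j ≤ u i) (A B : ℝ) (hA : 0 < A)
    (hyp : ∀ t, t ≤ ℓ → A * ∏ i : Fin ℓ, (if i.val < t then u i else 1)
      ≤ B * ∏ i : Fin ℓ, (if i.val < t then v i else 1)) :
    A * ∏ i : Fin ℓ, (1 + u i) ≤ B * ∏ i : Fin ℓ, (1 + v i) := by
  set ρ : Fin ℓ → ℝ := fun i => u i / v i with hρdef
  have hρ : ∀ i, 0 < ρ i := fun i => div_pos (hu i) (hv i)
  set s : Fin ℓ → ℝ := fun i => u i / (1 + u i) with hsdef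
  have h1u : ∀ i : Fin ℓ, (0:ℝ) < 1 + u i := fun i => by have := hu i; linarith
  have h1v : ∀ i : Fin ℓ, (0:ℝ) < 1 + v i := fun i => by have := hv i; linarith
  have hypρ : ∀ t, t ≤ ℓ → A * ∏ i : Fin ℓ, (if i.val < t then ρ i else 1) ≤ B := by
    intro t ht
    have hvpos : 0 < ∏ i : Fin ℓ, (if i.val < t then v i else 1) := by
      apply Finset.prod_pos; intro i _; split <;> [exact hv i; exact one_pos]
    rw [← mul_le_mul_iff_of_pos_right hvpos]
    calc A * (∏ i : Fin ℓ, (if i.val < t then ρ i else 1))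
          * ∏ i : Fin ℓ, (if i.val < t then v i else 1)
        = A * ∏ i : Fin ℓ, (if i.val < t then u i else 1) := by
          rw [mul_assoc, ← prod_mul_distrib]
          congr 1; apply Finset.prod_congr rfl; intro i _
          split
          · rw [hρdef]; exact div_mul_cancel₀ _ (ne_of_gt (hv i))
          · rw [one_mul]
      _ ≤ B * ∏ i : Fin ℓ, (if i.val < t then v i else 1) := hyp t ht
  have pointwise : ∀ i : Fin ℓ, 1 + u i ≤ (1 + v i) * ρ i ^ (s i) := fun i =>
    amgm_aux (hu i) (hv i)
  have step1 : A * ∏ i : Fin ℓ, (1 + u i)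
      ≤ A * ((∏ i : Fin ℓ, (1 + v i)) * ∏ i : Fin ℓ, ρ i ^ (s i)) := by
    apply mul_le_mul_of_nonneg_left _ hA.le
    rw [← prod_mul_distrib]
    apply Finset.prod_le_prod (fun i _ => (h1u i).le) (fun i _ => pointwise i)
  have step2 : A * ∏ i : Fin ℓ, ρ i ^ (s i) ≤ B := by
    have := lemK ρ hρ A B hA hypρ ℓ le_rfl s
      (fun i _ => by rw [hsdef]; exact (div_pos (hu i) (h1u i)).le)
      (fun i i' hii' _ => by
        have hui : u i' ≤ u i := hmono i i' hii'
        rw [hsdef]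
        rw [div_le_div_iff₀ (h1u i') (h1u i)]
        nlinarith)
      1 zero_le_one le_rfl
      (fun i _ => by
        rw [hsdef]
        rw [div_le_one (h1u i)]; linarith)
    simp only [Fin.is_lt, if_true, Real.rpow_one, Real.rpow_zero, one_mul, sub_self] at this
    exact this
  calc A * ∏ i : Fin ℓ, (1 + u i)
      ≤ (∏ i : Fin ℓ, (1 + v i)) * (A * ∏ i : Fin ℓ, ρ i ^ (s i)) := by
        rw [mul_comm (∏ i : Fin ℓ, (1 + v i))] at *; linarith [step1]
    _ ≤ (∏ i : Fin ℓ, (1 + v i)) * B := by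
        apply mul_le_mul_of_nonneg_left step2
        exact Finset.prod_nonneg (fun i _ => (h1v i).le)
    _ = B * ∏ i : Fin ℓ, (1 + v i) := by ring

lemma card_filter_fin_lt {ℓ t : ℕ} (h : t ≤ ℓ) :
    ((univ : Finset (Fin ℓ)).filter (fun i => i.val < t)).card = t := by
  rw [Finset.card_filter]
  rw [Fin.sum_univ_eq_sum_range (fun k => if k < t then 1 else 0)]
  rw [← Finset.card_filter]
  have : (Finset.range ℓ).filter (fun k => k < t) = Finset.range t := by
    ext a; simp only [Finset.mem_filter, Finset.mem_range]; omega
  rw [this, Finset.card_range]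

lemma AKpos {ℓ : ℕ} (a b c d : Fin ℓ → ℝ) (ha : ∀ k, 0 < a k) (hb : ∀ k, 0 < b k)
    (hc : ∀ k, 0 < c k) (hd : ∀ k, 0 < d k)
    (hyp : ∀ S : Finset (Fin ℓ), ∏ k, (if k ∈ S then b k else a k)
      ≤ ∏ k, (if k.val < S.card then d k else c k)) :
    ∏ k, (a k + b k) ≤ ∏ k, (c k + d k) := by
  set σ := Tuple.sort (fun k => -(b k / a k)) with hσ
  have hmono : Monotone ((fun k => -(b k / a k)) ∘ σ) := Tuple.monotone_sort _
  set u : Fin ℓ → ℝ := fun i => b (σ i) / a (σ i) with hu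
  set v : Fin ℓ → ℝ := fun k => d k / c k with hv
  have hupos : ∀ i, 0 < u i := fun i => div_pos (hb _) (ha _)
  have hvpos : ∀ i, 0 < v i := fun i => div_pos (hd _) (hc _)
  have humono : ∀ i j : Fin ℓ, i ≤ j → u j ≤ u i := by
    intro i j hij
    have := hmono hij
    simp only [Function.comp_apply, neg_le_neg_iff] at this
    exact this
  have hApos : 0 < ∏ k, a k := Finset.prod_pos (fun k _ => ha k)
  have hBpos : 0 < ∏ k, c k := Finset.prod_pos (fun k _ => hc k)
  have key : ∀ t, t ≤ ℓ →
      (∏ k, a k) * ∏ i : Fin ℓ, (if i.val < t then u i else 1)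
        ≤ (∏ k, c k) * ∏ i : Fin ℓ, (if i.val < t then v i else 1) := by
    intro t ht
    set S : Finset (Fin ℓ) := (univ.filter (fun i : Fin ℓ => i.val < t)).image σ with hS
    have hmemS : ∀ i : Fin ℓ, σ i ∈ S ↔ i.val < t := by
      intro i
      constructor
      · intro hi
        rw [hS, Finset.mem_image] at hi
        obtain ⟨i', hi', hii'⟩ := hi
        rw [Finset.mem_filter] at hi'
        have h2 := hi'.2
        rwa [σ.injective hii'] at h2
      · intro hi
        rw [hS, Finset.mem_image]
        exact ⟨i, Finset.mem_filter.2 ⟨Finset.mem_univ _, hi⟩, rfl⟩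
    have hcardS : S.card = t := by
      rw [hS, Finset.card_image_of_injective _ σ.injective, card_filter_fin_lt ht]
    have lhs_eq : (∏ k, a k) * ∏ i : Fin ℓ, (if i.val < t then u i else 1)
        = ∏ k, (if k ∈ S then b k else a k) := by
      rw [← Equiv.prod_comp σ (fun k => if k ∈ S then b k else a k)]
      rw [← Equiv.prod_comp σ a, ← prod_mul_distrib]
      apply Finset.prod_congr rfl
      intro i _
      rw [hu]; dsimp only
      simp only [hmemS i]
      split
      · rw [mul_comm, div_mul_cancel₀ _ (ne_of_gt (ha _))]
      · rw [mul_one]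
    have rhs_eq : (∏ k, c k) * ∏ i : Fin ℓ, (if i.val < t then v i else 1)
        = ∏ k, (if k.val < t then d k else c k) := by
      rw [← prod_mul_distrib]
      apply Finset.prod_congr rfl
      intro i _
      rw [hv]; dsimp only
      split
      · rw [mul_comm, div_mul_cancel₀ _ (ne_of_gt (hc _))]
      · rw [mul_one]
    rw [lhs_eq, rhs_eq]
    have := hyp S
    rwa [hcardS] at this
  have main := hlp_core u v hupos hvpos humono _ _ hApos key
  calc ∏ k, (a k + b k) = (∏ k, a k) * ∏ i : Fin ℓ, (1 + u i) := by
        rw [← Equiv.prod_comp σ (fun k => a k + b k), ← Equiv.prod_comp σ a, ← prod_mul_distrib]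
        apply Finset.prod_congr rfl
        intro i _
        rw [hu]; dsimp only
        rw [mul_add, mul_one, mul_comm (a (σ i)), div_mul_cancel₀ _ (ne_of_gt (ha _))]
    _ ≤ (∏ k, c k) * ∏ i : Fin ℓ, (1 + v i) := main
    _ = ∏ k, (c k + d k) := by
        rw [← prod_mul_distrib]
        apply Finset.prod_congr rfl
        intro i _
        rw [hv]; dsimp only
        rw [mul_add, mul_one, mul_comm (c i), div_mul_cancel₀ _ (ne_of_gt (hc _))]

lemma prod_pert_up {ℓ : ℕ} (x : Fin ℓ → ℝ) (M : ℝ) (hM : 1 ≤ M)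
    (hx0 : ∀ k, 0 ≤ x k) (hxM : ∀ k, x k ≤ M) {ε : ℝ} (hε0 : 0 ≤ ε) (hε1 : ε ≤ 1)
    (s : Finset (Fin ℓ)) :
    ∏ k ∈ s, (x k + ε) ≤ (∏ k ∈ s, x k) + ε * s.card * (M+1) ^ s.card := by
  induction s using Finset.induction with
  | empty => simp
  | @insert i s hi ih =>
    rw [Finset.prod_insert hi, Finset.prod_insert hi, Finset.card_insert_of_notMem hi]
    have hpx : 0 ≤ ∏ k ∈ s, x k := Finset.prod_nonneg (fun k _ => hx0 k)
    have hps : ∏ k ∈ s, x k ≤ (M+1) ^ s.card := by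
      calc ∏ k ∈ s, x k ≤ ∏ k ∈ s, (M+1) :=
            Finset.prod_le_prod (fun k _ => hx0 k) (fun k _ => by have := hxM k; linarith)
        _ = (M+1) ^ s.card := by rw [Finset.prod_const]
    have hMp : (0:ℝ) < (M+1) ^ s.card := by positivity
    have hcard : (0:ℝ) ≤ (s.card : ℝ) := Nat.cast_nonneg _
    have hpow : ((M:ℝ)+1) ^ (s.card + 1) = (M+1)^s.card * (M+1) := pow_succ _ _
    calc (x i + ε) * ∏ k ∈ s, (x k + ε)
        ≤ (x i + ε) * ((∏ k ∈ s, x k) + ε * s.card * (M+1) ^ s.card) := by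
          apply mul_le_mul_of_nonneg_left ih (by have := hx0 i; linarith)
      _ = x i * ∏ k ∈ s, x k
          + ε * ((∏ k ∈ s, x k) + (x i + ε) * s.card * (M+1)^s.card) := by ring
      _ ≤ x i * ∏ k ∈ s, x k + ε * ((s.card : ℝ) + 1) * (M+1) ^ (s.card + 1) := by
          have h1 : (x i + ε) * s.card * (M+1)^s.card ≤ (M+1) * s.card * (M+1)^s.card := by
            apply mul_le_mul_of_nonneg_right _ hMp.le
            apply mul_le_mul_of_nonneg_right _ hcard
            have := hxM i; linarith
          have h2 : (∏ k ∈ s, x k) ≤ (M+1)^(s.card+1) := by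
            rw [hpow]
            calc (∏ k ∈ s, x k) ≤ (M+1)^s.card := hps
              _ ≤ (M+1)^s.card * (M+1) := by nlinarith
          rw [hpow]
          nlinarith [mul_le_mul_of_nonneg_left (add_le_add h2 (by nlinarith : (x i + ε) * s.card * (M+1)^s.card ≤ (s.card:ℝ) * ((M+1)^s.card * (M+1)))) hε0]
      _ = x i * ∏ k ∈ s, x k + ε * (↑(s.card + 1)) * (M+1) ^ (s.card + 1) := by
          push_cast; ring

lemma prod_pert_low {ℓ : ℕ} (x : Fin ℓ → ℝ) (hx0 : ∀ k, 0 ≤ x k) {η : ℝ} (hη0 : 0 ≤ η)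
    (s : Finset (Fin ℓ)) (hs : s.Nonempty) :
    (∏ k ∈ s, x k) + η ^ s.card ≤ ∏ k ∈ s, (x k + η) := by
  induction hs using Finset.Nonempty.cons_induction with
  | singleton i => simp [pow_one]
  | cons i s hi hs ih =>
    rw [Finset.prod_cons, Finset.prod_cons, Finset.card_cons]
    have hpx : 0 ≤ ∏ k ∈ s, x k := Finset.prod_nonneg (fun k _ => hx0 k)
    have hηc : (0:ℝ) ≤ η ^ s.card := by positivity
    have hxi := hx0 i
    have hpp : 0 ≤ ∏ k ∈ s, (x k + η) := Finset.prod_nonneg (fun k _ => by have := hx0 k; linarith)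
    calc x i * ∏ k ∈ s, x k + η ^ (s.card + 1)
        ≤ (x i + η) * ((∏ k ∈ s, x k) + η ^ s.card) := by
          rw [pow_succ]; nlinarith
      _ ≤ (x i + η) * ∏ k ∈ s, (x k + η) := by
          apply mul_le_mul_of_nonneg_left ih (by linarith)

lemma AK {ℓ : ℕ} (a b c d : Fin ℓ → ℝ) (ha : ∀ k, 0 ≤ a k) (hb : ∀ k, 0 ≤ b k)
    (hc : ∀ k, 0 ≤ c k) (hd : ∀ k, 0 ≤ d k)
    (hyp : ∀ S : Finset (Fin ℓ), ∏ k, (if k ∈ S then b k else a k)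
      ≤ ∏ k, (if k.val < S.card then d k else c k)) :
    ∏ k, (a k + b k) ≤ ∏ k, (c k + d k) := by
  rcases Nat.eq_zero_or_pos ℓ with hℓ | hℓ
  · subst hℓ; simp
  have huniv : (univ : Finset (Fin ℓ)).Nonempty := ⟨⟨0, hℓ⟩, mem_univ _⟩
  set M : ℝ := 1 + ∑ k, (a k + b k + c k + d k) with hM
  have hM1 : 1 ≤ M := by
    rw [hM]
    have : 0 ≤ ∑ k, (a k + b k + c k + d k) :=
      Finset.sum_nonneg (fun k _ => by
        show (0:ℝ) ≤ a k + b k + c k + d k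
        have := ha k; have := hb k; have := hc k; have := hd k; linarith)
    linarith
  have hbound : ∀ k, a k ≤ M ∧ b k ≤ M ∧ c k ≤ M ∧ d k ≤ M := by
    intro k
    have h := Finset.single_le_sum
      (f := fun k => a k + b k + c k + d k)
      (fun k _ => by
        show (0:ℝ) ≤ a k + b k + c k + d k
        have := ha k; have := hb k; have := hc k; have := hd k; linarith)
      (mem_univ k)
    have h' : a k + b k + c k + d k ≤ ∑ x, (a x + b x + c x + d x) := h
    have := ha k; have := hb k; have := hc k; have := hd k
    refine ⟨by rw [hM]; linarith, by rw [hM]; linarith, by rw [hM]; linarith, by rw [hM]; linarith⟩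
  set L : ℝ := ℓ * (2*M+1) ^ ℓ + 1 with hL
  have hL1 : 1 ≤ L := by
    rw [hL]
    have h1 : (0:ℝ) ≤ (ℓ : ℝ) := Nat.cast_nonneg _
    have h2 : (0:ℝ) < (2*M+1) ^ ℓ := by positivity
    nlinarith
  have hL0 : 0 < L := by linarith
  -- it suffices to prove the bound up to arbitrary δ > 0
  by_contra hcon
  push_neg at hcon
  set δ : ℝ := (∏ k, (a k + b k) - ∏ k, (c k + d k)) / 2 with hδ
  have hδ0 : 0 < δ := by rw [hδ]; linarith
  have main : ∏ k, (a k + b k) ≤ ∏ k, (c k + d k) + δ := by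
    set η : ℝ := min (1/2) (δ / (2 * L)) with hη
    have hη0 : 0 < η := by
      rw [hη]; apply lt_min (by norm_num); positivity
    have hη2 : η ≤ 1/2 := min_le_left _ _
    have hηδ : 2 * η * L ≤ δ := by
      have : η ≤ δ / (2 * L) := min_le_right _ _
      calc 2 * η * L ≤ 2 * (δ / (2*L)) * L := by nlinarith
        _ = δ := by field_simp
    set ε : ℝ := η ^ ℓ / L with hε
    have hε0 : 0 < ε := by rw [hε]; positivity
    have hε1 : ε ≤ 1 := by
      rw [hε, div_le_one hL0]
      calc η ^ ℓ ≤ 1 ^ ℓ := pow_le_pow_left₀ hη0.le (by linarith) ℓ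
        _ = 1 := one_pow ℓ
        _ ≤ L := hL1
    have hyp' : ∀ S : Finset (Fin ℓ), ∏ k, (if k ∈ S then b k + ε else a k + ε)
        ≤ ∏ k, (if k.val < S.card then d k + η else c k + η) := by
      intro S
      have e1 : ∀ k, (if k ∈ S then b k + ε else a k + ε) = (if k ∈ S then b k else a k) + ε := by
        intro k; split <;> rfl
      have e2 : ∀ k, (if k.val < S.card then d k + η else c k + η)
          = (if k.val < S.card then d k else c k) + η := by
        intro k; split <;> rfl
      simp only [e1, e2]
      have up := prod_pert_up (fun k => if k ∈ S then b k else a k) M hM1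
        (fun k => by
          show 0 ≤ if k ∈ S then b k else a k
          split <;> [exact hb k; exact ha k])
        (fun k => by
          show (if k ∈ S then b k else a k) ≤ M
          split <;> [exact (hbound k).2.1; exact (hbound k).1])
        hε0.le hε1 univ
      have low := prod_pert_low (fun k => if k.val < S.card then d k else c k)
        (fun k => by
          show 0 ≤ if k.val < S.card then d k else c k
          split <;> [exact hd k; exact hc k]) hη0.le univ huniv
      have hcard : (univ : Finset (Fin ℓ)).card = ℓ := Finset.card_univ.trans (Fintype.card_fin ℓ)
      rw [hcard] at up low
      have hmid : ε * ℓ * (M+1) ^ ℓ ≤ η ^ ℓ := by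
        have h1 : (M+1) ^ ℓ ≤ (2*M+1) ^ ℓ := pow_le_pow_left₀ (by linarith) (by linarith) ℓ
        have h2 : ε * (ℓ * (M+1) ^ ℓ) ≤ ε * L := by
          apply mul_le_mul_of_nonneg_left _ hε0.le
          rw [hL]
          have : (ℓ:ℝ) * (M+1)^ℓ ≤ (ℓ:ℝ) * (2*M+1)^ℓ :=
            mul_le_mul_of_nonneg_left h1 (Nat.cast_nonneg _)
          linarith
        have h3 : ε * L = η ^ ℓ := by rw [hε]; field_simp
        calc ε * ℓ * (M+1)^ℓ = ε * (ℓ * (M+1)^ℓ) := by ring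
          _ ≤ ε * L := h2
          _ = η ^ ℓ := h3
      calc ∏ k, ((if k ∈ S then b k else a k) + ε)
          ≤ (∏ k, (if k ∈ S then b k else a k)) + ε * ℓ * (M+1) ^ ℓ := up
        _ ≤ (∏ k, (if k.val < S.card then d k else c k)) + η ^ ℓ := by
            have := hyp S; linarith
        _ ≤ ∏ k, ((if k.val < S.card then d k else c k) + η) := low
    have pos := AKpos (fun k => a k + ε) (fun k => b k + ε) (fun k => c k + η) (fun k => d k + η)
      (fun k => by show 0 < a k + ε; have := ha k; linarith)
      (fun k => by show 0 < b k + ε; have := hb k; linarith)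
      (fun k => by show 0 < c k + η; have := hc k; linarith)
      (fun k => by show 0 < d k + η; have := hd k; linarith)
      hyp'
    have step1 : ∏ k, (a k + b k) ≤ ∏ k, (a k + ε + (b k + ε)) := by
      apply Finset.prod_le_prod (fun k => by have := ha k; have := hb k; intro _; linarith)
      intro k _; linarith
    have step2 : ∏ k, (c k + η + (d k + η)) ≤ ∏ k, (c k + d k) + δ := by
      have e3 : ∀ k, c k + η + (d k + η) = (c k + d k) + 2*η := fun k => by ring
      simp only [e3]
      have up2 := prod_pert_up (fun k => c k + d k) (2*M) (by linarith)
        (fun k => by show 0 ≤ c k + d k; have := hc k; have := hd k; linarith)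
        (fun k => by show c k + d k ≤ 2*M; have := (hbound k).2.2.1; have := (hbound k).2.2.2; linarith)
        (by linarith : (0:ℝ) ≤ 2*η) (by linarith : 2*η ≤ 1) univ
      have hcard : (univ : Finset (Fin ℓ)).card = ℓ := Finset.card_univ.trans (Fintype.card_fin ℓ)
      rw [hcard] at up2
      have : 2*η*ℓ*(2*M+1)^ℓ ≤ δ := by
        have h4 : (0:ℝ) < (2*M+1)^ℓ := by positivity
        have h5 : (ℓ:ℝ) * (2*M+1)^ℓ ≤ L := by rw [hL]; linarith
        calc 2*η*ℓ*(2*M+1)^ℓ = 2*η*(ℓ*(2*M+1)^ℓ) := by ring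
          _ ≤ 2*η*L := by nlinarith
          _ = 2*η*L := rfl
          _ ≤ δ := by linarith [hηδ]
      linarith
    calc ∏ k, (a k + b k) ≤ ∏ k, (a k + ε + (b k + ε)) := step1
      _ ≤ ∏ k, (c k + η + (d k + η)) := pos
      _ ≤ ∏ k, (c k + d k) + δ := step2
  rw [hδ] at main
  linarith

/-- the `k`-th "sorted" set of a tuple of sets: elements appearing in at least `k+1` of them. -/
def sortTup {ℓ n : ℕ} (x : Fin ℓ → Finset (Fin n)) (k : Fin ℓ) : Finset (Fin n) :=
  univ.filter (fun i => k.val + 1 ≤ (univ.filter (fun j => i ∈ x j)).card)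

lemma mem_sortTup {ℓ n : ℕ} (x : Fin ℓ → Finset (Fin n)) (k : Fin ℓ) (i : Fin n) :
    i ∈ sortTup x k ↔ k.val + 1 ≤ (univ.filter (fun j => i ∈ x j)).card := by
  simp [sortTup]

lemma sortTup_insert {ℓ n : ℕ} (x : Fin ℓ → Finset (Fin n)) (j : Fin n)
    (hj : ∀ k, j ∉ x k) (S : Finset (Fin ℓ)) (k : Fin ℓ) :
    sortTup (fun k' => if k' ∈ S then insert j (x k') else x k') k
      = if k.val < S.card then insert j (sortTup x k) else sortTup x k := by
  have hcnt : ∀ i : Fin n, i ≠ j →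
      (univ.filter (fun j' => i ∈ (if j' ∈ S then insert j (x j') else x j'))).card
        = (univ.filter (fun j' => i ∈ x j')).card := by
    intro i hij
    congr 1
    apply Finset.filter_congr
    intro k' _
    split
    · simp [Finset.mem_insert, hij]
    · rfl
  have hcntj : (univ.filter (fun j' => j ∈ (if j' ∈ S then insert j (x j') else x j'))).card
      = S.card := by
    congr 1
    ext k'
    simp only [Finset.mem_filter, Finset.mem_univ, true_and]
    split
    · simp_all [Finset.mem_insert]
    · simp_all [hj k']
  ext i
  by_cases hij : i = j
  · subst hij
    rw [mem_sortTup, hcntj]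
    have hjnot : i ∉ sortTup x k := by
      rw [mem_sortTup]
      have : (univ.filter (fun j' => i ∈ x j')).card = 0 := by
        rw [Finset.card_eq_zero]
        apply Finset.filter_eq_empty_iff.2
        intro k' _
        exact hj k'
      omega
    split
    · constructor
      · intro _; exact Finset.mem_insert_self _ _
      · intro _; omega
    · constructor
      · intro h; omega
      · intro h; exact absurd h hjnot
  · rw [mem_sortTup, hcnt i hij]
    split
    · rw [Finset.mem_insert]
      simp only [hij, false_or]
      rw [mem_sortTup]
    · rw [mem_sortTup]

lemma sortTup_empty {ℓ n : ℕ} (k : Fin ℓ) :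
    sortTup (fun _ : Fin ℓ => (∅ : Finset (Fin n))) k = ∅ := by
  ext i
  simp [mem_sortTup]

theorem collapse_thm (ℓ n : ℕ) (U : Finset (Fin n)) :
    ∀ (f g : Fin ℓ → Finset (Fin n) → ℝ), (∀ k y, 0 ≤ f k y) → (∀ k y, 0 ≤ g k y) →
    (∀ x : Fin ℓ → Finset (Fin n), (∀ k, x k ⊆ U) →
      ∏ k, f k (x k) ≤ ∏ k, g k (sortTup x k)) →
    ∏ k, (∑ y ∈ U.powerset, f k y) ≤ ∏ k, (∑ y ∈ U.powerset, g k y) := by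
  induction U using Finset.induction_on with
  | empty =>
    intro f g hf hg hyp
    simp only [Finset.powerset_empty, Finset.sum_singleton]
    have := hyp (fun _ => ∅) (fun k => Finset.Subset.refl _)
    simpa [sortTup_empty] using this
  | @insert j U' hj ih =>
    intro f g hf hg hyp
    set F : Fin ℓ → Finset (Fin n) → ℝ := fun k y => f k y + f k (insert j y) with hF
    set G : Fin ℓ → Finset (Fin n) → ℝ := fun k y => g k y + g k (insert j y) with hG
    have hF0 : ∀ k y, 0 ≤ F k y := fun k y => add_nonneg (hf k y) (hf k _)
    have hG0 : ∀ k y, 0 ≤ G k y := fun k y => add_nonneg (hg k y) (hg k _)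
    have hyp' : ∀ x : Fin ℓ → Finset (Fin n), (∀ k, x k ⊆ U') →
        ∏ k, F k (x k) ≤ ∏ k, G k (sortTup x k) := by
      intro x hx
      have hjx : ∀ k, j ∉ x k := fun k hmem => hj (hx k hmem)
      apply AK (fun k => f k (x k)) (fun k => f k (insert j (x k)))
        (fun k => g k (sortTup x k)) (fun k => g k (insert j (sortTup x k)))
        (fun k => hf k _) (fun k => hf k _) (fun k => hg k _) (fun k => hg k _)
      intro S
      have hx' : ∀ k, (fun k' => if k' ∈ S then insert j (x k') else x k') k ⊆ insert j U' := by
        intro k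
        dsimp only
        split
        · exact Finset.insert_subset_insert _ (hx k)
        · exact (hx k).trans (Finset.subset_insert _ _)
      have main := hyp (fun k' => if k' ∈ S then insert j (x k') else x k') hx'
      have lhs_eq : ∏ k, f k (if k ∈ S then insert j (x k) else x k)
          = ∏ k, (if k ∈ S then f k (insert j (x k)) else f k (x k)) := by
        apply Finset.prod_congr rfl
        intro k _
        exact apply_ite (f k) _ _ _
      have rhs_eq : ∏ k, g k (sortTup (fun k' => if k' ∈ S then insert j (x k') else x k') k)
          = ∏ k, (if k.val < S.card then g k (insert j (sortTup x k)) else g k (sortTup x k)) := by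
        apply Finset.prod_congr rfl
        intro k _
        rw [sortTup_insert x j hjx S k]
        exact apply_ite (g k) _ _ _
      rw [lhs_eq, rhs_eq] at main
      exact main
    have ihFG := ih F G hF0 hG0 hyp'
    have sumF : ∀ k, ∑ y ∈ U'.powerset, F k y = ∑ y ∈ (insert j U').powerset, f k y := by
      intro k
      rw [Finset.sum_powerset_insert hj, hF]
      rw [Finset.sum_add_distrib]
    have sumG : ∀ k, ∑ y ∈ U'.powerset, G k y = ∑ y ∈ (insert j U').powerset, g k y := by
      intro k
      rw [Finset.sum_powerset_insert hj, hG]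
      rw [Finset.sum_add_distrib]
    calc ∏ k, (∑ y ∈ (insert j U').powerset, f k y)
        = ∏ k, (∑ y ∈ U'.powerset, F k y) := by
          apply Finset.prod_congr rfl; intro k _; rw [sumF k]
      _ ≤ ∏ k, (∑ y ∈ U'.powerset, G k y) := ihFG
      _ = ∏ k, (∑ y ∈ (insert j U').powerset, g k y) := by
          apply Finset.prod_congr rfl; intro k _; rw [sumG k]

lemma mem_finset_inf {α ι : Type*} [DecidableEq α] [Fintype α] {s : Finset ι}
    {f : ι → Finset α} {a : α} : a ∈ s.inf f ↔ ∀ i ∈ s, a ∈ f i := by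
  induction s using Finset.cons_induction with
  | empty => simp [Finset.inf_empty, Finset.top_eq_univ]
  | cons i s hi ih => simp [Finset.inf_cons, ih]

lemma sum_card_sortTup {ℓ n : ℕ} (x : Fin ℓ → Finset (Fin n)) :
    ∑ k, (sortTup x k).card = ∑ k, (x k).card := by
  have h1 : ∀ k : Fin ℓ, (sortTup x k).card
      = ∑ i : Fin n, (if k.val + 1 ≤ (univ.filter (fun j => i ∈ x j)).card then 1 else 0) := by
    intro k; rw [sortTup, Finset.card_filter]
  have h2 : ∀ k : Fin ℓ, (x k).card = ∑ i : Fin n, (if i ∈ x k then 1 else 0) := by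
    intro k
    conv_lhs => rw [← Finset.filter_univ_mem (x k)]
    rw [Finset.card_filter]
  rw [Finset.sum_congr rfl (fun k _ => h1 k), Finset.sum_congr rfl (fun k _ => h2 k)]
  rw [Finset.sum_comm]
  conv_rhs => rw [Finset.sum_comm]
  apply Finset.sum_congr rfl
  intro i _
  set c := (univ.filter (fun j => i ∈ x j)).card with hc
  have hcl : c ≤ ℓ := by
    rw [hc]
    exact le_trans (Finset.card_filter_le _ _) (by simp)
  have e1 : ∑ k : Fin ℓ, (if k.val + 1 ≤ c then 1 else 0)
      = ((univ : Finset (Fin ℓ)).filter (fun k => k.val < c)).card := by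
    rw [Finset.card_filter]
    apply Finset.sum_congr rfl
    intro k _
    by_cases h : k.val + 1 ≤ c
    · rw [if_pos h, if_pos (by omega)]
    · rw [if_neg h, if_neg (by omega)]
  have e2 : ∑ k : Fin ℓ, (if i ∈ x k then 1 else 0)
      = ((univ : Finset (Fin ℓ)).filter (fun k => i ∈ x k)).card := by
    rw [Finset.card_filter]
  rw [e1, e2, card_filter_fin_lt hcl, hc]

lemma sortTup_mem_famJoin {ℓ n : ℕ} (𝓐 : Fin ℓ → Finset (Finset (Fin n)))
    (x : Fin ℓ → Finset (Fin n)) (hx : ∀ k, x k ∈ 𝓐 k) (k : Fin ℓ) :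
    sortTup x k ∈ famJoin ((univ : Finset (Fin ℓ)).powersetCard (k.val + 1))
      (fun S => famMeet S 𝓐) := by
  classical
  simp only [famJoin, Finset.mem_filter, Finset.mem_univ, true_and]
  refine ⟨fun S => S.inf x, ?_, ?_⟩
  · intro S _
    simp only [famMeet, Finset.mem_filter, Finset.mem_univ, true_and]
    exact ⟨x, fun t _ => hx t, rfl⟩
  · ext i
    rw [mem_sortTup, Finset.mem_sup]
    constructor
    · intro h
      obtain ⟨T, hT1, hT2⟩ := Finset.exists_subset_card_eq h
      refine ⟨T, ?_, ?_⟩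
      · rw [Finset.mem_powersetCard]
        exact ⟨Finset.subset_univ _, hT2⟩
      · rw [mem_finset_inf]
        intro t ht
        exact (Finset.mem_filter.1 (hT1 ht)).2
    · rintro ⟨S, hS, hi⟩
      rw [Finset.mem_powersetCard] at hS
      rw [mem_finset_inf] at hi
      have hsub : S ⊆ univ.filter (fun j => i ∈ x j) := by
        intro t ht
        rw [Finset.mem_filter]
        exact ⟨Finset.mem_univ _, hi t ht⟩
      calc k.val + 1 = S.card := hS.2.symm
        _ ≤ _ := Finset.card_le_card hsub

/-- Rinott–Saks correlation inequality for the `p`-biased measure: for `0 ≤ p ≤ 1` and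
arbitrary families `𝓐 1, …, 𝓐 ℓ` of subsets of `[n]`,
`∏_{k=1}^ℓ μ_p(𝓐 k) ≤ ∏_{k=1}^ℓ μ_p( ⋁_{S ∈ C([ℓ],k)} ( ⋀_{s ∈ S} 𝓐 s ) )`. -/
theorem statement5 (n ℓ : ℕ) (hn : 1 ≤ n) (hℓ : 1 ≤ ℓ) (p : ℝ) (hp0 : 0 ≤ p) (hp1 : p ≤ 1)
    (𝓐 : Fin ℓ → Finset (Finset (Fin n))) :
    ∏ k : Fin ℓ, biasedMeasure n p (𝓐 k) ≤
      ∏ k : Fin ℓ,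
        biasedMeasure n p
          (famJoin ((Finset.univ : Finset (Fin ℓ)).powersetCard (k.val + 1))
            (fun S => famMeet S 𝓐)) := by
  classical
  set μ : Finset (Fin n) → ℝ := fun y => p ^ y.card * (1 - p) ^ (n - y.card) with hμ
  have hμ0 : ∀ y, 0 ≤ μ y := fun y =>
    mul_nonneg (pow_nonneg hp0 _) (pow_nonneg (by linarith) _)
  set 𝓑 : Fin ℓ → Finset (Finset (Fin n)) := fun k =>
    famJoin ((Finset.univ : Finset (Fin ℓ)).powersetCard (k.val + 1)) (fun S => famMeet S 𝓐)
    with h𝓑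
  set f : Fin ℓ → Finset (Fin n) → ℝ := fun k y => if y ∈ 𝓐 k then μ y else 0 with hf
  set g : Fin ℓ → Finset (Fin n) → ℝ := fun k y => if y ∈ 𝓑 k then μ y else 0 with hg
  have hf0 : ∀ k y, 0 ≤ f k y := fun k y => by
    rw [hf]; dsimp only; split <;> [exact hμ0 y; exact le_refl 0]
  have hg0 : ∀ k y, 0 ≤ g k y := fun k y => by
    rw [hg]; dsimp only; split <;> [exact hμ0 y; exact le_refl 0]
  -- the pointwise hypothesis
  have hyp : ∀ x : Fin ℓ → Finset (Fin n), (∀ k, x k ⊆ univ) →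
      ∏ k, f k (x k) ≤ ∏ k, g k (sortTup x k) := by
    intro x _
    by_cases hall : ∀ k, x k ∈ 𝓐 k
    · have l1 : ∏ k, f k (x k) = ∏ k, μ (x k) := by
        apply Finset.prod_congr rfl
        intro k _
        rw [hf]; dsimp only; rw [if_pos (hall k)]
      have l2 : ∏ k, g k (sortTup x k) = ∏ k, μ (sortTup x k) := by
        apply Finset.prod_congr rfl
        intro k _
        rw [hg]; dsimp only
        rw [if_pos]
        exact sortTup_mem_famJoin 𝓐 x hall k
      have cardle : ∀ y : Finset (Fin n), y.card ≤ n :=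
        fun y => le_trans (Finset.card_le_univ y) (by simp)
      have prodμ : ∀ e : Fin ℓ → Finset (Fin n),
          ∏ k, μ (e k) = p ^ (∑ k, (e k).card) * (1-p) ^ (∑ k, (n - (e k).card)) := by
        intro e
        rw [hμ]; dsimp only
        rw [Finset.prod_mul_distrib, Finset.prod_pow_eq_pow_sum, Finset.prod_pow_eq_pow_sum]
      have hsum : ∑ k, (sortTup x k).card = ∑ k, (x k).card := sum_card_sortTup x
      have hsum2 : ∑ k, (n - (sortTup x k).card) = ∑ k, (n - (x k).card) := by
        have a1 : ∑ k, (n - (sortTup x k).card) + ∑ k, (sortTup x k).card = ℓ * n := by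
          rw [← Finset.sum_add_distrib]
          calc ∑ k : Fin ℓ, (n - (sortTup x k).card + (sortTup x k).card)
              = ∑ _k : Fin ℓ, n := by
                apply Finset.sum_congr rfl
                intro k _
                exact Nat.sub_add_cancel (cardle _)
            _ = ℓ * n := by rw [Finset.sum_const, Finset.card_univ, Fintype.card_fin, smul_eq_mul]
        have a2 : ∑ k, (n - (x k).card) + ∑ k, (x k).card = ℓ * n := by
          rw [← Finset.sum_add_distrib]
          calc ∑ k : Fin ℓ, (n - (x k).card + (x k).card)
              = ∑ _k : Fin ℓ, n := by
                apply Finset.sum_congr rfl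
                intro k _
                exact Nat.sub_add_cancel (cardle _)
            _ = ℓ * n := by rw [Finset.sum_const, Finset.card_univ, Fintype.card_fin, smul_eq_mul]
        omega
      rw [l1, l2, prodμ, prodμ, hsum, hsum2]
    · push_neg at hall
      obtain ⟨k0, hk0⟩ := hall
      have : ∏ k, f k (x k) = 0 := by
        apply Finset.prod_eq_zero (Finset.mem_univ k0)
        rw [hf]; dsimp only; rw [if_neg hk0]
      rw [this]
      exact Finset.prod_nonneg (fun k _ => hg0 k _)
  have main := collapse_thm ℓ n univ f g hf0 hg0 hyp
  have sumf : ∀ (𝓕 : Finset (Finset (Fin n))),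
      ∑ y ∈ (univ : Finset (Fin n)).powerset, (if y ∈ 𝓕 then μ y else 0) = biasedMeasure n p 𝓕 := by
    intro 𝓕
    rw [← Finset.sum_filter]
    have : (univ : Finset (Fin n)).powerset.filter (· ∈ 𝓕) = 𝓕 := by
      ext y
      simp [Finset.mem_powerset, Finset.subset_univ]
    rw [this, biasedMeasure, hμ]
  calc ∏ k : Fin ℓ, biasedMeasure n p (𝓐 k)
      = ∏ k, (∑ y ∈ (univ : Finset (Fin n)).powerset, f k y) := by
        apply Finset.prod_congr rfl
        intro k _
        rw [hf]; dsimp only; rw [sumf (𝓐 k)]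
    _ ≤ ∏ k, (∑ y ∈ (univ : Finset (Fin n)).powerset, g k y) := main
    _ = ∏ k : Fin ℓ, biasedMeasure n p (𝓑 k) := by
        apply Finset.prod_congr rfl
        intro k _
        rw [hg]; dsimp only; rw [sumf (𝓑 k)]
end

section
/- Let n, ℓ be integers with ℓ ≥ 2 and n ≥ 1, and let 𝓕_1, …, 𝓕_ℓ ⊆ 2^{[n]} be families satisfying the overlapping property (i.e. the 𝐦-overlapping property with 𝐦_S = 1 for every pair S) that are maximal with respect to this property. Then: (i) for every k ∈ [ℓ], a set K ⊆ [n] belongs to 𝓕_k if and only if every two-element subset {i, j} of K belongs to 𝓕_k; (ii) the empty set and every singleton {i}, i ∈ [n], belong to every 𝓕_k; and (iii) for every two-element subset {i, j} of [n] there is exactly one k' ∈ [ℓ] such that {i, j} ∈ 𝓕_{k'}. -/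
/-- A collection of families with the `m`-overlapping property is maximal if no set can be
added to any of the families without violating the property. -/
def MaximalMOverlap (n ℓ : ℕ) (m : Fin ℓ → Fin ℓ → ℕ)
    (𝓕 : Fin ℓ → Finset (Finset (Fin n))) : Prop :=
  MOverlap n ℓ m 𝓕 ∧
    ∀ k : Fin ℓ, ∀ X : Finset (Fin n),
      MOverlap n ℓ m (Function.update 𝓕 k (insert X (𝓕 k))) → X ∈ 𝓕 k

lemma insert_ok {n ℓ : ℕ} {𝓕 : Fin ℓ → Finset (Finset (Fin n))}
    (hO : MOverlap n ℓ (fun _ _ => 1) 𝓕) (k : Fin ℓ) (X : Finset (Fin n))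
    (h : ∀ k' : Fin ℓ, k' ≠ k → ∀ F ∈ 𝓕 k', (X ∩ F).card ≤ 1) :
    MOverlap n ℓ (fun _ _ => 1) (Function.update 𝓕 k (insert X (𝓕 k))) := by
  intro k₁ k₂ hne F₁ hF₁ F₂ hF₂
  by_cases h1 : k₁ = k
  · subst h1
    rw [Function.update_self] at hF₁
    rw [Function.update_of_ne hne.symm] at hF₂
    rcases Finset.mem_insert.mp hF₁ with rfl | hF₁
    · exact h k₂ hne.symm F₂ hF₂
    · exact hO k₁ k₂ hne F₁ hF₁ F₂ hF₂
  · rw [Function.update_of_ne h1] at hF₁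
    by_cases h2 : k₂ = k
    · subst h2
      rw [Function.update_self] at hF₂
      rcases Finset.mem_insert.mp hF₂ with rfl | hF₂
      · rw [Finset.inter_comm]; exact h k₁ hne F₁ hF₁
      · exact hO k₁ k₂ hne F₁ hF₁ F₂ hF₂
    · rw [Function.update_of_ne h2] at hF₂
      exact hO k₁ k₂ hne F₁ hF₁ F₂ hF₂

/-- For a maximal collection `𝓕 1, …, 𝓕 ℓ` with the overlapping property (all entries of `m`
equal to `1`): (i) a set `K` belongs to `𝓕 k` iff all its two-element subsets do; (ii) the
empty set and all singletons belong to every `𝓕 k`; (iii) every two-element subset of `[n]`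
belongs to exactly one of the families. -/
theorem statement7 (n ℓ : ℕ) (hn : 1 ≤ n) (hℓ : 2 ≤ ℓ)
    (𝓕 : Fin ℓ → Finset (Finset (Fin n)))
    (hmax : MaximalMOverlap n ℓ (fun _ _ => 1) 𝓕) :
    (∀ k : Fin ℓ, ∀ K : Finset (Fin n),
        K ∈ 𝓕 k ↔ ∀ e : Finset (Fin n), e ⊆ K → e.card = 2 → e ∈ 𝓕 k) ∧
    (∀ k : Fin ℓ, (∅ : Finset (Fin n)) ∈ 𝓕 k ∧ ∀ i : Fin n, {i} ∈ 𝓕 k) ∧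
    (∀ e : Finset (Fin n), e.card = 2 → ∃! k : Fin ℓ, e ∈ 𝓕 k) := by
  obtain ⟨hO, hM⟩ := hmax
  -- forward direction of (i)
  have fwd : ∀ k : Fin ℓ, ∀ K : Finset (Fin n), K ∈ 𝓕 k →
      ∀ e : Finset (Fin n), e ⊆ K → e.card = 2 → e ∈ 𝓕 k := by
    intro k K hK e heK _
    refine hM k e (insert_ok hO k e ?_)
    intro k' hk' F hF
    calc (e ∩ F).card ≤ (K ∩ F).card :=
          Finset.card_le_card (Finset.inter_subset_inter_right heK)
      _ ≤ 1 := hO k k' (fun h => hk' h.symm) K hK F hF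
  -- backward direction of (i)
  have bwd : ∀ k : Fin ℓ, ∀ K : Finset (Fin n),
      (∀ e : Finset (Fin n), e ⊆ K → e.card = 2 → e ∈ 𝓕 k) → K ∈ 𝓕 k := by
    intro k K hall
    refine hM k K (insert_ok hO k K ?_)
    intro k' hk' F hF
    by_contra hcard
    push_neg at hcard
    obtain ⟨e, heKF, he2⟩ := Finset.exists_subset_card_eq (hcard : 2 ≤ (K ∩ F).card)
    have heK : e ⊆ K := heKF.trans Finset.inter_subset_left
    have heF : e ⊆ F := heKF.trans Finset.inter_subset_right
    have hek : e ∈ 𝓕 k := hall e heK he2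
    have hle : (e ∩ F).card ≤ 1 := hO k k' (fun h => hk' h.symm) e hek F hF
    rw [Finset.inter_eq_left.mpr heF, he2] at hle
    omega
  -- small sets
  have small : ∀ k : Fin ℓ, ∀ X : Finset (Fin n), X.card ≤ 1 → X ∈ 𝓕 k := by
    intro k X hX
    refine hM k X (insert_ok hO k X ?_)
    intro k' _ F _
    exact le_trans (Finset.card_le_card Finset.inter_subset_left) hX
  refine ⟨fun k K => ⟨fwd k K, bwd k K⟩,
    fun k => ⟨small k ∅ (by simp), fun i => small k {i} (by simp)⟩, ?_⟩
  intro e he2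
  have huniq : ∀ k₁ k₂ : Fin ℓ, e ∈ 𝓕 k₁ → e ∈ 𝓕 k₂ → k₁ = k₂ := by
    intro k₁ k₂ h1 h2
    by_contra hne
    have hle : (e ∩ e).card ≤ 1 := hO k₁ k₂ hne e h1 e h2
    rw [Finset.inter_self, he2] at hle
    omega
  have hex : ∃ k : Fin ℓ, e ∈ 𝓕 k := by
    obtain ⟨k0, -⟩ : ∃ k : Fin ℓ, True := ⟨⟨0, by omega⟩, trivial⟩
    by_cases hins : MOverlap n ℓ (fun _ _ => 1) (Function.update 𝓕 k0 (insert e (𝓕 k0)))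
    · exact ⟨k0, hM k0 e hins⟩
    · unfold MOverlap at hins
      push_neg at hins
      obtain ⟨k₁, k₂, hne, F₁, hF₁, F₂, hF₂, hcard⟩ := hins
      have hcard' : 2 ≤ (F₁ ∩ F₂).card := hcard
      -- helper: if e essentially intersects F ∈ 𝓕 k', then e ∈ 𝓕 k'
      have key : ∀ k' : Fin ℓ, ∀ F ∈ 𝓕 k', 2 ≤ (e ∩ F).card → ∃ k, e ∈ 𝓕 k := by
        intro k' F hF hc
        have hsub : e ∩ F ⊆ e := Finset.inter_subset_left
        have : e = e ∩ F := Finset.eq_of_subset_of_card_le hsub (by omega) |>.symm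
        have heF : e ⊆ F := this ▸ Finset.inter_subset_right
        exact ⟨k', fwd k' F hF e heF he2⟩
      by_cases h1 : k₁ = k0
      · rw [h1, Function.update_self] at hF₁
        have h2 : k₂ ≠ k0 := fun h => hne (h1.trans h.symm)
        rw [Function.update_of_ne h2] at hF₂
        rcases Finset.mem_insert.mp hF₁ with rfl | hF₁
        · exact key k₂ F₂ hF₂ (by omega)
        · have hle : (F₁ ∩ F₂).card ≤ 1 := hO k0 k₂ (h1 ▸ hne) F₁ hF₁ F₂ hF₂
          omega
      · rw [Function.update_of_ne h1] at hF₁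
        by_cases h2 : k₂ = k0
        · rw [h2, Function.update_self] at hF₂
          rcases Finset.mem_insert.mp hF₂ with rfl | hF₂
          · exact key k₁ F₁ hF₁ (by rw [Finset.inter_comm] at hcard'; exact hcard')
          · have hle : (F₁ ∩ F₂).card ≤ 1 := hO k₁ k0 (h2 ▸ hne) F₁ hF₁ F₂ hF₂
            omega
        · rw [Function.update_of_ne h2] at hF₂
          have hle : (F₁ ∩ F₂).card ≤ 1 := hO k₁ k₂ hne F₁ hF₁ F₂ hF₂
          omega
  obtain ⟨k, hk⟩ := hex
  exact ⟨k, hk, fun k' hk' => huniq k' k hk' hk⟩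
end

section
/- Let n, ℓ be positive integers with ℓ ≥ 2, let 𝐦 be a vector of non-negative integers indexed by unordered pairs of distinct elements of [ℓ], and let 𝓕_1, …, 𝓕_ℓ ⊆ 2^{[n]} be a maximal collection of families satisfying the 𝐦-overlapping property. For each k ∈ [ℓ], let H_k be the hypergraph on vertex set [n] whose edge set is ⋃_{k' ∈ [ℓ] \ {k}} { G ∈ 𝓕_{k'} : |G| = 𝐦_{k,k'} + 1 }. Then 𝓕_k consists exactly of the independent sets of H_k, i.e., F ∈ 𝓕_k if and only if F contains no edge of H_k. -/
/-- For a maximal collection `𝓕 1, …, 𝓕 ℓ` with the `m`-overlapping property, each `𝓕 k`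
consists exactly of the independent sets of the hypergraph `H_k` on `[n]` whose edges are the
sets `G ∈ 𝓕 k'` of size `m k k' + 1` for `k' ≠ k`: `F ∈ 𝓕 k` iff `F` contains no such edge. -/
theorem statement8 (n ℓ : ℕ) (hn : 1 ≤ n) (hℓ : 2 ≤ ℓ)
    (m : Fin ℓ → Fin ℓ → ℕ) (hsym : ∀ i j : Fin ℓ, m i j = m j i)
    (𝓕 : Fin ℓ → Finset (Finset (Fin n)))
    (hmax : MaximalMOverlap n ℓ m 𝓕) :
    ∀ k : Fin ℓ, ∀ F : Finset (Fin n),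
      F ∈ 𝓕 k ↔
        ∀ k' : Fin ℓ, k' ≠ k → ∀ G ∈ 𝓕 k', G.card = m k k' + 1 → ¬ G ⊆ F := by
  obtain ⟨hov, hmax'⟩ := hmax
  -- downward closure
  have hdown : ∀ k : Fin ℓ, ∀ G ∈ 𝓕 k, ∀ G' ⊆ G, G' ∈ 𝓕 k := by
    intro k G hG G' hsub
    apply hmax' k G'
    intro k₁ k₂ hne F₁ hF₁ F₂ hF₂
    by_cases h1 : k₁ = k <;> by_cases h2 : k₂ = k
    · exact absurd (h1.trans h2.symm) hne
    · subst h1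
      rw [Function.update_self, Finset.mem_insert] at hF₁
      rw [Function.update_of_ne h2] at hF₂
      rcases hF₁ with rfl | hF₁
      · calc (F₁ ∩ F₂).card ≤ (G ∩ F₂).card :=
            Finset.card_le_card (Finset.inter_subset_inter hsub le_rfl)
          _ ≤ m k₁ k₂ := hov k₁ k₂ hne G hG F₂ hF₂
      · exact hov _ _ hne F₁ hF₁ F₂ hF₂
    · subst h2
      rw [Function.update_self, Finset.mem_insert] at hF₂
      rw [Function.update_of_ne h1] at hF₁
      rcases hF₂ with rfl | hF₂
      · calc (F₁ ∩ F₂).card ≤ (F₁ ∩ G).card :=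
            Finset.card_le_card (Finset.inter_subset_inter le_rfl hsub)
          _ ≤ m k₁ k₂ := hov k₁ k₂ hne F₁ hF₁ G hG
      · exact hov _ _ hne F₁ hF₁ F₂ hF₂
    · rw [Function.update_of_ne h1] at hF₁
      rw [Function.update_of_ne h2] at hF₂
      exact hov _ _ hne F₁ hF₁ F₂ hF₂
  intro k F
  constructor
  · intro hF k' hk' G hG hcard hsub
    have h1 := hov k' k hk' G hG F hF
    rw [Finset.inter_eq_left.mpr hsub, hcard, hsym k k'] at h1
    omega
  · intro h
    apply hmax' k F
    intro k₁ k₂ hne F₁ hF₁ F₂ hF₂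
    have key : ∀ k₂ : Fin ℓ, k₂ ≠ k → ∀ F₂ ∈ 𝓕 k₂, (F ∩ F₂).card ≤ m k k₂ := by
      intro k₂ hk₂ F₂ hF₂
      by_contra hlt
      push_neg at hlt
      obtain ⟨G', hG'sub, hG'card⟩ := Finset.exists_subset_card_eq hlt
      exact h k₂ hk₂ G' (hdown k₂ F₂ hF₂ G' (hG'sub.trans Finset.inter_subset_right))
        hG'card (hG'sub.trans Finset.inter_subset_left)
    by_cases h1 : k₁ = k <;> by_cases h2 : k₂ = k
    · exact absurd (h1.trans h2.symm) hne
    · subst h1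
      rw [Function.update_self, Finset.mem_insert] at hF₁
      rw [Function.update_of_ne h2] at hF₂
      rcases hF₁ with rfl | hF₁
      · exact key k₂ h2 F₂ hF₂
      · exact hov _ _ hne F₁ hF₁ F₂ hF₂
    · subst h2
      rw [Function.update_self, Finset.mem_insert] at hF₂
      rw [Function.update_of_ne h1] at hF₁
      rcases hF₂ with rfl | hF₂
      · rw [Finset.inter_comm, hsym]
        exact key k₁ h1 F₁ hF₁
      · exact hov _ _ hne F₁ hF₁ F₂ hF₂
    · rw [Function.update_of_ne h1] at hF₁
      rw [Function.update_of_ne h2] at hF₂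
      exact hov _ _ hne F₁ hF₁ F₂ hF₂
end

section
/- Let ℓ ≥ 2 be a fixed integer and let 𝐦 = (𝐦_S) be a fixed vector of non-negative integers indexed by the unordered pairs S of distinct elements of [ℓ], with σ := ∑_S 𝐦_S ≥ 1. Then there exists a constant C > 0 (depending only on ℓ and 𝐦) such that for every positive integer n there exist families 𝓕_1, …, 𝓕_ℓ ⊆ 2^{[n]} satisfying the 𝐦-overlapping property with ∏_{k=1}^{ℓ} |𝓕_k| ≥ (1 − C/n) · 2^n · ∏_S (1/𝐦_S!) · (𝐦_S · n / σ)^{𝐦_S}, where the product is over all unordered pairs S of distinct elements of [ℓ] and the convention 0^0 = 1 is used. -/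
open Finset Nat

-- `MOverlap n ℓ m` is `IsOverlapping m` for families of subsets of `Fin n`.
def IsOverlapping {ℓ : ℕ} {α : Type*} [DecidableEq α] (m : Fin ℓ → Fin ℓ → ℕ)
    (𝓖 : Fin ℓ → Finset (Finset α)) : Prop :=
  ∀ k₁ k₂ : Fin ℓ, k₁ ≠ k₂ → ∀ F₁ ∈ 𝓖 k₁, ∀ F₂ ∈ 𝓖 k₂, (F₁ ∩ F₂).card ≤ m k₁ k₂

namespace IsOverlapping

variable {ℓ : ℕ} {α β : Type*} [DecidableEq α] [DecidableEq β] {m : Fin ℓ → Fin ℓ → ℕ}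
  {𝓖 : Fin ℓ → Finset (Finset α)}

lemma of_lt (hsym : ∀ i j, m i j = m j i)
    (h : ∀ k₁ k₂, k₁ < k₂ → ∀ F₁ ∈ 𝓖 k₁, ∀ F₂ ∈ 𝓖 k₂, (F₁ ∩ F₂).card ≤ m k₁ k₂) :
    IsOverlapping m 𝓖 := by
  intro k₁ k₂ hne F₁ hF₁ F₂ hF₂
  rcases hne.lt_or_gt with hlt | hlt
  · exact h k₁ k₂ hlt F₁ hF₁ F₂ hF₂
  · rw [inter_comm, hsym]
    exact h k₂ k₁ hlt F₂ hF₂ F₁ hF₁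

lemma map (h : IsOverlapping m 𝓖) (e : α ↪ β) :
    IsOverlapping m fun k => (𝓖 k).map (mapEmbedding e).toEmbedding := by
  intro k₁ k₂ hne F₁ hF₁ F₂ hF₂
  obtain ⟨G₁, hG₁, rfl⟩ := mem_map.1 hF₁
  obtain ⟨G₂, hG₂, rfl⟩ := mem_map.1 hF₂
  simpa [← map_inter] using h k₁ k₂ hne G₁ hG₁ G₂ hG₂

end IsOverlapping

lemma mem_pairsOf_univ {ℓ : ℕ} {p : Fin ℓ × Fin ℓ} :
    p ∈ pairsOf (univ : Finset (Fin ℓ)) ↔ p.1 < p.2 := by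
  simp only [pairsOf, mem_filter, mem_offDiag, mem_univ, true_and, and_iff_right_iff_imp]
  exact ne_of_lt

section Blocks

variable {ℓ : ℕ} (β : pairsOf (univ : Finset (Fin ℓ)) → Type*) [∀ p, Fintype (β p)]
  (m : Fin ℓ → Fin ℓ → ℕ)

def blockTraces (k : Fin ℓ) (p : pairsOf (univ : Finset (Fin ℓ))) : Finset (Finset (β p)) :=
  if p.1.1 = k then univ
  else if p.1.2 = k then powersetCard (m p.1.1 p.1.2) univ
  else {∅}

def blockFamily (k : Fin ℓ) : Finset (Finset (Σ p, β p)) :=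
  (Fintype.piFinset (blockTraces β m k)).map
    ⟨fun A => univ.sigma A, fun A B hAB => by
      funext p; ext x
      simpa using congrArg (⟨p, x⟩ ∈ ·) hAB⟩

variable {β m}

lemma eq_empty_of_mem_blockTraces {k : Fin ℓ} {p} {A : Finset (β p)} (hA : A ∈ blockTraces β m k p)
    (h₁ : p.1.1 ≠ k) (h₂ : p.1.2 ≠ k) : A = ∅ := by
  simpa [blockTraces, h₁, h₂] using hA

lemma card_eq_of_mem_blockTraces {p} {A : Finset (β p)} (hA : A ∈ blockTraces β m p.1.2 p) :
    A.card = m p.1.1 p.1.2 := by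
  have : p.1.1 ≠ p.1.2 := (mem_pairsOf_univ.1 p.2).ne
  simp only [blockTraces, if_neg this, if_true, mem_powersetCard] at hA
  exact hA.2

lemma prod_card_blockTraces (p : pairsOf (univ : Finset (Fin ℓ))) :
    ∏ k, (blockTraces β m k p).card = 2 ^ Fintype.card (β p) *
      (Fintype.card (β p)).choose (m p.1.1 p.1.2) := by
  have hne : p.1.1 ≠ p.1.2 := (mem_pairsOf_univ.1 p.2).ne
  rw [Fintype.prod_eq_mul p.1.1 p.1.2 hne fun k hk => by
    simp [blockTraces, Ne.symm hk.1, Ne.symm hk.2]]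
  simp [blockTraces, hne]

lemma card_blockFamily (k : Fin ℓ) :
    (blockFamily β m k).card = ∏ p, (blockTraces β m k p).card := by
  simp [blockFamily, Fintype.card_piFinset]

lemma isOverlapping_blockFamily [∀ p, DecidableEq (β p)] (hsym : ∀ i j, m i j = m j i) :
    IsOverlapping m (blockFamily β m) := by
  refine IsOverlapping.of_lt hsym fun k₁ k₂ hlt F₁ hF₁ F₂ hF₂ => ?_
  simp only [blockFamily, mem_map, Fintype.mem_piFinset] at hF₁ hF₂
  obtain ⟨A₁, hA₁, rfl⟩ := hF₁
  obtain ⟨A₂, hA₂, rfl⟩ := hF₂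
  let q : pairsOf (univ : Finset (Fin ℓ)) := ⟨(k₁, k₂), mem_pairsOf_univ.2 hlt⟩
  have hdisj : ∀ p ≠ q, A₁ p ∩ A₂ p = ∅ := by
    intro p hpq
    have hp := mem_pairsOf_univ.1 p.2
    by_cases h₁ : p.1.1 ≠ k₁ ∧ p.1.2 ≠ k₁
    · rw [eq_empty_of_mem_blockTraces (hA₁ p) h₁.1 h₁.2, empty_inter]
    by_cases h₂ : p.1.1 ≠ k₂ ∧ p.1.2 ≠ k₂
    · rw [eq_empty_of_mem_blockTraces (hA₂ p) h₂.1 h₂.2, inter_empty]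
    exact absurd (Subtype.ext (Prod.ext (by grind) (by grind))) hpq
  calc (univ.sigma A₁ ∩ univ.sigma A₂).card = ∑ p, (A₁ p ∩ A₂ p).card := by
        rw [← card_sigma]
        congr 1
        ext ⟨p, x⟩
        simp
    _ = (A₁ q ∩ A₂ q).card := sum_eq_single q (fun p _ hpq => by simp [hdisj p hpq]) (by simp)
    _ ≤ (A₂ q).card := card_le_card inter_subset_right
    _ = m k₁ k₂ := card_eq_of_mem_blockTraces (hA₂ q)

end Blocks

lemma exists_mOverlap_prod_card_eq {ℓ n : ℕ} {m : Fin ℓ → Fin ℓ → ℕ}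
    (hsym : ∀ i j, m i j = m j i) {s : Fin ℓ × Fin ℓ → ℕ}
    (hs : ∑ p ∈ pairsOf (univ : Finset (Fin ℓ)), s p = n) :
    ∃ 𝓕 : Fin ℓ → Finset (Finset (Fin n)), MOverlap n ℓ m 𝓕 ∧
      ∏ k, (𝓕 k).card =
        2 ^ n * ∏ p ∈ pairsOf (univ : Finset (Fin ℓ)), (s p).choose (m p.1 p.2) := by
  let β : pairsOf (univ : Finset (Fin ℓ)) → Type := fun p => Fin (s p)
  have hcard : Fintype.card (Σ p, β p) = n := by simp [β, sum_attach, hs]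
  let e := (Fintype.equivFinOfCardEq hcard).toEmbedding
  refine ⟨fun k => (blockFamily β m k).map (mapEmbedding e).toEmbedding,
    (isOverlapping_blockFamily hsym).map e, ?_⟩
  simp only [card_map, card_blockFamily]
  rw [prod_comm]
  simp only [prod_card_blockTraces, prod_mul_distrib, prod_pow_eq_pow_sum, β, Fintype.card_fin]
  rw [sum_coe_sort, hs, prod_coe_sort (pairsOf univ) fun p => (s p).choose (m p.1 p.2)]

lemma one_sub_sum_mul_prod_le_prod {ι : Type*} (s : Finset ι) {a b c : ι → ℝ}
    (ha : ∀ i ∈ s, 0 ≤ a i) (hb : ∀ i ∈ s, 0 ≤ b i) (hc : ∀ i ∈ s, 0 ≤ c i)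
    (h : ∀ i ∈ s, (1 - a i) * b i ≤ c i) :
    (1 - ∑ i ∈ s, a i) * ∏ i ∈ s, b i ≤ ∏ i ∈ s, c i := by
  classical
  induction s using Finset.induction_on with
  | empty => simp
  | @insert j s hj ih =>
    simp only [forall_mem_insert] at ha hb hc h
    rw [sum_insert hj, prod_insert hj, prod_insert hj]
    have hA := sum_nonneg ha.2
    have hB := prod_nonneg hb.2
    have hC := prod_nonneg hc.2
    have ih := ih ha.2 hb.2 hc.2 h.2
    rcases le_or_gt (1 - a j - ∑ i ∈ s, a i) 0 with hneg | hpos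
    · nlinarith [mul_nonneg hb.1 hB, mul_nonneg hc.1 hC]
    · have hj1 : 0 ≤ (1 - a j) * b j := mul_nonneg (by linarith) hb.1
      have hs1 : 0 ≤ (1 - ∑ i ∈ s, a i) * ∏ i ∈ s, b i := mul_nonneg (by linarith) hB
      calc (1 - (a j + ∑ i ∈ s, a i)) * (b j * ∏ i ∈ s, b i)
          ≤ ((1 - a j) * b j) * ((1 - ∑ i ∈ s, a i) * ∏ i ∈ s, b i) := by
            nlinarith [mul_nonneg (mul_nonneg ha.1 hA) (mul_nonneg hb.1 hB)]
        _ ≤ c j * ∏ i ∈ s, c i := mul_le_mul h.1 ih hs1 hc.1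

lemma exists_nat_sum_eq_lt_add_one {ι : Type*} [DecidableEq ι] {S : Finset ι} (hS : S.Nonempty)
    {x : ι → ℝ} (hx : ∀ i ∈ S, 0 ≤ x i) {n : ℕ} (hsum : ∑ i ∈ S, x i ≤ n) :
    ∃ s : ι → ℕ, ∑ i ∈ S, s i = n ∧ ∀ i ∈ S, x i < s i + 1 := by
  obtain ⟨i₀, hi₀⟩ := hS
  have hfloor : ∑ i ∈ S, ⌊x i⌋₊ ≤ n := by
    have : (∑ i ∈ S, ⌊x i⌋₊ : ℝ) ≤ n :=
      (sum_le_sum fun i hi => Nat.floor_le (hx i hi)).trans hsum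
    exact_mod_cast this
  refine ⟨fun i => ⌊x i⌋₊ + if i = i₀ then n - ∑ j ∈ S, ⌊x j⌋₊ else 0, ?_, fun i _ => ?_⟩
  · rw [sum_add_distrib, sum_ite_eq' S i₀, if_pos hi₀]
    omega
  · calc x i < ⌊x i⌋₊ + 1 := Nat.lt_floor_add_one _
      _ ≤ _ := by gcongr; exact_mod_cast Nat.le_add_right _ _

lemma pow_mul_one_sub_le_factorial_mul_choose {x : ℝ} (hx : 0 ≤ x) {s : ℕ} (hs : x < s + 1)
    (t : ℕ) : x ^ t * (1 - t * t / x) ≤ t ! * s.choose t := by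
  rcases eq_or_ne t 0 with rfl | ht
  · simp
  have ht1 : (1 : ℝ) ≤ t := by exact_mod_cast Nat.one_le_iff_ne_zero.2 ht
  rcases lt_or_ge x t with hxt | hxt
  · have : x ^ t * (1 - t * t / x) ≤ 0 := by
      rcases hx.eq_or_lt with rfl | hx0
      · simp [ht]
      refine mul_nonpos_of_nonneg_of_nonpos (by positivity) ?_
      rw [sub_nonpos, le_div_iff₀ hx0]
      nlinarith
    exact this.trans (by positivity)
  have hx0 : 0 < x := by linarith
  have hts : t ≤ s + 1 := by exact_mod_cast hxt.trans hs.le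
  have bernoulli : x ^ t * (1 - t * t / x) ≤ (x - t) ^ t := by
    have h := one_add_mul_le_pow (a := -(t / x)) (by
      have : (t : ℝ) / x ≤ 1 := (div_le_one hx0).2 hxt
      linarith) t
    calc x ^ t * (1 - t * t / x) = x ^ t * (1 + t * -(t / x)) := by ring
      _ ≤ x ^ t * (1 + -(t / x)) ^ t := by gcongr
      _ = (x - t) ^ t := by rw [← mul_pow]; congr 1; field_simp; ring
  calc x ^ t * (1 - t * t / x) ≤ (x - t) ^ t := bernoulli
    _ ≤ ((s + 1 - t : ℕ) : ℝ) ^ t := by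
      gcongr
      push_cast [hts]
      linarith
    _ ≤ t ! * s.choose t := by
      rw [← Nat.cast_pow, ← Nat.cast_mul, ← Nat.descFactorial_eq_factorial_mul_choose]
      exact_mod_cast Nat.pow_sub_le_descFactorial s t

lemma one_sub_sq_div_mul_prod_le_prod_choose {ι : Type*} (S : Finset ι) (m s : ι → ℕ) (n : ℕ)
    (hs : ∀ i ∈ S, (m i : ℝ) * n / (∑ j ∈ S, m j : ℕ) < s i + 1) :
    (1 - ((∑ j ∈ S, m j : ℕ) : ℝ) ^ 2 / n) *
        ∏ i ∈ S, (1 / (m i)! * ((m i : ℝ) * n / (∑ j ∈ S, m j : ℕ)) ^ m i)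
      ≤ ∏ i ∈ S, ((s i).choose (m i) : ℝ) := by
  set σ : ℝ := ((∑ j ∈ S, m j : ℕ) : ℝ)
  have hsum : ∑ i ∈ S, (m i : ℝ) * σ / n = σ ^ 2 / n := by
    rw [← sum_div, ← sum_mul, sq, ← Nat.cast_sum]
  rw [← hsum]
  refine one_sub_sum_mul_prod_le_prod S (fun i _ => by positivity) (fun i _ => by positivity)
    (fun i _ => by positivity) fun i hi => ?_
  have hratio : (m i : ℝ) * m i / (m i * n / σ) = m i * σ / n := by
    rcases eq_or_ne (m i) 0 with h | h
    · simp [h]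
    · rw [div_div_eq_mul_div, mul_assoc, mul_div_mul_left _ _ (by exact_mod_cast h)]
  have key := pow_mul_one_sub_le_factorial_mul_choose (by positivity) (hs i hi) (m i)
  rw [hratio, ← div_le_iff₀' (by positivity)] at key
  calc _ = (m i * n / σ) ^ m i * (1 - m i * σ / n) / (m i)! := by ring
    _ ≤ _ := key

theorem statement9_general (ℓ : ℕ) (m : Fin ℓ → Fin ℓ → ℕ)
    (hsym : ∀ i j : Fin ℓ, m i j = m j i)
    (hσ : 1 ≤ ∑ p ∈ pairsOf (Finset.univ : Finset (Fin ℓ)), m p.1 p.2) :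
    ∃ C : ℝ, 0 < C ∧ ∀ n : ℕ, 1 ≤ n →
      ∃ 𝓕 : Fin ℓ → Finset (Finset (Fin n)),
        MOverlap n ℓ m 𝓕 ∧
        (1 - C / n) * 2 ^ n *
            ∏ p ∈ pairsOf (Finset.univ : Finset (Fin ℓ)),
              ((1 : ℝ) / (Nat.factorial (m p.1 p.2)) *
                ((m p.1 p.2 : ℝ) * n /
                  (∑ q ∈ pairsOf (Finset.univ : Finset (Fin ℓ)), m q.1 q.2 : ℕ)) ^ (m p.1 p.2))
          ≤ (∏ k, (𝓕 k).card : ℕ) := by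
  set P := pairsOf (univ : Finset (Fin ℓ))
  set σ := ∑ q ∈ P, m q.1 q.2
  refine ⟨(σ : ℝ) ^ 2, by positivity, fun n _ => ?_⟩
  have hσ₀ : (σ : ℝ) ≠ 0 := by positivity
  have hP : P.Nonempty := nonempty_of_sum_ne_zero (f := fun q => m q.1 q.2) (by omega)
  obtain ⟨s, hs_sum, hs⟩ := exists_nat_sum_eq_lt_add_one hP
    (x := fun p => (m p.1 p.2 : ℝ) * n / σ) (fun p _ => by positivity) (n := n) (by
      rw [← sum_div, ← sum_mul, ← Nat.cast_sum]
      exact (mul_div_cancel_left₀ _ hσ₀).le)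
  obtain ⟨𝓕, hover, hcard⟩ := exists_mOverlap_prod_card_eq hsym hs_sum
  refine ⟨𝓕, hover, ?_⟩
  rw [hcard, mul_comm _ ((2 : ℝ) ^ n), mul_assoc]
  push_cast
  gcongr
  exact one_sub_sq_div_mul_prod_le_prod_choose P (fun p => m p.1 p.2) s n hs

/-- Lower-bound construction: for fixed `ℓ ≥ 2` and a fixed symmetric vector `m` with
`σ = ∑_S m_S ≥ 1`, there is a constant `C > 0` such that for every `n ≥ 1` there exist
families `𝓕 1, …, 𝓕 ℓ` of subsets of `[n]` with the `m`-overlapping property and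
`∏_k |𝓕 k| ≥ (1 − C/n) · 2^n · ∏_S (1/m_S!)(m_S·n/σ)^{m_S}`. -/
theorem statement9 (ℓ : ℕ) (hℓ : 2 ≤ ℓ) (m : Fin ℓ → Fin ℓ → ℕ)
    (hsym : ∀ i j : Fin ℓ, m i j = m j i)
    (hσ : 1 ≤ ∑ p ∈ pairsOf (Finset.univ : Finset (Fin ℓ)), m p.1 p.2) :
    ∃ C : ℝ, 0 < C ∧ ∀ n : ℕ, 1 ≤ n →
      ∃ 𝓕 : Fin ℓ → Finset (Finset (Fin n)),
        MOverlap n ℓ m 𝓕 ∧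
        (1 - C / n) * 2 ^ n *
            ∏ p ∈ pairsOf (Finset.univ : Finset (Fin ℓ)),
              ((1 : ℝ) / (Nat.factorial (m p.1 p.2)) *
                ((m p.1 p.2 : ℝ) * n /
                  (∑ q ∈ pairsOf (Finset.univ : Finset (Fin ℓ)), m q.1 q.2 : ℕ)) ^ (m p.1 p.2))
          ≤ (∏ k, (𝓕 k).card : ℕ) :=
  statement9_general ℓ m hsym hσ
end

section
/- Let N ≥ 1 be a fixed integer, let m_1, …, m_N be fixed non-negative integers with σ := ∑_{j=1}^{N} m_j ≥ 1. Then there exists a constant C > 0 (depending only on N and m_1, …, m_N) such that for every positive integer n, the maximum of ∏_{j=1}^{N} ( ∑_{t=0}^{m_j} binom(n_j, t) ) over all N-tuples (n_1, …, n_N) of non-negative integers with ∑_{j=1}^{N} n_j = n satisfies (1 − C/n) · ∏_{j=1}^{N} (1/m_j!) · (m_j · n / σ)^{m_j} ≤ max ≤ (1 + C/n) · ∏_{j=1}^{N} (1/m_j!) · (m_j · n / σ)^{m_j}, with the convention 0^0 = 1. -/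
/-!
From above, `∑_{t ≤ m} C(k, t) ≤ C(k + m, m) ≤ (k + m)^m / m!` (Vandermonde), and weighted
AM-GM with weights `m_j` bounds `∏ (v_j + m_j)^{m_j}` by its value at the balanced point
`v_j + m_j = m_j (n + σ) / σ`; by homogeneity this is `(1 + σ/n)^σ` times the main term, and
convexity of `t ↦ (1 + t)^σ` on `[0, σ]` gives `(1 + σ/n)^σ ≤ 1 + ((1 + σ)^σ - 1)/n`.
From below, take `v_j ≥ ⌊m_j n / σ⌋` with the rounding defect put on one coordinate; then
`C(v_j, m_j) ≥ (v_j + 1 - m_j)^{m_j} / m_j! ≥ (m_j (n - σ) / σ)^{m_j} / m_j!`, and Bernoulli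
gives `(1 - σ/n)^σ ≥ 1 - σ²/n`.
-/

open Finset
open scoped Nat

theorem sum_range_choose_le_add_choose (k r : ℕ) :
    ∑ t ∈ range (r + 1), k.choose t ≤ (k + r).choose r := by
  rw [Nat.add_choose_eq, Nat.sum_antidiagonal_eq_sum_range_succ_mk]
  exact sum_le_sum fun t _ => Nat.le_mul_of_pos_right _ (Nat.choose_pos (Nat.sub_le _ _))

theorem pow_div_factorial_le_choose {k r : ℕ} {y : ℝ} (hy₀ : 0 ≤ y) (hy : y ≤ k + 1 - r) :
    y ^ r / r ! ≤ k.choose r := by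
  have hr : r ≤ k + 1 := by exact_mod_cast (show (r : ℝ) ≤ k + 1 by linarith)
  refine le_trans ?_ (Nat.pow_le_choose r k)
  gcongr
  push_cast [hr]
  exact hy

theorem one_add_pow_le_of_le {a x : ℝ} (ha : 0 < a) (hx : 0 ≤ x) (hxa : x ≤ a) (k : ℕ) :
    (1 + x) ^ k ≤ 1 + x / a * ((1 + a) ^ k - 1) := by
  have h := (convexOn_pow k).2 (Set.mem_Ici.2 zero_le_one)
    (Set.mem_Ici.2 (by linarith : 0 ≤ 1 + a)) (sub_nonneg.2 ((div_le_one ha).2 hxa))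
    (div_nonneg hx ha.le) (sub_add_cancel 1 (x / a))
  have hpoint : (1 - x / a) * 1 + x / a * (1 + a) = 1 + x := by
    field_simp
    ring
  simp only [smul_eq_mul, one_pow, hpoint] at h
  linear_combination h

theorem prod_pow_le_prod_mul_sum_div_pow {ι : Type*} (s : Finset ι) (m : ι → ℕ) {x : ι → ℝ}
    (hx : ∀ i ∈ s, 0 ≤ x i) :
    ∏ i ∈ s, x i ^ m i ≤ ∏ i ∈ s, ((m i : ℝ) * (∑ j ∈ s, x j) / (∑ j ∈ s, m j : ℕ)) ^ m i := by
  set σ := ∑ j ∈ s, m j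
  set S := ∑ j ∈ s, x j
  rcases Nat.eq_zero_or_pos σ with hσ | hσ
  · have hm : ∀ i ∈ s, m i = 0 := sum_eq_zero_iff.1 hσ
    rw [prod_eq_one fun i hi => by rw [hm i hi, pow_zero],
      prod_eq_one fun i hi => by rw [hm i hi, pow_zero]]
  have hz : ∀ i ∈ s, 0 ≤ x i / m i := fun i hi => div_nonneg (hx i hi) (Nat.cast_nonneg _)
  have hx_eq : ∀ i ∈ s, x i ^ m i = (m i : ℝ) ^ m i * (x i / m i) ^ m i := fun i _ => by
    rcases eq_or_ne (m i) 0 with h | h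
    · simp [h]
    · rw [← mul_pow, mul_div_cancel₀ _ (by exact_mod_cast h)]
  have hmean : ∑ i ∈ s, (m i : ℝ) * (x i / m i) ≤ S := sum_le_sum fun i hi => by
    rcases eq_or_ne (m i) 0 with h | h
    · simp [h, hx i hi]
    · rw [mul_div_cancel₀ _ (by exact_mod_cast h)]
  have amgm := Real.geom_mean_le_arith_mean s (fun i => (m i : ℝ)) (fun i => x i / m i)
    (fun _ _ => Nat.cast_nonneg _) (by exact_mod_cast hσ) hz
  simp only [← Nat.cast_sum, Real.rpow_natCast] at amgm
  have hgeom : ∏ i ∈ s, (x i / m i) ^ m i ≤ (S / σ) ^ σ := by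
    have hprod : 0 ≤ ∏ i ∈ s, (x i / m i) ^ m i :=
      prod_nonneg fun i hi => pow_nonneg (hz i hi) _
    rw [← Real.rpow_inv_natCast_pow hprod hσ.ne']
    exact pow_le_pow_left₀ (Real.rpow_nonneg hprod _) (amgm.trans (by gcongr)) σ
  calc ∏ i ∈ s, x i ^ m i = (∏ i ∈ s, (m i : ℝ) ^ m i) * ∏ i ∈ s, (x i / m i) ^ m i := by
        rw [prod_congr rfl hx_eq, prod_mul_distrib]
    _ ≤ (∏ i ∈ s, (m i : ℝ) ^ m i) * (S / σ) ^ σ := by gcongr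
    _ = ∏ i ∈ s, ((m i : ℝ) * S / σ) ^ m i := by
        rw [← prod_pow_eq_pow_sum, ← prod_mul_distrib]
        simp_rw [mul_div_assoc, mul_pow]

theorem exists_le_sum_eq {ι : Type*} [Fintype ι] [Nonempty ι] {f : ι → ℕ} {n : ℕ}
    (hf : ∑ i, f i ≤ n) : ∃ v : ι → ℕ, f ≤ v ∧ ∑ i, v i = n := by
  classical
  obtain ⟨i₀⟩ := ‹Nonempty ι›
  refine ⟨f + Pi.single i₀ (n - ∑ i, f i), fun i => Nat.le_add_right _ _, ?_⟩
  simp only [Pi.add_apply, sum_add_distrib, sum_pi_single', mem_univ, if_true]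
  omega

section LeadingTerm

variable {ι : Type*} [Fintype ι] (m : ι → ℕ)

noncomputable def leadingTerm (x : ℝ) : ℝ :=
  ∏ j, (1 : ℝ) / (m j)! * ((m j : ℝ) * x / (∑ i, m i : ℕ)) ^ m j

theorem leadingTerm_nonneg {x : ℝ} (hx : 0 ≤ x) : 0 ≤ leadingTerm m x :=
  prod_nonneg fun _ _ => by positivity

theorem leadingTerm_mul (c x : ℝ) :
    leadingTerm m (c * x) = c ^ (∑ i, m i) * leadingTerm m x := by
  rw [leadingTerm, leadingTerm, ← prod_pow_eq_pow_sum, ← prod_mul_distrib]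
  refine prod_congr rfl fun j _ => ?_
  rw [mul_left_comm _ c, mul_div_assoc, mul_pow]
  ring

theorem prod_sum_choose_le_leadingTerm (v : ι → ℕ) :
    ((∏ j, ∑ t ∈ range (m j + 1), (v j).choose t : ℕ) : ℝ) ≤
      leadingTerm m (∑ j, ((v j : ℝ) + m j)) := by
  have hterm : ∀ j, ((∑ t ∈ range (m j + 1), (v j).choose t : ℕ) : ℝ) ≤
      1 / (m j)! * ((v j : ℝ) + m j) ^ m j := fun j =>
    calc _ ≤ (((v j + m j).choose (m j) : ℕ) : ℝ) := by
          exact_mod_cast sum_range_choose_le_add_choose (v j) (m j)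
      _ ≤ _ := by
          rw [one_div_mul_eq_div]
          exact_mod_cast Nat.choose_le_pow_div (m j) (v j + m j)
  calc _ ≤ ∏ j, 1 / (m j)! * ((v j : ℝ) + m j) ^ m j := by
        rw [Nat.cast_prod]
        exact prod_le_prod (fun _ _ => by positivity) fun j _ => hterm j
    _ = (∏ j, 1 / (m j)! : ℝ) * ∏ j, ((v j : ℝ) + m j) ^ m j := prod_mul_distrib
    _ ≤ (∏ j, 1 / (m j)! : ℝ) *
          ∏ j, ((m j : ℝ) * (∑ i, ((v i : ℝ) + m i)) / (∑ i, m i : ℕ)) ^ m j := by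
        exact mul_le_mul_of_nonneg_left
          (prod_pow_le_prod_mul_sum_div_pow _ _ fun j _ => by positivity) (by positivity)
    _ = leadingTerm m _ := prod_mul_distrib.symm

theorem exists_leadingTerm_le_prod_sum_choose [Nonempty ι] (hσ : 0 < ∑ i, m i) {n : ℕ}
    (hn : ∑ i, m i ≤ n) :
    ∃ v : ι → ℕ, ∑ j, v j = n ∧
      leadingTerm m ((n : ℝ) - (∑ i, m i : ℕ)) ≤
        ((∏ j, ∑ t ∈ range (m j + 1), (v j).choose t : ℕ) : ℝ) := by
  set σ := ∑ i, m i
  have hσ' : (0 : ℝ) < σ := by exact_mod_cast hσ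
  have hnσ : (σ : ℝ) ≤ n := by exact_mod_cast hn
  have hfloor : ∑ j, ⌊(m j : ℝ) * n / σ⌋₊ ≤ n := by
    have : (∑ j, ⌊(m j : ℝ) * n / σ⌋₊ : ℝ) ≤ n := calc
      _ ≤ ∑ j, (m j : ℝ) * n / σ := sum_le_sum fun j _ => Nat.floor_le (by positivity)
      _ = n := by
        rw [← sum_div, ← sum_mul, ← Nat.cast_sum]
        exact mul_div_cancel_left₀ _ hσ'.ne'
    exact_mod_cast this
  obtain ⟨v, hfv, hv⟩ := exists_le_sum_eq hfloor
  refine ⟨v, hv, ?_⟩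
  rw [leadingTerm, Nat.cast_prod]
  refine prod_le_prod (fun j _ => by positivity) fun j _ => ?_
  have hy : (m j : ℝ) * (n - σ) / σ ≤ v j + 1 - m j := by
    have h1 := Nat.lt_floor_add_one ((m j : ℝ) * n / σ)
    have h2 : (⌊(m j : ℝ) * n / σ⌋₊ : ℝ) ≤ v j := by exact_mod_cast hfv j
    have : (m j : ℝ) * (n - σ) / σ = (m j : ℝ) * n / σ - m j := by field_simp
    linarith
  rw [one_div_mul_eq_div]
  calc _ ≤ ((v j).choose (m j) : ℝ) := pow_div_factorial_le_choose (by positivity) hy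
    _ ≤ _ := by
      exact_mod_cast single_le_sum (f := fun t => (v j).choose t) (fun t _ => Nat.zero_le _)
        (self_mem_range_succ (m j))

theorem prod_sum_choose_le_one_add_div_mul_leadingTerm (hσ : 0 < ∑ i, m i) {n : ℕ} (hn : 0 < n)
    {v : ι → ℕ} (hv : ∑ j, v j = n) :
    ((∏ j, ∑ t ∈ range (m j + 1), (v j).choose t : ℕ) : ℝ) ≤
      (1 + ((1 + (∑ i, m i : ℕ) : ℝ) ^ (∑ i, m i) - 1) / n) * leadingTerm m n := by
  set σ := ∑ i, m i
  have hσ' : (0 : ℝ) < σ := by exact_mod_cast hσ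
  have hn' : (0 : ℝ) < n := by exact_mod_cast hn
  have hsum : ∑ j, ((v j : ℝ) + m j) = (1 + σ / n) * n := by
    rw [add_mul, one_mul, div_mul_cancel₀ _ hn'.ne', ← hv, sum_add_distrib]
    simp only [σ, Nat.cast_sum]
  have hpow : (1 + σ / n : ℝ) ^ σ ≤ 1 + ((1 + σ) ^ σ - 1) / n := by
    convert one_add_pow_le_of_le (x := σ / n) hσ' (by positivity)
      (div_le_self hσ'.le (Nat.one_le_cast.2 hn)) σ using 2
    field_simp
  calc _ ≤ leadingTerm m ((1 + σ / n) * n) := hsum ▸ prod_sum_choose_le_leadingTerm m v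
    _ = (1 + σ / n) ^ σ * leadingTerm m n := leadingTerm_mul m _ _
    _ ≤ _ := mul_le_mul_of_nonneg_right hpow (leadingTerm_nonneg m hn'.le)

theorem exists_one_sub_div_mul_leadingTerm_le (hσ : 0 < ∑ i, m i) {n : ℕ} (hn : 0 < n) :
    ∃ v : ι → ℕ, ∑ j, v j = n ∧
      (1 - ((∑ i, m i : ℕ) : ℝ) ^ 2 / n) * leadingTerm m n ≤
        ((∏ j, ∑ t ∈ range (m j + 1), (v j).choose t : ℕ) : ℝ) := by
  set σ := ∑ i, m i
  have hn' : (0 : ℝ) < n := by exact_mod_cast hn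
  have : Nonempty ι := univ_nonempty_iff.mp (nonempty_of_sum_ne_zero hσ.ne')
  rcases lt_or_ge n σ with hlt | hle
  · obtain ⟨v, -, hv⟩ := exists_le_sum_eq (f := (0 : ι → ℕ)) (n := n) (by simp)
    refine ⟨v, hv, le_trans (mul_nonpos_of_nonpos_of_nonneg ?_ (leadingTerm_nonneg m hn'.le))
      (Nat.cast_nonneg _)⟩
    rw [sub_nonpos, one_le_div hn']
    exact_mod_cast hlt.le.trans (Nat.le_self_pow two_ne_zero σ)
  obtain ⟨v, hv, hlead⟩ := exists_leadingTerm_le_prod_sum_choose m hσ hle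
  refine ⟨v, hv, le_trans ?_ hlead⟩
  have hbernoulli : 1 - (σ : ℝ) ^ 2 / n ≤ (1 - σ / n) ^ σ := by
    have hσn : (σ : ℝ) / n ≤ 1 := (div_le_one hn').2 (by exact_mod_cast hle)
    have := one_add_mul_le_pow (a := -(σ / n : ℝ)) (by linarith) σ
    rw [← sub_eq_add_neg] at this
    linear_combination this
  calc _ ≤ (1 - σ / n : ℝ) ^ σ * leadingTerm m n :=
        mul_le_mul_of_nonneg_right hbernoulli (leadingTerm_nonneg m hn'.le)
    _ = leadingTerm m ((1 - σ / n) * n) := (leadingTerm_mul m _ _).symm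
    _ = leadingTerm m (n - σ) := by
        congr 1
        field_simp

end LeadingTerm

theorem statement10_general (N : ℕ) (m : Fin N → ℕ) (hσ : 1 ≤ ∑ j, m j) :
    ∃ C : ℝ, 0 < C ∧ ∀ n : ℕ, 1 ≤ n →
      (∀ v : Fin N → ℕ, ∑ j, v j = n →
        ((∏ j, ∑ t ∈ Finset.range (m j + 1), Nat.choose (v j) t : ℕ) : ℝ) ≤
          (1 + C / n) *
            ∏ j, ((1 : ℝ) / (Nat.factorial (m j)) *
              ((m j : ℝ) * n / (∑ i, m i : ℕ)) ^ (m j))) ∧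
      (∃ v : Fin N → ℕ, ∑ j, v j = n ∧
        (1 - C / n) *
            ∏ j, ((1 : ℝ) / (Nat.factorial (m j)) *
              ((m j : ℝ) * n / (∑ i, m i : ℕ)) ^ (m j)) ≤
          ((∏ j, ∑ t ∈ Finset.range (m j + 1), Nat.choose (v j) t : ℕ) : ℝ)) := by
  set σ := ∑ j, m j
  refine ⟨(1 + σ : ℝ) ^ σ + (σ : ℝ) ^ 2, by positivity, fun n hn => ?_⟩
  have hn' : (0 : ℝ) < n := by exact_mod_cast hn
  refine ⟨fun v hv => ?_, ?_⟩
  · change _ ≤ _ * leadingTerm m n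
    refine (prod_sum_choose_le_one_add_div_mul_leadingTerm m hσ hn hv).trans ?_
    gcongr
    · exact leadingTerm_nonneg m hn'.le
    · linarith [sq_nonneg (σ : ℝ)]
  · change ∃ v, _ ∧ _ * leadingTerm m n ≤ _
    obtain ⟨v, hv, hlow⟩ := exists_one_sub_div_mul_leadingTerm_le m hσ hn
    refine ⟨v, hv, le_trans ?_ hlow⟩
    gcongr
    · exact leadingTerm_nonneg m hn'.le
    · linarith [pow_nonneg (by positivity : (0 : ℝ) ≤ 1 + σ) σ]

/-- Asymptotics of the optimization problem: for fixed `N ≥ 1` and fixed non-negative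
integers `m_1, …, m_N` with `σ = ∑ m_j ≥ 1`, there is a constant `C > 0` such that for every
`n ≥ 1`, the maximum of `∏_j ∑_{t=0}^{m_j} C(n_j, t)` over tuples of non-negative integers
`(n_1, …, n_N)` with `∑ n_j = n` lies between `(1 − C/n) · ∏_j (1/m_j!)(m_j·n/σ)^{m_j}` and
`(1 + C/n) · ∏_j (1/m_j!)(m_j·n/σ)^{m_j}`; i.e. every tuple's value is at most the upper
bound and some tuple attains at least the lower bound. -/
theorem statement10 (N : ℕ) (hN : 1 ≤ N) (m : Fin N → ℕ) (hσ : 1 ≤ ∑ j, m j) :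
    ∃ C : ℝ, 0 < C ∧ ∀ n : ℕ, 1 ≤ n →
      (∀ v : Fin N → ℕ, ∑ j, v j = n →
        ((∏ j, ∑ t ∈ Finset.range (m j + 1), Nat.choose (v j) t : ℕ) : ℝ) ≤
          (1 + C / n) *
            ∏ j, ((1 : ℝ) / (Nat.factorial (m j)) *
              ((m j : ℝ) * n / (∑ i, m i : ℕ)) ^ (m j))) ∧
      (∃ v : Fin N → ℕ, ∑ j, v j = n ∧
        (1 - C / n) *
            ∏ j, ((1 : ℝ) / (Nat.factorial (m j)) *
              ((m j : ℝ) * n / (∑ i, m i : ℕ)) ^ (m j)) ≤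
          ((∏ j, ∑ t ∈ Finset.range (m j + 1), Nat.choose (v j) t : ℕ) : ℝ)) :=
  statement10_general N m hσ
end

section
/- Let ℓ ≥ 2 be a fixed integer, let 𝐦 be a fixed vector of non-negative integers indexed by the unordered pairs of distinct elements of [ℓ], and put σ = ∑_S 𝐦_S. Then there exists a constant C > 0 (depending only on ℓ and 𝐦) such that for every positive integer n, s*(n, ℓ, 𝐦) ≤ C · n^σ · 2^n. -/
section AuxiliaryLemmas

open Finset

variable {α : Type*} [DecidableEq α]


/-- A family closed under erasing single elements is a lower set. -/
lemma isLowerSet_of_erase (𝒜 : Finset (Finset α))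
    (h : ∀ F ∈ 𝒜, ∀ a, F.erase a ∈ 𝒜) : IsLowerSet (𝒜 : Set (Finset α)) := by
  have key : ∀ N (x : Finset α), x.card ≤ N → x ∈ 𝒜 → ∀ y ⊆ x, y ∈ 𝒜 := by
    intro N
    induction N with
    | zero =>
      intro x hx hxA y hy
      have hxe : x = ∅ := card_eq_zero.mp (Nat.le_zero.mp hx)
      subst hxe
      rw [subset_empty] at hy
      subst hy; exact hxA
    | succ n ih =>
      intro x hx hxA y hy
      by_cases hxy : y = x
      · subst hxy; exact hxA
      · have hss : y ⊂ x := ssubset_of_subset_of_ne hy hxy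
        obtain ⟨a, hax, hay⟩ := exists_of_ssubset hss
        have h1 : x.erase a ∈ 𝒜 := h x hxA a
        have h2 : y ⊆ x.erase a := subset_erase.mpr ⟨hy, hay⟩
        have h3 : (x.erase a).card ≤ n := by
          have h4 := card_erase_of_mem hax
          have h5 : 0 < x.card := card_pos.mpr ⟨a, hax⟩
          omega
        exact ih _ h3 h1 y h2
  intro x y hyx hx
  exact key x.card x le_rfl hx y hyx

/-- Down-compression strictly decreases total size when it acts nontrivially. -/
lemma sum_card_compression_lt (a : α) (𝒜 : Finset (Finset α))
    (h : ∃ F ∈ 𝒜, F.erase a ∉ 𝒜) :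
    ∑ F ∈ Down.compression a 𝒜, F.card < ∑ F ∈ 𝒜, F.card := by
  classical
  have hmem : ∀ F ∈ 𝒜.filter (fun F => F.erase a ∉ 𝒜), a ∈ F := by
    intro F hF
    rw [mem_filter] at hF
    by_contra ha
    exact hF.2 (by rw [erase_eq_of_notMem ha]; exact hF.1)
  have hsum : ∑ F ∈ Down.compression a 𝒜, F.card
      = (∑ F ∈ 𝒜.filter (fun F => F.erase a ∈ 𝒜), F.card)
        + ∑ F ∈ 𝒜.filter (fun F => F.erase a ∉ 𝒜), (F.erase a).card := by
    rw [Down.compression, sum_disjUnion, filter_image]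
    congr 1
    apply sum_image
    intro x hx y hy hxy
    have hax : a ∈ x := hmem x hx
    have hay : a ∈ y := hmem y hy
    rw [← insert_erase hax, ← insert_erase hay, show x.erase a = y.erase a from hxy]
  rw [hsum, ← sum_filter_add_sum_filter_not 𝒜 (fun F => F.erase a ∈ 𝒜) (fun F => F.card)]
  apply Nat.add_lt_add_left
  apply sum_lt_sum_of_nonempty
  · obtain ⟨F, hF, hFe⟩ := h
    exact ⟨F, mem_filter.mpr ⟨hF, hFe⟩⟩
  · intro F hF
    have haF := hmem F hF
    have h4 := card_erase_of_mem haF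
    have h5 : 0 < F.card := card_pos.mpr ⟨a, haF⟩
    omega

/-- Every family can be replaced by a lower set of the same size whose members are
dominated by members of the original family. -/
lemma exists_lowerSet (𝒜 : Finset (Finset α)) :
    ∃ ℬ : Finset (Finset α), ℬ.card = 𝒜.card ∧ IsLowerSet (ℬ : Set (Finset α)) ∧
      ∀ G ∈ ℬ, ∃ F ∈ 𝒜, G ⊆ F := by
  have main : ∀ N (𝒜 : Finset (Finset α)), (∑ F ∈ 𝒜, F.card) ≤ N →
      ∃ ℬ : Finset (Finset α), ℬ.card = 𝒜.card ∧ IsLowerSet (ℬ : Set (Finset α)) ∧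
        ∀ G ∈ ℬ, ∃ F ∈ 𝒜, G ⊆ F := by
    intro N
    induction N with
    | zero =>
      intro 𝒜 hA
      refine ⟨𝒜, rfl, ?_, fun G hG => ⟨G, hG, Finset.Subset.refl G⟩⟩
      apply isLowerSet_of_erase
      intro F hF b
      have h0 : F.card = 0 := by
        have := Finset.sum_eq_zero_iff.mp (Nat.le_zero.mp hA) F hF
        exact this
      have : F = ∅ := card_eq_zero.mp h0
      subst this
      simpa using hF
    | succ n ih =>
      intro 𝒜 hA
      by_cases hl : IsLowerSet (𝒜 : Set (Finset α))
      · exact ⟨𝒜, rfl, hl, fun G hG => ⟨G, hG, Finset.Subset.refl G⟩⟩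
      · have hw : ∃ F ∈ 𝒜, ∃ b, F.erase b ∉ 𝒜 := by
          by_contra hc
          push_neg at hc
          exact hl (isLowerSet_of_erase 𝒜 hc)
        obtain ⟨F, hF, b, hFb⟩ := hw
        have hlt := sum_card_compression_lt b 𝒜 ⟨F, hF, hFb⟩
        obtain ⟨ℬ, h1, h2, h3⟩ := ih (Down.compression b 𝒜) (by omega)
        refine ⟨ℬ, by rw [h1, Down.card_compression], h2, ?_⟩
        intro G hG
        obtain ⟨F', hF', hsub⟩ := h3 G hG
        rw [Down.mem_compression] at hF'
        rcases hF' with ⟨h4, -⟩ | ⟨-, h5⟩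
        · exact ⟨F', h4, hsub⟩
        · exact ⟨insert b F', h5, hsub.trans (subset_insert _ _)⟩
  exact main _ 𝒜 le_rfl

section Poly

variable {ℓ : ℕ}

/-- Coefficient of generator `t` on pair `p`. -/
def coefF (a b c d : Fin ℓ × Fin ℓ → ℕ) (p : Fin ℓ × Fin ℓ) (t : Fin 4) : ℕ :=
  if t = 0 then a p else if t = 1 then b p else if t = 2 then c p else d p

/-- Indicator of generator `t` on pair `p` evaluated at the subset `T`. -/
def chiF (p : Fin ℓ × Fin ℓ) (t : Fin 4) (T : Finset (Fin ℓ)) : ℕ :=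
  if (t = 0 → (p.1 ∉ T ∧ p.2 ∉ T)) ∧ (t = 1 → p.1 ∉ T) ∧ (t = 2 → p.2 ∉ T) then 1 else 0

lemma coefF_zero (a b c d : Fin ℓ × Fin ℓ → ℕ) (p) : coefF a b c d p 0 = a p := by
  simp [coefF]

lemma coefF_one (a b c d : Fin ℓ × Fin ℓ → ℕ) (p) : coefF a b c d p 1 = b p := by
  rw [coefF, if_neg (by decide), if_pos rfl]

lemma coefF_two (a b c d : Fin ℓ × Fin ℓ → ℕ) (p) : coefF a b c d p 2 = c p := by
  rw [coefF, if_neg (by decide), if_neg (by decide), if_pos rfl]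

lemma coefF_three (a b c d : Fin ℓ × Fin ℓ → ℕ) (p) : coefF a b c d p 3 = d p := by
  rw [coefF, if_neg (by decide), if_neg (by decide), if_neg (by decide)]

lemma chiF_zero (p : Fin ℓ × Fin ℓ) (T) :
    chiF p 0 T = if p.1 ∉ T ∧ p.2 ∉ T then 1 else 0 := by
  rw [chiF]
  by_cases h : p.1 ∉ T ∧ p.2 ∉ T
  · rw [if_pos ⟨fun _ => h, fun h1 => absurd h1 (by decide), fun h2 => absurd h2 (by decide)⟩,
      if_pos h]
  · rw [if_neg (fun hC => h (hC.1 rfl)), if_neg h]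

lemma chiF_one (p : Fin ℓ × Fin ℓ) (T) :
    chiF p 1 T = if p.1 ∉ T then 1 else 0 := by
  rw [chiF]
  by_cases h : p.1 ∉ T
  · rw [if_pos ⟨fun h0 => absurd h0 (by decide), fun _ => h, fun h2 => absurd h2 (by decide)⟩,
      if_pos h]
  · rw [if_neg (fun hC => h (hC.2.1 rfl)), if_neg h]

lemma chiF_two (p : Fin ℓ × Fin ℓ) (T) :
    chiF p 2 T = if p.2 ∉ T then 1 else 0 := by
  rw [chiF]
  by_cases h : p.2 ∉ T
  · rw [if_pos ⟨fun h0 => absurd h0 (by decide), fun h1 => absurd h1 (by decide), fun _ => h⟩,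
      if_pos h]
  · rw [if_neg (fun hC => h (hC.2.2 rfl)), if_neg h]

lemma chiF_three (p : Fin ℓ × Fin ℓ) (T) : chiF p 3 T = 1 := by
  rw [chiF, if_pos]
  exact ⟨fun h0 => absurd h0 (by decide), fun h1 => absurd h1 (by decide),
    fun h2 => absurd h2 (by decide)⟩

/-- Per choice function `g`, the number of admissible subsets is at most `2 * 2 ^ t4`. -/
lemma count_le (P : Finset (Fin ℓ × Fin ℓ)) (hP2 : ∀ v w : Fin ℓ, v < w → (v, w) ∈ P)
    (g : Fin ℓ × Fin ℓ → Fin 4) :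
    ∑ T ∈ (univ : Finset (Fin ℓ)).powerset, ∏ p ∈ P, chiF p (g p) T
      ≤ 2 * 2 ^ (P.filter (fun p => g p = 3)).card := by
  classical
  set Z : Finset (Fin ℓ) := univ.filter (fun v =>
    ∃ p ∈ P, ((g p = 0 ∨ g p = 1) ∧ p.1 = v) ∨ ((g p = 0 ∨ g p = 2) ∧ p.2 = v)) with hZ
  set U : Finset (Fin ℓ) := univ \ Z with hU
  have step1 : ∀ T ∈ (univ : Finset (Fin ℓ)).powerset,
      ∏ p ∈ P, chiF p (g p) T ≤ if T ⊆ U then 1 else 0 := by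
    intro T _
    split_ifs with hTU
    · refine Finset.prod_le_one (fun p _ => Nat.zero_le _) (fun p _ => ?_)
      rw [chiF]
      split_ifs
      exacts [le_rfl, Nat.zero_le 1]
    · obtain ⟨v, hvT, hvU⟩ := not_subset.mp hTU
      have hvZ : v ∈ Z := by
        by_contra hc
        exact hvU (mem_sdiff.mpr ⟨mem_univ v, hc⟩)
      rw [hZ, mem_filter] at hvZ
      obtain ⟨-, p, hpP, hcase⟩ := hvZ
      apply le_of_eq
      apply Finset.prod_eq_zero hpP
      rw [chiF, if_neg]
      intro hcond
      rcases hcase with ⟨hg, hp1⟩ | ⟨hg, hp2⟩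
      · rcases hg with hg0 | hg1
        · exact (hcond.1 hg0).1 (by rw [hp1]; exact hvT)
        · exact (hcond.2.1 hg1) (by rw [hp1]; exact hvT)
      · rcases hg with hg0 | hg2
        · exact (hcond.1 hg0).2 (by rw [hp2]; exact hvT)
        · exact (hcond.2.2 hg2) (by rw [hp2]; exact hvT)
  have hcardU : U.card ≤ 1 + (P.filter (fun p => g p = 3)).card := by
    rcases U.eq_empty_or_nonempty with hUe | hUne
    · rw [hUe]; simp
    · set M := U.max' hUne with hM
      have hMU : M ∈ U := U.max'_mem hUne
      have hmaps : ∀ v ∈ U.erase M, (fun v => (v, M)) v ∈ P.filter (fun p => g p = 3) := by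
        intro v hv
        have hvU : v ∈ U := mem_of_mem_erase hv
        have hvM : v ≠ M := ne_of_mem_erase hv
        have hlt : v < M := lt_of_le_of_ne (U.le_max' v hvU) hvM
        have hpP : (v, M) ∈ P := hP2 v M hlt
        rw [mem_filter]
        refine ⟨hpP, ?_⟩
        have h4 : ∀ t : Fin 4, t = 0 ∨ t = 1 ∨ t = 2 ∨ t = 3 := by decide
        rcases h4 (g (v, M)) with hg | hg | hg | hg
        · exfalso
          have : v ∈ Z := mem_filter.mpr ⟨mem_univ v, ⟨(v, M), hpP, Or.inl ⟨Or.inl hg, rfl⟩⟩⟩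
          exact (mem_sdiff.mp hvU).2 this
        · exfalso
          have : v ∈ Z := mem_filter.mpr ⟨mem_univ v, ⟨(v, M), hpP, Or.inl ⟨Or.inr hg, rfl⟩⟩⟩
          exact (mem_sdiff.mp hvU).2 this
        · exfalso
          have : M ∈ Z := mem_filter.mpr ⟨mem_univ M, ⟨(v, M), hpP, Or.inr ⟨Or.inr hg, rfl⟩⟩⟩
          exact (mem_sdiff.mp hMU).2 this
        · exact hg
      have h5 := card_le_card_of_injOn (fun v => (v, M)) hmaps
        (fun x _ y _ hxy => congrArg Prod.fst hxy)
      have h6 := card_erase_add_one hMU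
      omega
  calc ∑ T ∈ (univ : Finset (Fin ℓ)).powerset, ∏ p ∈ P, chiF p (g p) T
      ≤ ∑ T ∈ (univ : Finset (Fin ℓ)).powerset, (if T ⊆ U then 1 else 0) :=
        sum_le_sum step1
    _ = ((univ : Finset (Fin ℓ)).powerset.filter (fun T => T ⊆ U)).card := by
        rw [sum_boole, Nat.cast_id]
    _ = U.powerset.card := by
        congr 1
        ext T
        simp [mem_powerset, subset_univ]
    _ = 2 ^ U.card := card_powerset U
    _ ≤ 2 ^ (1 + (P.filter (fun p => g p = 3)).card) :=
        Nat.pow_le_pow_right (by norm_num) hcardU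
    _ = 2 * 2 ^ (P.filter (fun p => g p = 3)).card := by rw [pow_add, pow_one]

/-- Products of `if _ then 2 else 1`. -/
lemma prod_ite_two (P : Finset (Fin ℓ × Fin ℓ)) (c : Fin ℓ × Fin ℓ → Prop) [DecidablePred c] :
    ∏ p ∈ P, (if c p then 2 else 1) = 2 ^ (P.filter c).card := by
  rw [← prod_filter_mul_prod_filter_not P c]
  rw [prod_congr rfl (fun x hx => if_pos (mem_filter.mp hx).2),
    prod_congr rfl (fun x hx => if_neg (mem_filter.mp hx).2), prod_const, prod_const, one_pow,
    mul_one]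

/-- The key polynomial inequality. -/
lemma poly_key (P : Finset (Fin ℓ × Fin ℓ)) (hP2 : ∀ v w : Fin ℓ, v < w → (v, w) ∈ P)
    (a b c d : Fin ℓ × Fin ℓ → ℕ) :
    ∑ T ∈ (univ : Finset (Fin ℓ)).powerset,
        ∏ p ∈ P, (∑ t : Fin 4, coefF a b c d p t * chiF p t T)
      ≤ 2 * ∏ p ∈ P, (a p + b p + c p + 2 * d p) := by
  classical
  -- expand the left side over choice functions
  have hL : ∀ T, ∏ p ∈ P, (∑ t : Fin 4, coefF a b c d p t * chiF p t T)
      = ∑ γ ∈ P.pi (fun _ => (univ : Finset (Fin 4))),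
          ∏ x ∈ P.attach, (coefF a b c d x.1 (γ x.1 x.2) * chiF x.1 (γ x.1 x.2) T) := by
    intro T
    exact Finset.prod_sum P (fun _ => (univ : Finset (Fin 4)))
      (fun p t => coefF a b c d p t * chiF p t T)
  have hR : ∏ p ∈ P, (a p + b p + c p + 2 * d p)
      = ∑ γ ∈ P.pi (fun _ => (univ : Finset (Fin 4))),
          ∏ x ∈ P.attach, (coefF a b c d x.1 (γ x.1 x.2) * (if γ x.1 x.2 = 3 then 2 else 1)) := by
    rw [← Finset.prod_sum P (fun _ => (univ : Finset (Fin 4)))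
      (fun p t => coefF a b c d p t * (if t = 3 then 2 else 1))]
    apply prod_congr rfl
    intro p _
    rw [Fin.sum_univ_four, coefF_zero, coefF_one, coefF_two, coefF_three,
      if_neg (show (0 : Fin 4) ≠ 3 by decide), if_neg (show (1 : Fin 4) ≠ 3 by decide),
      if_neg (show (2 : Fin 4) ≠ 3 by decide), if_pos rfl]
    ring
  rw [hR, mul_sum]
  simp_rw [hL]
  rw [sum_comm]
  apply sum_le_sum
  intro γ hγ
  -- turn γ into a total function
  set g : Fin ℓ × Fin ℓ → Fin 4 := fun p => if h : p ∈ P then γ p h else 3 with hg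
  have hgeq : ∀ x : {p // p ∈ P}, γ x.1 x.2 = g x.1 := by
    intro x
    rw [hg]
    simp [x.2]
  have e1 : ∀ T, ∏ x ∈ P.attach, (coefF a b c d x.1 (γ x.1 x.2) * chiF x.1 (γ x.1 x.2) T)
      = (∏ p ∈ P, coefF a b c d p (g p)) * ∏ p ∈ P, chiF p (g p) T := by
    intro T
    rw [← prod_mul_distrib]
    rw [prod_congr rfl (fun x _ => by rw [hgeq x])]
    exact prod_attach P (fun p => coefF a b c d p (g p) * chiF p (g p) T)
  have e2 : ∏ x ∈ P.attach, (coefF a b c d x.1 (γ x.1 x.2) * (if γ x.1 x.2 = 3 then 2 else 1))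
      = (∏ p ∈ P, coefF a b c d p (g p)) * 2 ^ (P.filter (fun p => g p = 3)).card := by
    rw [prod_congr rfl (fun x _ => by rw [hgeq x])]
    rw [prod_attach P (fun p => coefF a b c d p (g p) * (if g p = 3 then 2 else 1))]
    rw [prod_mul_distrib, prod_ite_two]
  simp_rw [e1]
  rw [← mul_sum, e2]
  calc (∏ p ∈ P, coefF a b c d p (g p)) * ∑ T ∈ (univ : Finset (Fin ℓ)).powerset,
          ∏ p ∈ P, chiF p (g p) T
      ≤ (∏ p ∈ P, coefF a b c d p (g p)) * (2 * 2 ^ (P.filter (fun p => g p = 3)).card) :=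
        Nat.mul_le_mul_left _ (count_le P hP2 g)
    _ = 2 * ((∏ p ∈ P, coefF a b c d p (g p)) * 2 ^ (P.filter (fun p => g p = 3)).card) := by
        ring

end Poly


lemma mem_pairs {ℓ : ℕ} (v w : Fin ℓ) (h : v < w) :
    (v, w) ∈ pairsOf (univ : Finset (Fin ℓ)) := by
  rw [pairsOf, mem_filter, mem_offDiag]
  exact ⟨⟨mem_univ _, mem_univ _, ne_of_lt h⟩, h⟩

lemma main_ineq {α : Type*} [DecidableEq α] {ℓ : ℕ} (s : Finset α) :
    ∀ 𝓕 : Fin ℓ → Finset (Finset α),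
      (∀ k, IsLowerSet ((𝓕 k : Set (Finset α)))) →
      (∀ k, ∀ F ∈ 𝓕 k, F ⊆ s) →
      ∏ k, (𝓕 k).card
        ≤ 2 ^ s.card * ∏ p ∈ pairsOf (univ : Finset (Fin ℓ)), ((𝓕 p.1) ∩ (𝓕 p.2)).card := by
  classical
  induction s using Finset.induction with
  | empty =>
    intro 𝓕 hlow hsub
    by_cases hne : ∀ k, (𝓕 k).Nonempty
    · have heq : ∀ k, 𝓕 k = {∅} := by
        intro k
        apply Finset.Subset.antisymm
        · intro F hF
          rw [mem_singleton]
          exact subset_empty.mp (hsub k F hF)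
        · intro F hF
          rw [mem_singleton] at hF
          subst hF
          obtain ⟨G, hG⟩ := hne k
          exact mem_coe.mp (hlow k (empty_subset G) (mem_coe.mpr hG))
      simp [heq]
    · push_neg at hne
      obtain ⟨k, hk⟩ := hne
      have h0 : (𝓕 k).card = 0 := by
        rw [hk, card_empty]
      have hz : ∏ k, (𝓕 k).card = 0 := prod_eq_zero (mem_univ k) h0
      rw [hz]
      exact Nat.zero_le _
  | @insert a s ha ih =>
    intro 𝓕 hlow hsub
    set P := pairsOf (univ : Finset (Fin ℓ)) with hP
    set A : Fin ℓ → Finset (Finset α) := fun k => (𝓕 k).nonMemberSubfamily a with hA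
    set B : Fin ℓ → Finset (Finset α) := fun k => (𝓕 k).memberSubfamily a with hB
    have hBA : ∀ k, B k ⊆ A k := fun k =>
      (hlow k).memberSubfamily_subset_nonMemberSubfamily
    have hlowA : ∀ k, IsLowerSet (A k : Set (Finset α)) := fun k => (hlow k).nonMemberSubfamily
    have hlowB : ∀ k, IsLowerSet (B k : Set (Finset α)) := fun k => (hlow k).memberSubfamily
    have hsubA : ∀ k, ∀ F ∈ A k, F ⊆ s := by
      intro k F hF
      rw [hA, mem_nonMemberSubfamily] at hF
      exact (subset_insert_iff_of_notMem hF.2).mp (hsub k F hF.1)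
    have hsubB : ∀ k, ∀ F ∈ B k, F ⊆ s := by
      intro k F hF
      rw [hB, mem_memberSubfamily] at hF
      exact (subset_insert_iff_of_notMem hF.2).mp
        ((subset_insert a F).trans (hsub k (insert a F) hF.1))
    have f1 : ∀ p : Fin ℓ × Fin ℓ, (B p.1 ∩ B p.2).card ≤ (A p.1 ∩ B p.2).card :=
      fun p => card_le_card (inter_subset_inter (hBA p.1) (Finset.Subset.refl _))
    have f2 : ∀ p : Fin ℓ × Fin ℓ, (B p.1 ∩ B p.2).card ≤ (B p.1 ∩ A p.2).card :=
      fun p => card_le_card (inter_subset_inter (Finset.Subset.refl _) (hBA p.2))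
    have f3 : ∀ p : Fin ℓ × Fin ℓ, (A p.1 ∩ B p.2).card ≤ (A p.1 ∩ A p.2).card :=
      fun p => card_le_card (inter_subset_inter (Finset.Subset.refl _) (hBA p.2))
    have f4 : ∀ p : Fin ℓ × Fin ℓ, (B p.1 ∩ A p.2).card ≤ (A p.1 ∩ A p.2).card :=
      fun p => card_le_card (inter_subset_inter (hBA p.1) (Finset.Subset.refl _))
    have f5 : ∀ p : Fin ℓ × Fin ℓ,
        (A p.1 ∩ B p.2).card + (B p.1 ∩ A p.2).card
          ≤ (A p.1 ∩ A p.2).card + (B p.1 ∩ B p.2).card := by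
      intro p
      have hU : (A p.1 ∩ B p.2) ∪ (B p.1 ∩ A p.2) ⊆ A p.1 ∩ A p.2 :=
        union_subset (inter_subset_inter (Finset.Subset.refl _) (hBA p.2))
          (inter_subset_inter (hBA p.1) (Finset.Subset.refl _))
      have hI : (A p.1 ∩ B p.2) ∩ (B p.1 ∩ A p.2) = B p.1 ∩ B p.2 := by
        ext F
        simp only [mem_inter]
        constructor
        · rintro ⟨⟨-, h2⟩, h3, -⟩
          exact ⟨h3, h2⟩
        · rintro ⟨h1, h2⟩
          exact ⟨⟨hBA p.1 h1, h2⟩, h1, hBA p.2 h2⟩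
      calc (A p.1 ∩ B p.2).card + (B p.1 ∩ A p.2).card
          = ((A p.1 ∩ B p.2) ∪ (B p.1 ∩ A p.2)).card
            + ((A p.1 ∩ B p.2) ∩ (B p.1 ∩ A p.2)).card :=
            (card_union_add_card_inter _ _).symm
        _ = ((A p.1 ∩ B p.2) ∪ (B p.1 ∩ A p.2)).card + (B p.1 ∩ B p.2).card := by rw [hI]
        _ ≤ (A p.1 ∩ A p.2).card + (B p.1 ∩ B p.2).card :=
            Nat.add_le_add_right (card_le_card hU) _
    set dd : Fin ℓ × Fin ℓ → ℕ := fun p => (B p.1 ∩ B p.2).card with hdd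
    set bb : Fin ℓ × Fin ℓ → ℕ := fun p => (A p.1 ∩ B p.2).card - (B p.1 ∩ B p.2).card with hbb
    set cc : Fin ℓ × Fin ℓ → ℕ := fun p => (B p.1 ∩ A p.2).card - (B p.1 ∩ B p.2).card with hcc
    set aa : Fin ℓ × Fin ℓ → ℕ := fun p =>
      ((A p.1 ∩ A p.2).card + (B p.1 ∩ B p.2).card)
        - ((A p.1 ∩ B p.2).card + (B p.1 ∩ A p.2).card) with haa
    have e2 : ∀ T : Finset (Fin ℓ), ∀ p : Fin ℓ × Fin ℓ,
        ((if p.1 ∈ T then B p.1 else A p.1) ∩ (if p.2 ∈ T then B p.2 else A p.2)).card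
          = ∑ t : Fin 4, coefF aa bb cc dd p t * chiF p t T := by
      intro T p
      have g1 := f1 p
      have g2 := f2 p
      have g3 := f3 p
      have g4 := f4 p
      have g5 := f5 p
      rw [Fin.sum_univ_four, coefF_zero, coefF_one, coefF_two, coefF_three,
        chiF_zero, chiF_one, chiF_two, chiF_three]
      by_cases h1 : p.1 ∈ T <;> by_cases h2 : p.2 ∈ T
      · rw [if_pos h1, if_pos h2, if_neg (fun hc => hc.1 h1), if_neg (not_not_intro h1),
          if_neg (not_not_intro h2)]
        simp only [haa, hbb, hcc, hdd]
        omega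
      · rw [if_pos h1, if_neg h2, if_neg (fun hc => hc.1 h1), if_neg (not_not_intro h1),
          if_pos h2]
        simp only [haa, hbb, hcc, hdd]
        omega
      · rw [if_neg h1, if_pos h2, if_neg (fun hc => hc.2 h2), if_pos h1, if_neg (not_not_intro h2)]
        simp only [haa, hbb, hcc, hdd]
        omega
      · rw [if_neg h1, if_neg h2, if_pos ⟨h1, h2⟩, if_pos h1, if_pos h2]
        simp only [haa, hbb, hcc, hdd]
        omega
    have key1 : ∏ k, (𝓕 k).card
        = ∑ T ∈ (univ : Finset (Fin ℓ)).powerset,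
            (∏ k ∈ T, (B k).card) * ∏ k ∈ univ \ T, (A k).card := by
      rw [← Finset.prod_add (fun k => (B k).card) (fun k => (A k).card) univ]
      apply prod_congr rfl
      intro k _
      exact (card_memberSubfamily_add_card_nonMemberSubfamily a (𝓕 k)).symm
    have e1 : ∀ T : Finset (Fin ℓ),
        (∏ k ∈ T, (B k).card) * (∏ k ∈ univ \ T, (A k).card)
          = ∏ k, ((if k ∈ T then B k else A k)).card := by
      intro T
      have hfilt1 : (univ : Finset (Fin ℓ)).filter (fun k => k ∈ T) = T := by
        ext k; simp
      have hfilt2 : (univ : Finset (Fin ℓ)).filter (fun k => ¬ k ∈ T) = univ \ T := by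
        ext k; simp [mem_sdiff]
      simp only [apply_ite Finset.card]
      rw [Finset.prod_ite (fun k => (B k).card) (fun k => (A k).card), hfilt1, hfilt2]
    have key2 : ∀ T ∈ (univ : Finset (Fin ℓ)).powerset,
        (∏ k ∈ T, (B k).card) * (∏ k ∈ univ \ T, (A k).card)
          ≤ 2 ^ s.card * ∏ p ∈ P, (∑ t : Fin 4, coefF aa bb cc dd p t * chiF p t T) := by
      intro T _
      rw [e1 T]
      have hih := ih (fun k => if k ∈ T then B k else A k)
        (fun k => by
          by_cases h : k ∈ T
          · rw [if_pos h]; exact hlowB k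
          · rw [if_neg h]; exact hlowA k)
        (fun k F hF => by
          by_cases h : k ∈ T
          · rw [if_pos h] at hF; exact hsubB k F hF
          · rw [if_neg h] at hF; exact hsubA k F hF)
      refine hih.trans (le_of_eq ?_)
      congr 1
      exact prod_congr rfl (fun p _ => e2 T p)
    calc ∏ k, (𝓕 k).card
        = ∑ T ∈ (univ : Finset (Fin ℓ)).powerset,
            (∏ k ∈ T, (B k).card) * ∏ k ∈ univ \ T, (A k).card := key1
      _ ≤ ∑ T ∈ (univ : Finset (Fin ℓ)).powerset,
            2 ^ s.card * ∏ p ∈ P, (∑ t : Fin 4, coefF aa bb cc dd p t * chiF p t T) :=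
          sum_le_sum key2
      _ = 2 ^ s.card * ∑ T ∈ (univ : Finset (Fin ℓ)).powerset,
            ∏ p ∈ P, (∑ t : Fin 4, coefF aa bb cc dd p t * chiF p t T) := by rw [mul_sum]
      _ ≤ 2 ^ s.card * (2 * ∏ p ∈ P, (aa p + bb p + cc p + 2 * dd p)) :=
          Nat.mul_le_mul_left _ (poly_key P (fun v w h => mem_pairs v w h) aa bb cc dd)
      _ = 2 ^ (insert a s).card * ∏ p ∈ P, ((𝓕 p.1) ∩ (𝓕 p.2)).card := by
          have hper : ∀ p ∈ P, aa p + bb p + cc p + 2 * dd p = ((𝓕 p.1) ∩ (𝓕 p.2)).card := by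
            intro p _
            have g1 := f1 p
            have g2 := f2 p
            have g5 := f5 p
            have hsplit : ((𝓕 p.1) ∩ (𝓕 p.2)).card
                = (B p.1 ∩ B p.2).card + (A p.1 ∩ A p.2).card := by
              rw [← card_memberSubfamily_add_card_nonMemberSubfamily a (𝓕 p.1 ∩ 𝓕 p.2),
                memberSubfamily_inter, nonMemberSubfamily_inter]
            simp only [haa, hbb, hcc, hdd] at g1 g2 g5 hsplit ⊢
            omega
          rw [prod_congr rfl hper, card_insert_of_notMem ha, pow_succ]
          ring
/-- Counting families of small sets. -/
lemma card_small_family {n : ℕ} (hn : 1 ≤ n) (𝒢 : Finset (Finset (Fin n))) (t : ℕ)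
    (h : ∀ F ∈ 𝒢, F.card ≤ t) : 𝒢.card ≤ (t + 1) * n ^ t := by
  have hsub : 𝒢 ⊆ (Finset.range (t + 1)).biUnion
      (fun i => Finset.powersetCard i (univ : Finset (Fin n))) := by
    intro F hF
    rw [mem_biUnion]
    exact ⟨F.card, mem_range.mpr (Nat.lt_succ_of_le (h F hF)),
      mem_powersetCard.mpr ⟨subset_univ F, rfl⟩⟩
  calc 𝒢.card ≤ _ := card_le_card hsub
    _ ≤ ∑ i ∈ Finset.range (t + 1), (Finset.powersetCard i (univ : Finset (Fin n))).card :=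
        card_biUnion_le
    _ ≤ ∑ _i ∈ Finset.range (t + 1), n ^ t := by
        apply sum_le_sum
        intro i hi
        rw [card_powersetCard, card_univ, Fintype.card_fin]
        calc n.choose i ≤ n ^ i := Nat.choose_le_pow n i
          _ ≤ n ^ t := Nat.pow_le_pow_right hn (Nat.lt_succ_iff.mp (mem_range.mp hi))
    _ = (t + 1) * n ^ t := by rw [sum_const, card_range, smul_eq_mul]

/-- Weak upper bound: for fixed `ℓ ≥ 2` and a fixed symmetric vector `m` with
`σ = ∑_S m_S`, there is a constant `C > 0` such that for every `n ≥ 1`,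
`s*(n, ℓ, m) ≤ C · n^σ · 2^n`. -/
theorem statement12 (ℓ : ℕ) (hℓ : 2 ≤ ℓ) (m : Fin ℓ → Fin ℓ → ℕ)
    (hsym : ∀ i j : Fin ℓ, m i j = m j i) :
    ∃ C : ℝ, 0 < C ∧ ∀ n : ℕ, 1 ≤ n →
      (sStar n ℓ m : ℝ) ≤
        C * (n : ℝ) ^ (∑ p ∈ pairsOf (Finset.univ : Finset (Fin ℓ)), m p.1 p.2) * 2 ^ n := by
  classical
  set P := pairsOf (Finset.univ : Finset (Fin ℓ)) with hPdef
  set σ : ℕ := ∑ p ∈ P, m p.1 p.2 with hσ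
  set K : ℕ := ∏ p ∈ P, (m p.1 p.2 + 1) with hK
  refine ⟨(K : ℝ), by positivity, ?_⟩
  intro n hn
  have hNat : sStar n ℓ m ≤ K * n ^ σ * 2 ^ n := by
    rw [sStar]
    apply Finset.sup_le
    intro 𝓕 _
    by_cases hov : MOverlap n ℓ m 𝓕
    · rw [if_pos hov]
      -- replace families by lower sets
      choose 𝓖 hcard hlow hdom using fun k => exists_lowerSet (𝓕 k)
      have hov𝓖 : MOverlap n ℓ m 𝓖 := by
        intro k₁ k₂ hne F₁ h₁ F₂ h₂
        obtain ⟨F₁', h₁', hs₁⟩ := hdom k₁ F₁ h₁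
        obtain ⟨F₂', h₂', hs₂⟩ := hdom k₂ F₂ h₂
        calc (F₁ ∩ F₂).card ≤ (F₁' ∩ F₂').card := card_le_card (inter_subset_inter hs₁ hs₂)
          _ ≤ m k₁ k₂ := hov k₁ k₂ hne F₁' h₁' F₂' h₂'
      have hmain := main_ineq (univ : Finset (Fin n)) 𝓖 hlow (fun k F _ => subset_univ F)
      have huniv : (univ : Finset (Fin n)).card = n := by
        rw [card_univ, Fintype.card_fin]
      have hpair : ∀ p ∈ P, ((𝓖 p.1) ∩ (𝓖 p.2)).card ≤ (m p.1 p.2 + 1) * n ^ (m p.1 p.2) := by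
        intro p hp
        have hne : p.1 ≠ p.2 := by
          rw [hPdef, pairsOf, mem_filter, mem_offDiag] at hp
          exact hp.1.2.2
        apply card_small_family hn
        intro F hF
        rw [mem_inter] at hF
        have := hov𝓖 p.1 p.2 hne F hF.1 F hF.2
        rwa [inter_self] at this
      calc ∏ k, (𝓕 k).card = ∏ k, (𝓖 k).card := prod_congr rfl (fun k _ => (hcard k).symm)
        _ ≤ 2 ^ (univ : Finset (Fin n)).card * ∏ p ∈ P, ((𝓖 p.1) ∩ (𝓖 p.2)).card := hmain
        _ ≤ 2 ^ n * ∏ p ∈ P, ((m p.1 p.2 + 1) * n ^ (m p.1 p.2)) := by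
            rw [huniv]
            exact Nat.mul_le_mul_left _ (Finset.prod_le_prod' hpair)
        _ = K * n ^ σ * 2 ^ n := by
            rw [prod_mul_distrib, Finset.prod_pow_eq_pow_sum, ← hσ, ← hK]
            ring
    · rw [if_neg hov]
      exact Nat.zero_le _
  calc (sStar n ℓ m : ℝ) ≤ ((K * n ^ σ * 2 ^ n : ℕ) : ℝ) := Nat.cast_le.mpr hNat
    _ = (K : ℝ) * (n : ℝ) ^ σ * 2 ^ n := by push_cast; ring

end AuxiliaryLemmas
end

section
/- Let n, ℓ be positive integers with ℓ ≥ 2 and let 𝓕_1, …, 𝓕_ℓ ⊆ 2^{[n]} be arbitrary families of subsets of [n]. Then ∏_{k=1}^{ℓ} |𝓕_k| ≤ ( ∏_{k=1}^{ℓ−1} | ( ⋁_{k'=1}^{k} 𝓕_{k'} ) ∧ 𝓕_{k+1} | ) · | ⋁_{k=1}^{ℓ} 𝓕_k |. -/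
open Finset
open scoped FinsetFamily

/-- The binary meet `𝓐 ∧ 𝓑 = {A ∩ B : A ∈ 𝓐, B ∈ 𝓑}` of two families of subsets of `[n]`. -/
def famMeet2 {n : ℕ} (𝓐 𝓑 : Finset (Finset (Fin n))) : Finset (Finset (Fin n)) :=
  (𝓐 ×ˢ 𝓑).image (fun p => p.1 ∩ p.2)

lemma famMeet2_eq_infs {n : ℕ} (𝓐 𝓑 : Finset (Finset (Fin n))) :
    famMeet2 𝓐 𝓑 = 𝓐 ⊼ 𝓑 := by
  ext X
  simp only [famMeet2, Finset.mem_image, Finset.mem_product, Finset.mem_infs, Prod.exists]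
  constructor
  · rintro ⟨a, b, ⟨ha, hb⟩, rfl⟩; exact ⟨a, ha, b, hb, rfl⟩
  · rintro ⟨a, ha, b, hb, rfl⟩; exact ⟨a, b, ⟨ha, hb⟩, rfl⟩

lemma mem_famJoin {n : ℕ} {ι : Type*} [DecidableEq ι] {T : Finset ι}
    {𝓐 : ι → Finset (Finset (Fin n))} {X : Finset (Fin n)} :
    X ∈ famJoin T 𝓐 ↔ ∃ f : ι → Finset (Fin n), (∀ t ∈ T, f t ∈ 𝓐 t) ∧ X = T.sup f := by
  classical
  simp [famJoin]

lemma famJoin_insert {n : ℕ} {ι : Type*} [DecidableEq ι] {t : ι} {T : Finset ι}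
    (ht : t ∉ T) (𝓐 : ι → Finset (Finset (Fin n))) :
    famJoin (insert t T) 𝓐 = 𝓐 t ⊻ famJoin T 𝓐 := by
  ext X
  simp only [mem_famJoin, Finset.mem_sups]
  constructor
  · rintro ⟨f, hf, rfl⟩
    exact ⟨f t, hf t (mem_insert_self _ _), T.sup f,
      ⟨f, fun s hs => hf s (mem_insert_of_mem hs), rfl⟩,
      (Finset.sup_insert ..).symm⟩
  · rintro ⟨a, ha, y, ⟨g, hg, rfl⟩, rfl⟩
    refine ⟨fun s => if s = t then a else g s, ?_, ?_⟩
    · intro s hs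
      rcases mem_insert.1 hs with rfl | hs'
      · simpa using ha
      · have hst : s ≠ t := fun h => ht (h ▸ hs')
        simpa [hst] using hg s hs'
    · rw [Finset.sup_insert]
      simp only [if_pos rfl]
      congr 1
      refine (Finset.sup_congr rfl (fun s hs => ?_)).symm
      have hst : s ≠ t := fun h => ht (h ▸ hs)
      simp [hst]

lemma famJoin_singleton {n : ℕ} {ι : Type*} [DecidableEq ι] (t : ι)
    (𝓐 : ι → Finset (Finset (Fin n))) : famJoin {t} 𝓐 = 𝓐 t := by
  ext X
  simp only [mem_famJoin]
  constructor
  · rintro ⟨f, hf, rfl⟩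
    simpa using hf t (mem_singleton_self t)
  · intro hX
    exact ⟨fun _ => X, by simpa using hX, by simp⟩

/-- Iterated Daykin inequality: for arbitrary families `𝓕 1, …, 𝓕 ℓ` of subsets of `[n]`
(`ℓ ≥ 2`),
`∏_{k=1}^ℓ |𝓕 k| ≤ (∏_{k=1}^{ℓ−1} |(⋁_{k'=1}^k 𝓕 k') ∧ 𝓕 (k+1)|) · |⋁_{k=1}^ℓ 𝓕 k|`. -/
theorem statement13 (n ℓ : ℕ) (hn : 1 ≤ n) (hℓ : 2 ≤ ℓ)
    (𝓕 : Fin ℓ → Finset (Finset (Fin n))) :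
    ∏ k : Fin ℓ, (𝓕 k).card ≤
      (∏ k : Fin (ℓ - 1),
        (famMeet2
          (famJoin (Finset.univ.filter (fun k' : Fin ℓ => k'.val ≤ k.val)) 𝓕)
          (𝓕 ⟨k.val + 1, by have := k.isLt; omega⟩)).card) *
      (famJoin (Finset.univ : Finset (Fin ℓ)) 𝓕).card := by
  classical
  set J : ℕ → Finset (Finset (Fin n)) :=
    fun m => famJoin (Finset.univ.filter (fun k' : Fin ℓ => k'.val ≤ m)) 𝓕 with hJ
  set g : ℕ → ℕ := fun k => if h : k < ℓ then (𝓕 ⟨k, h⟩).card else 1 with hg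
  set D : ℕ → ℕ :=
    fun m => if h : m + 1 < ℓ then (famMeet2 (J m) (𝓕 ⟨m + 1, h⟩)).card else 1 with hD
  have hJm : ∀ m, J m = famJoin (Finset.univ.filter (fun k' : Fin ℓ => k'.val ≤ m)) 𝓕 :=
    fun m => rfl
  have hgk : ∀ k (h : k < ℓ), g k = (𝓕 ⟨k, h⟩).card := fun k h => dif_pos h
  have hDk : ∀ m (h : m + 1 < ℓ), D m = (famMeet2 (J m) (𝓕 ⟨m + 1, h⟩)).card :=
    fun m h => dif_pos h
  -- key induction
  have key : ∀ m, m < ℓ →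
      ∏ k ∈ Finset.range (m + 1), g k ≤ (∏ j ∈ Finset.range m, D j) * (J m).card := by
    intro m
    induction m with
    | zero =>
      intro h0
      have hS : (Finset.univ.filter (fun k' : Fin ℓ => k'.val ≤ 0))
          = {(⟨0, by omega⟩ : Fin ℓ)} := by
        ext k'
        simp only [mem_filter, mem_univ, true_and, mem_singleton, Nat.le_zero]
        constructor
        · intro h; exact Fin.ext h
        · rintro rfl; rfl
      rw [Finset.prod_range_one, Finset.prod_range_zero, one_mul, hJm 0, hS,
        famJoin_singleton, hgk 0 h0]
    | succ m ih =>
      intro hm1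
      have hm : m < ℓ := by omega
      -- the new index
      set t : Fin ℓ := ⟨m + 1, hm1⟩ with htdef
      have hS : (Finset.univ.filter (fun k' : Fin ℓ => k'.val ≤ m + 1))
          = insert t (Finset.univ.filter (fun k' : Fin ℓ => k'.val ≤ m)) := by
        ext k'
        simp only [mem_filter, mem_univ, true_and, mem_insert]
        constructor
        · intro h
          rcases Nat.lt_or_ge k'.val (m + 1) with h' | h'
          · exact Or.inr (by omega)
          · exact Or.inl (Fin.ext (by simp only [htdef]; omega))
        · rintro (rfl | h)
          · simp [htdef]
          · omega
      have htnot : t ∉ Finset.univ.filter (fun k' : Fin ℓ => k'.val ≤ m) := by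
        simp [htdef]
      have hJsucc : J (m + 1) = 𝓕 t ⊻ J m := by
        rw [hJm (m + 1), hS, famJoin_insert htnot, hJm m]
      -- Daykin step
      have daykin : (J m).card * (𝓕 t).card ≤ D m * (J (m + 1)).card := by
        have := Finset.le_card_infs_mul_card_sups (J m) (𝓕 t)
        rw [hJsucc, Finset.sups_comm]
        calc (J m).card * (𝓕 t).card ≤ ((J m) ⊼ (𝓕 t)).card * ((J m) ⊻ (𝓕 t)).card := this
        _ = D m * ((J m) ⊻ (𝓕 t)).card := by
            rw [hDk m hm1, famMeet2_eq_infs]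
      calc ∏ k ∈ Finset.range (m + 2), g k = (∏ k ∈ Finset.range (m + 1), g k) * g (m + 1) :=
            Finset.prod_range_succ ..
        _ ≤ ((∏ j ∈ Finset.range m, D j) * (J m).card) * g (m + 1) :=
            Nat.mul_le_mul_right _ (ih hm)
        _ = (∏ j ∈ Finset.range m, D j) * ((J m).card * (𝓕 t).card) := by
            rw [hgk (m + 1) hm1]; ring
        _ ≤ (∏ j ∈ Finset.range m, D j) * (D m * (J (m + 1)).card) :=
            Nat.mul_le_mul_left _ daykin
        _ = (∏ j ∈ Finset.range (m + 1), D j) * (J (m + 1)).card := by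
            rw [Finset.prod_range_succ]; ring
  have hfin := key (ℓ - 1) (by omega)
  -- rewrite products
  have h1 : ∏ k : Fin ℓ, (𝓕 k).card = ∏ k ∈ Finset.range (ℓ - 1 + 1), g k := by
    have : ℓ - 1 + 1 = ℓ := by omega
    rw [this, ← Fin.prod_univ_eq_prod_range]
    refine Finset.prod_congr rfl (fun k _ => ?_)
    rw [hgk k k.isLt]
  have h2 : (∏ k : Fin (ℓ - 1),
        (famMeet2
          (famJoin (Finset.univ.filter (fun k' : Fin ℓ => k'.val ≤ k.val)) 𝓕)
          (𝓕 ⟨k.val + 1, by have := k.isLt; omega⟩)).card)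
      = ∏ j ∈ Finset.range (ℓ - 1), D j := by
    rw [← Fin.prod_univ_eq_prod_range]
    refine Finset.prod_congr rfl (fun k _ => ?_)
    have hk : (k : ℕ) + 1 < ℓ := by have := k.isLt; omega
    rw [hDk k hk]
  have h3 : J (ℓ - 1) = famJoin (Finset.univ : Finset (Fin ℓ)) 𝓕 := by
    have hU : (Finset.univ.filter (fun k' : Fin ℓ => k'.val ≤ ℓ - 1)) = Finset.univ :=
      Finset.filter_true_of_mem (fun k' _ => by have := k'.isLt; omega)
    rw [hJm (ℓ - 1), hU]
  rw [h1, h2, ← h3]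
  exact hfin
end
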